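/- arXiv:2107.04073 — 4 statements merged into one kernel-verified Lean document; each statement's English description precedes it below -/
import Mathlib

section
/- Let 0 < α ≤ β < 1/2 with 3β − α < 1, and let a⁰ = 0 and b⁰ = 0. There exist T > 0 and functions {f_j(t)}_{j≥0} satisfying ∑_{j≥0} λ_j^{-2α} ∫₀ᵀ f_j²(t) dt < ∞ such that the dyadic model of the generalized MHD system with initial data (a⁰, b⁰) and forcing f has at least two distinct Leray-Hopf solutions on [0,T]. -/
open Real MeasureTheory Set

noncomputable section

/-- `lamPow l j s = λ_j^s` where `λ_j = l^j`. -/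
def lamPow (l : ℝ) (j : ℕ) (s : ℝ) : ℝ := (l ^ j : ℝ) ^ s

/-- Value of a shell-indexed quantity at the previous index,
with the convention that the `(-1)`-st entry vanishes. -/
def dprev (x : ℕ → ℝ → ℝ) : ℕ → ℝ → ℝ
  | 0 => fun _ => 0
  | j + 1 => x j

/-- `(a, b)` is a weak solution on `[0,T]` of the dyadic model of the
generalized MHD system (unit viscosity and resistivity) with forcing `f`:
`a_j' + λ_j^{2α} a_j + λ_j a_j a_{j+1} + λ_j b_j b_{j+1} − λ_{j-1} a_{j-1}² − λ_{j-1} b_{j-1}² = f_j`,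
`b_j' + λ_j^{2β} b_j − λ_j a_j b_{j+1} + λ_j b_j a_{j+1} = 0`,
with `a_j, b_j ∈ C¹([0,T])` and `a(t), b(t) ∈ l²` for each `t`. -/
def IsWeakSolutionGMHD (l α β T : ℝ) (f a b : ℕ → ℝ → ℝ) : Prop :=
  (∀ j, ContDiffOn ℝ 1 (a j) (Icc 0 T)) ∧
  (∀ j, ContDiffOn ℝ 1 (b j) (Icc 0 T)) ∧
  (∀ t ∈ Icc 0 T, Summable fun j => (a j t) ^ 2) ∧
  (∀ t ∈ Icc 0 T, Summable fun j => (b j t) ^ 2) ∧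
  (∀ j, ∀ t ∈ Icc 0 T,
    derivWithin (a j) (Icc 0 T) t + lamPow l j (2 * α) * a j t
      + lamPow l j 1 * a j t * a (j + 1) t
      + lamPow l j 1 * b j t * b (j + 1) t
      - dprev (fun i t => lamPow l i 1 * (a i t) ^ 2) j t
      - dprev (fun i t => lamPow l i 1 * (b i t) ^ 2) j t = f j t) ∧
  (∀ j, ∀ t ∈ Icc 0 T,
    derivWithin (b j) (Icc 0 T) t + lamPow l j (2 * β) * b j t
      - lamPow l j 1 * a j t * b (j + 1) t
      + lamPow l j 1 * b j t * a (j + 1) t = 0)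

/-- `(a, b)` is a Leray-Hopf solution on `[0,T]` of the dyadic model of the
generalized MHD system: a weak solution with
`a ∈ L^∞(0,T; l²) ∩ L²(0,T; H^α)`, `b ∈ L^∞(0,T; l²) ∩ L²(0,T; H^β)`,
satisfying the energy inequality. -/
def IsLerayHopfGMHD (l α β T : ℝ) (f a b : ℕ → ℝ → ℝ) : Prop :=
  IsWeakSolutionGMHD l α β T f a b ∧
  (∃ M : ℝ, ∀ t ∈ Icc 0 T, (∑' j, (a j t) ^ 2) + (∑' j, (b j t) ^ 2) ≤ M) ∧
  Summable (fun j => ∫ t in (0:ℝ)..T, lamPow l j (2 * α) * (a j t) ^ 2) ∧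
  Summable (fun j => ∫ t in (0:ℝ)..T, lamPow l j (2 * β) * (b j t) ^ 2) ∧
  (∀ t ∈ Icc 0 T,
    (∑' j, ((a j t) ^ 2 + (b j t) ^ 2))
      + 2 * ∑' j, ∫ τ in (0:ℝ)..t,
          (lamPow l j (2 * α) * (a j τ) ^ 2 + lamPow l j (2 * β) * (b j τ) ^ 2)
    ≤ (∑' j, ((a j 0) ^ 2 + (b j 0) ^ 2))
      + 2 * ∑' j, ∫ τ in (0:ℝ)..t, f j τ * a j τ)

namespace NUG

/-- clamp to [0,1] -/
def cl (x : ℝ) : ℝ := max 0 (min 1 x)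

lemma cl_nonneg (x : ℝ) : 0 ≤ cl x := le_max_left _ _
lemma cl_le_one (x : ℝ) : cl x ≤ 1 := max_le zero_le_one (min_le_left _ _)
lemma cl_of_nonpos {x : ℝ} (h : x ≤ 0) : cl x = 0 := by
  unfold cl
  rw [min_eq_right (h.trans zero_le_one), max_eq_left h]
lemma cl_of_one_le {x : ℝ} (h : 1 ≤ x) : cl x = 1 := by
  unfold cl
  rw [min_eq_left h, max_eq_right zero_le_one]
lemma cl_of_mem {x : ℝ} (h0 : 0 ≤ x) (h1 : x ≤ 1) : cl x = x := by
  unfold cl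
  rw [min_eq_right h1, max_eq_right h0]
lemma continuous_cl : Continuous cl :=
  continuous_const.max (continuous_const.min continuous_id)

def pb (x : ℝ) : ℝ := (cl x)^2 * (1 - cl x)^2
def pd (x : ℝ) : ℝ := 2 * cl x * (1 - cl x) * (1 - 2 * cl x)
def Sf (x : ℝ) : ℝ := (cl x)^3/3 - (cl x)^4/2 + (cl x)^5/5

lemma continuous_pb : Continuous pb :=
  (continuous_cl.pow 2).mul ((continuous_const.sub continuous_cl).pow 2)
lemma continuous_pd : Continuous pd :=
  (((continuous_const.mul continuous_cl)).mul
    (continuous_const.sub continuous_cl)).mul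
    (continuous_const.sub (continuous_const.mul continuous_cl))
lemma continuous_Sf : Continuous Sf :=
  (((continuous_cl.pow 3).div_const 3).sub ((continuous_cl.pow 4).div_const 2)).add
    ((continuous_cl.pow 5).div_const 5)

lemma pb_nonneg (x : ℝ) : 0 ≤ pb x := by unfold pb; positivity
lemma pb_le_one (x : ℝ) : pb x ≤ 1 := by
  have h0 := cl_nonneg x; have h1 := cl_le_one x
  have hp1 : cl x * (1 - cl x) ≤ 1/4 := by nlinarith [sq_nonneg (1 - 2*cl x)]
  have hp0 : 0 ≤ cl x * (1 - cl x) := mul_nonneg h0 (by linarith)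
  calc pb x = (cl x * (1 - cl x))^2 := by unfold pb; ring
    _ ≤ 1 := by nlinarith
lemma pd_abs_le (x : ℝ) : |pd x| ≤ 2 := by
  have h0 := cl_nonneg x; have h1 := cl_le_one x
  have hp1 : cl x * (1 - cl x) ≤ 1/4 := by nlinarith [sq_nonneg (1 - 2*cl x)]
  have hp0 : 0 ≤ cl x * (1 - cl x) := mul_nonneg h0 (by linarith)
  rw [abs_le]; unfold pd
  constructor <;> nlinarith
lemma Sf_nonneg (x : ℝ) : 0 ≤ Sf x := by
  have h0 := cl_nonneg x
  unfold Sf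
  nlinarith [mul_nonneg (pow_nonneg h0 3) (sq_nonneg (12*(cl x) - 15)),
    pow_nonneg h0 3]
lemma Sf_le (x : ℝ) : Sf x ≤ 1/30 := by
  have h1 := cl_le_one x
  have h1' : (0:ℝ) ≤ 1 - cl x := by linarith
  unfold Sf
  nlinarith [mul_nonneg (pow_nonneg h1' 3) (sq_nonneg (12*(1 - cl x) - 15)),
    pow_nonneg h1' 3]

lemma pb_of_nonpos {x : ℝ} (h : x ≤ 0) : pb x = 0 := by unfold pb; rw [cl_of_nonpos h]; ring
lemma pb_of_one_le {x : ℝ} (h : 1 ≤ x) : pb x = 0 := by unfold pb; rw [cl_of_one_le h]; ring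
lemma pd_of_nonpos {x : ℝ} (h : x ≤ 0) : pd x = 0 := by unfold pd; rw [cl_of_nonpos h]; ring
lemma pd_of_one_le {x : ℝ} (h : 1 ≤ x) : pd x = 0 := by unfold pd; rw [cl_of_one_le h]; ring
lemma Sf_of_nonpos {x : ℝ} (h : x ≤ 0) : Sf x = 0 := by unfold Sf; rw [cl_of_nonpos h]; ring
lemma Sf_of_one_le {x : ℝ} (h : 1 ≤ x) : Sf x = 1/30 := by unfold Sf; rw [cl_of_one_le h]; ring

/-- if |f y - f x| ≤ K (y-x)^2 for all y, then f has derivative 0 at x. -/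
lemma hasDerivAt_zero_of_sq_bound {f : ℝ → ℝ} {x K : ℝ}
    (h : ∀ y, |f y - f x| ≤ K * (y - x)^2) : HasDerivAt f 0 x := by
  have hK : 0 ≤ K := by
    have := h (x+1); simp at this
    nlinarith [abs_nonneg (f (x+1) - f x)]
  have hK1 : (0:ℝ) < K + 1 := by linarith
  rw [hasDerivAt_iff_isLittleO]
  rw [Asymptotics.isLittleO_iff]
  intro c hc
  rw [Metric.eventually_nhds_iff]
  refine ⟨c / (K + 1), by positivity, ?_⟩
  intro y hy
  rw [Real.dist_eq] at hy
  simp only [smul_eq_mul, mul_zero, sub_zero]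
  have hd0 : (0:ℝ) ≤ |y - x| := abs_nonneg _
  have hKd : K * |y - x| ≤ c := by
    have h1 : K * |y - x| ≤ K * (c/(K+1)) := mul_le_mul_of_nonneg_left hy.le hK
    have h2 : K * (c / (K + 1)) ≤ c := by
      rw [mul_comm, div_mul_eq_mul_div, div_le_iff₀ hK1]; nlinarith
    linarith
  calc ‖f y - f x‖ = |f y - f x| := rfl
    _ ≤ K * (y-x)^2 := h y
    _ = (K * |y - x|) * |y - x| := by rw [← sq_abs]; ring
    _ ≤ c * |y - x| := mul_le_mul_of_nonneg_right hKd hd0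
    _ = c * ‖y - x‖ := rfl

-- new content
lemma cl_abs_le (y : ℝ) : cl y ≤ |y| := by
  rcases le_or_gt y 0 with h | h
  · rw [cl_of_nonpos h]; positivity
  · calc cl y = max 0 (min 1 y) := rfl
      _ ≤ max 0 y := max_le_max le_rfl (min_le_right _ _)
      _ = y := max_eq_right h.le
      _ ≤ |y| := le_abs_self y

lemma one_sub_cl_le (y : ℝ) : 1 - cl y ≤ |1 - y| := by
  rcases le_or_gt 1 y with h | h
  · rw [cl_of_one_le h]; simp
  · have : y ≤ cl y ∨ 0 ≤ cl y := by
      rcases le_or_gt 0 y with h0 | h0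
      · left; rw [cl_of_mem h0 h.le]
      · right; exact cl_nonneg y
    rcases le_or_gt 0 y with h0 | h0
    · rw [cl_of_mem h0 h.le, abs_of_nonneg (by linarith)]
    · rw [cl_of_nonpos h0.le, abs_of_nonneg (by linarith)]; linarith

lemma hasDerivAt_pb (x : ℝ) : HasDerivAt pb (pd x) x := by
  have hpoly : HasDerivAt (fun y:ℝ => y^2 - 2*y^3 + y^4) (2*x - 6*x^2 + 4*x^3) x := by
    have := ((hasDerivAt_pow 2 x).sub ((hasDerivAt_pow 3 x).const_mul 2)).add (hasDerivAt_pow 4 x)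
    refine this.congr_deriv ?_; push_cast; ring
  rcases lt_or_ge x 0 with hx | hx
  · have he : pb =ᶠ[nhds x] fun _ => 0 := by
      filter_upwards [Iio_mem_nhds hx] with y hy
      exact pb_of_nonpos hy.le
    rw [pd_of_nonpos hx.le]
    exact (hasDerivAt_const x (0:ℝ)).congr_of_eventuallyEq he
  rcases eq_or_lt_of_le hx with hx0 | hx0
  · -- x = 0
    rw [← hx0, pd_of_nonpos le_rfl]
    apply hasDerivAt_zero_of_sq_bound (K := 1)
    intro y
    rw [pb_of_nonpos le_rfl]
    have h1 : pb y ≤ (cl y)^2 := by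
      have h2 := cl_le_one y
      have h3 := cl_nonneg y
      have e : (1 - cl y)^2 ≤ 1 := by nlinarith
      calc pb y = (cl y)^2 * (1 - cl y)^2 := rfl
        _ ≤ (cl y)^2 * 1 := mul_le_mul_of_nonneg_left e (sq_nonneg _)
        _ = (cl y)^2 := mul_one _
    have h2 : (cl y)^2 ≤ y^2 := by
      have := cl_abs_le y
      have := cl_nonneg y
      nlinarith [sq_abs y]
    rw [sub_zero, abs_of_nonneg (by unfold pb; positivity)]
    simpa using h1.trans h2
  rcases lt_or_ge x 1 with hx1 | hx1
  · -- 0 < x < 1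
    have he : pb =ᶠ[nhds x] fun y => y^2 - 2*y^3 + y^4 := by
      filter_upwards [Ioo_mem_nhds hx0 hx1] with y hy
      unfold pb; rw [cl_of_mem hy.1.le hy.2.le]; ring
    have : pd x = 2*x - 6*x^2 + 4*x^3 := by
      unfold pd; rw [cl_of_mem hx0.le hx1.le]; ring
    rw [this]
    exact hpoly.congr_of_eventuallyEq he
  rcases eq_or_lt_of_le hx1 with hx1' | hx1'
  · -- x = 1
    rw [← hx1', pd_of_one_le le_rfl]
    apply hasDerivAt_zero_of_sq_bound (K := 1)
    intro y
    rw [pb_of_one_le le_rfl]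
    have h1 : pb y ≤ (1 - cl y)^2 := by
      have h2 := cl_le_one y
      have h3 := cl_nonneg y
      have e : (cl y)^2 ≤ 1 := by nlinarith
      calc pb y = (cl y)^2 * (1 - cl y)^2 := rfl
        _ ≤ 1 * (1 - cl y)^2 := mul_le_mul_of_nonneg_right e (sq_nonneg _)
        _ = (1 - cl y)^2 := one_mul _
    have h2 : (1 - cl y)^2 ≤ (y - 1)^2 := by
      have h4 := one_sub_cl_le y
      have h5 := cl_le_one y
      nlinarith [sq_abs (1 - y)]
    rw [sub_zero, abs_of_nonneg (by unfold pb; positivity)]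
    simpa using h1.trans h2
  · have he : pb =ᶠ[nhds x] fun _ => 0 := by
      filter_upwards [Ioi_mem_nhds hx1'] with y hy
      exact pb_of_one_le hy.le
    rw [pd_of_one_le hx1]
    exact (hasDerivAt_const x (0:ℝ)).congr_of_eventuallyEq he

lemma hasDerivAt_Sf (x : ℝ) : HasDerivAt Sf (pb x) x := by
  have hpoly : HasDerivAt (fun y:ℝ => y^3/3 - y^4/2 + y^5/5) (x^2 - 2*x^3 + x^4) x := by
    have := (((hasDerivAt_pow 3 x).div_const 3).sub ((hasDerivAt_pow 4 x).div_const 2)).add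
      ((hasDerivAt_pow 5 x).div_const 5)
    refine this.congr_deriv ?_; push_cast; ring
  rcases lt_or_ge x 0 with hx | hx
  · have he : Sf =ᶠ[nhds x] fun _ => 0 := by
      filter_upwards [Iio_mem_nhds hx] with y hy
      exact Sf_of_nonpos hy.le
    rw [pb_of_nonpos hx.le]
    exact (hasDerivAt_const x (0:ℝ)).congr_of_eventuallyEq he
  rcases eq_or_lt_of_le hx with hx0 | hx0
  · rw [← hx0, pb_of_nonpos le_rfl]
    apply hasDerivAt_zero_of_sq_bound (K := 1)
    intro y
    rw [Sf_of_nonpos le_rfl, sub_zero, abs_of_nonneg (Sf_nonneg y)]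
    have h2 := cl_le_one y
    have h3 := cl_nonneg y
    have h1 : Sf y ≤ (cl y)^2 := by
      unfold Sf; nlinarith [pow_nonneg h3 3, pow_nonneg h3 4, pow_nonneg h3 5, sq_nonneg (cl y)]
    have h4 : (cl y)^2 ≤ y^2 := by
      have := cl_abs_le y
      nlinarith [sq_abs y]
    simpa using h1.trans h4
  rcases lt_or_ge x 1 with hx1 | hx1
  · have he : Sf =ᶠ[nhds x] fun y => y^3/3 - y^4/2 + y^5/5 := by
      filter_upwards [Ioo_mem_nhds hx0 hx1] with y hy
      unfold Sf; rw [cl_of_mem hy.1.le hy.2.le]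
    have : pb x = x^2 - 2*x^3 + x^4 := by
      unfold pb; rw [cl_of_mem hx0.le hx1.le]; ring
    rw [this]
    exact hpoly.congr_of_eventuallyEq he
  rcases eq_or_lt_of_le hx1 with hx1' | hx1'
  · rw [← hx1', pb_of_one_le le_rfl]
    apply hasDerivAt_zero_of_sq_bound (K := 1)
    intro y
    rw [Sf_of_one_le le_rfl, abs_of_nonpos (by linarith [Sf_le y]), neg_sub]
    have h2 := cl_le_one y
    have h3 := cl_nonneg y
    have h1 : 1/30 - Sf y ≤ (1 - cl y)^2 := by
      unfold Sf
      nlinarith [pow_nonneg (by linarith : (0:ℝ) ≤ 1 - cl y) 3,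
        mul_nonneg (pow_nonneg (by linarith : (0:ℝ) ≤ 1 - cl y) 3) (sq_nonneg (cl y)),
        sq_nonneg (1 - cl y), mul_nonneg (sq_nonneg (1 - cl y)) h3]
    have h4 : (1 - cl y)^2 ≤ (y - 1)^2 := by
      have h5 := one_sub_cl_le y
      nlinarith [sq_abs (1 - y)]
    simpa using h1.trans h4
  · have he : Sf =ᶠ[nhds x] fun _ => 1/30 := by
      filter_upwards [Ioi_mem_nhds hx1'] with y hy
      exact Sf_of_one_le hy.le
    rw [pb_of_one_le hx1]
    exact (hasDerivAt_const x ((1:ℝ)/30)).congr_of_eventuallyEq he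

-- ====== The construction ======
variable (l α β : ℝ)

def w : ℝ := l ^ (2*β)
def vv : ℝ := l ^ (2*α)
def qq : ℝ := (w l β)⁻¹
def rr : ℝ := 1/(2*l)
def sj (j : ℕ) : ℝ := (qq l β)^(j+1)
def Δj (j : ℕ) : ℝ := (qq l β)^j * (1 - qq l β)
def zj (j : ℕ) (t : ℝ) : ℝ := (t - sj l β j) / Δj l β j
def Aj (j : ℕ) : ℝ := 30 / (rr l * l^j * Δj l β j)
def Bj (j : ℕ) : ℝ := (-1)^j * (rr l)^(j+2)
def aF (j : ℕ) (t : ℝ) : ℝ :=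
  -(Aj l β j) * Real.exp (((w l β)^(j+1) - (w l β)^j)*t) * pb (zj l β j t)
def bF (j : ℕ) (t : ℝ) : ℝ :=
  Bj l j * (30 * Sf (zj l β j t)) * Real.exp (-((w l β)^j) * t)
def daF (j : ℕ) (t : ℝ) : ℝ :=
  -(Aj l β j) * (((w l β)^(j+1) - (w l β)^j) * Real.exp (((w l β)^(j+1) - (w l β)^j)*t) * pb (zj l β j t)
    + Real.exp (((w l β)^(j+1) - (w l β)^j)*t) * (pd (zj l β j t) * (Δj l β j)⁻¹))
def dbF (j : ℕ) (t : ℝ) : ℝ :=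
  Bj l j * ((30 * (pb (zj l β j t) * (Δj l β j)⁻¹)) * Real.exp (-((w l β)^j) * t)
    + (30 * Sf (zj l β j t)) * (-((w l β)^j) * Real.exp (-((w l β)^j) * t)))
def fF (j : ℕ) (t : ℝ) : ℝ :=
  daF l β j t + (vv l α)^j * aF l β j t + l^j * aF l β j t * aF l β (j+1) t
    + l^j * bF l β j t * bF l β (j+1) t
    - dprev (fun i s => l^i * (aF l β i s)^2) j t
    - dprev (fun i s => l^i * (bF l β i s)^2) j t

-- ====== numeric basics ======
variable {l α β : ℝ}

section basics
variable (hl : 1 < l) (hβ0 : 0 < β)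
include hl


lemma hl0 : (0:ℝ) < l := lt_trans zero_lt_one hl
include hβ0
lemma hw1 : 1 < w l β := by
  rw [w]
  exact Real.one_lt_rpow_iff_of_pos (hl0 hl) |>.mpr (Or.inl ⟨hl, by linarith⟩)
lemma hw0 : 0 < w l β := lt_trans zero_lt_one (hw1 hl hβ0)
lemma hq0 : 0 < qq l β := by rw [qq]; exact inv_pos.mpr (hw0 hl hβ0)
lemma hq1 : qq l β < 1 := by
  rw [qq]; exact inv_lt_one_of_one_lt₀ (hw1 hl hβ0)
lemma hqw : qq l β * w l β = 1 := inv_mul_cancel₀ (ne_of_gt (hw0 hl hβ0))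
lemma qpow (j : ℕ) : (qq l β)^j = ((w l β)^j)⁻¹ := by rw [qq, inv_pow]
lemma hΔ0 (j : ℕ) : 0 < Δj l β j := by
  have h1 := hq0 hl hβ0; have h2 := hq1 hl hβ0
  rw [Δj]; exact mul_pos (pow_pos h1 j) (by linarith)
omit hβ0 in
lemma hr0 : 0 < rr l := by
  have := hl0 hl; rw [rr]; positivity
omit hβ0 in
lemma hvpos : 0 < vv l α := by rw [vv]; exact Real.rpow_pos_of_pos (hl0 hl) _
omit hβ0 in
lemma hr1 : rr l < 1 := by
  rw [rr, div_lt_one (by linarith : (0:ℝ) < 2*l)]; linarith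
lemma hA0 (j : ℕ) : 0 < Aj l β j := by
  have h1 := hr0 hl; have h2 := hΔ0 hl hβ0 j; have h3 := hl0 hl
  rw [Aj]
  exact div_pos (by norm_num) (mul_pos (mul_pos h1 (pow_pos h3 j)) h2)

end basics

-- ====== support lemmas ======
section supp
variable (hl : 1 < l) (hβ0 : 0 < β)
include hl hβ0


lemma zj_nonpos {j : ℕ} {t : ℝ} (h : t ≤ sj l β j) : zj l β j t ≤ 0 := by
  rw [zj]
  apply div_nonpos_of_nonpos_of_nonneg (by linarith) (hΔ0 hl hβ0 j).le

lemma zj_one_le {j : ℕ} {t : ℝ} (h : (qq l β)^j ≤ t) : 1 ≤ zj l β j t := by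
  rw [zj, le_div_iff₀ (hΔ0 hl hβ0 j)]
  have hs : sj l β j = (qq l β)^j * qq l β := pow_succ _ _
  rw [Δj, hs]; nlinarith
 
omit hl hβ0 in
lemma sj_eq (j : ℕ) : sj l β j = (qq l β)^(j+1) := rfl

/-- a_{j+1} kills b_j :  pb(z_{j+1}) * Sf(z_j) = 0 -/
lemma Pab (j : ℕ) (t : ℝ) : pb (zj l β (j+1) t) * Sf (zj l β j t) = 0 := by
  rcases le_total t (sj l β j) with h | h
  · rw [Sf_of_nonpos (zj_nonpos hl hβ0 h), mul_zero]
  · rw [pb_of_one_le (zj_one_le hl hβ0 (le_of_eq_of_le (sj_eq j).symm h)), zero_mul]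

/-- a_j and a_{j+1} have disjoint supports -/
lemma Paa (j : ℕ) (t : ℝ) : pb (zj l β j t) * pb (zj l β (j+1) t) = 0 := by
  rcases le_total t (sj l β j) with h | h
  · rw [pb_of_nonpos (zj_nonpos hl hβ0 h), zero_mul]
  · rw [pb_of_one_le (zj_one_le hl hβ0 (le_of_eq_of_le (sj_eq j).symm h)), mul_zero]

/-- on the support of a_j, b_{j+1} has reached its plateau -/
lemma PSb (j : ℕ) (t : ℝ) :
    pb (zj l β j t) * (30 * Sf (zj l β (j+1) t)) = pb (zj l β j t) := by
  rcases le_total t (sj l β j) with h | h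
  · rw [pb_of_nonpos (zj_nonpos hl hβ0 h), zero_mul]
  · rw [Sf_of_one_le (zj_one_le hl hβ0 (le_of_eq_of_le (sj_eq j).symm h))]
    norm_num

end supp

-- ====== derivatives and continuity ======
section deriv
variable (hl : 1 < l) (hβ0 : 0 < β)
include hl hβ0

lemma hasDerivAt_zj (j : ℕ) (t : ℝ) :
    HasDerivAt (zj l β j) (Δj l β j)⁻¹ t := by
  have h := ((hasDerivAt_id t).sub_const (sj l β j)).div_const (Δj l β j)
  exact h.congr_deriv (one_div _)

lemma hasDerivAt_pbz (j : ℕ) (t : ℝ) :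
    HasDerivAt (fun s => pb (zj l β j s)) (pd (zj l β j t) * (Δj l β j)⁻¹) t :=
  (hasDerivAt_pb (zj l β j t)).comp t (hasDerivAt_zj hl hβ0 j t)

lemma hasDerivAt_Sfz (j : ℕ) (t : ℝ) :
    HasDerivAt (fun s => Sf (zj l β j s)) (pb (zj l β j t) * (Δj l β j)⁻¹) t :=
  (hasDerivAt_Sf (zj l β j t)).comp t (hasDerivAt_zj hl hβ0 j t)

lemma hasDerivAt_expc (c : ℝ) (t : ℝ) :
    HasDerivAt (fun s : ℝ => Real.exp (c*s)) (c * Real.exp (c*t)) t := by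
  have h := ((hasDerivAt_id t).const_mul c).exp
  simpa [mul_comm] using h

lemma hasDerivAt_aF (j : ℕ) (t : ℝ) : HasDerivAt (aF l β j) (daF l β j t) t := by
  have h := ((hasDerivAt_expc hl hβ0 ((w l β)^(j+1) - (w l β)^j) t).mul
    (hasDerivAt_pbz hl hβ0 j t)).const_mul (-(Aj l β j))
  have he : aF l β j = fun s => -(Aj l β j) *
      (Real.exp (((w l β)^(j+1) - (w l β)^j)*s) * pb (zj l β j s)) := by
    funext s; rw [aF]; ring
  rw [he, daF]
  exact h

lemma hasDerivAt_bF (j : ℕ) (t : ℝ) : HasDerivAt (bF l β j) (dbF l β j t) t := by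
  have h := (((hasDerivAt_Sfz hl hβ0 j t).const_mul (30:ℝ)).mul
    (hasDerivAt_expc hl hβ0 (-((w l β)^j)) t)).const_mul (Bj l j)
  have he : bF l β j = fun s => Bj l j *
      ((30 * Sf (zj l β j s)) * Real.exp (-((w l β)^j)*s)) := by
    funext s; rw [bF]; ring
  rw [he, dbF]
  exact h

lemma continuous_zjc (j : ℕ) : Continuous (zj l β j) :=
  (continuous_id.sub continuous_const).div_const _

lemma continuous_aF (j : ℕ) : Continuous (aF l β j) := by
  unfold aF
  exact (continuous_const.mul ((continuous_exp.comp
    (continuous_const.mul continuous_id)))).mul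
    (continuous_pb.comp (continuous_zjc hl hβ0 j))

lemma continuous_bF (j : ℕ) : Continuous (bF l β j) := by
  unfold bF
  exact (continuous_const.mul (continuous_const.mul
    (continuous_Sf.comp (continuous_zjc hl hβ0 j)))).mul
    (continuous_exp.comp (continuous_const.mul continuous_id))

lemma continuous_daF (j : ℕ) : Continuous (daF l β j) := by
  unfold daF
  apply continuous_const.mul
  apply Continuous.add
  · exact (continuous_const.mul (continuous_exp.comp
      (continuous_const.mul continuous_id))).mul
      (continuous_pb.comp (continuous_zjc hl hβ0 j))
  · exact (continuous_exp.comp (continuous_const.mul continuous_id)).mul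
      ((continuous_pd.comp (continuous_zjc hl hβ0 j)).mul continuous_const)

lemma continuous_dbF (j : ℕ) : Continuous (dbF l β j) := by
  unfold dbF
  apply continuous_const.mul
  apply Continuous.add
  · exact (continuous_const.mul ((continuous_pb.comp
      (continuous_zjc hl hβ0 j)).mul continuous_const)).mul
      (continuous_exp.comp (continuous_const.mul continuous_id))
  · exact (continuous_const.mul (continuous_Sf.comp (continuous_zjc hl hβ0 j))).mul
      (continuous_const.mul (continuous_exp.comp (continuous_const.mul continuous_id)))

lemma continuous_fF (j : ℕ) : Continuous (fF l α β j) := by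
  have hc : ∀ i : ℕ, Continuous (fun s => l^i * (aF l β i s)^2) := fun i =>
    continuous_const.mul ((continuous_aF hl hβ0 i).pow 2)
  have hc' : ∀ i : ℕ, Continuous (fun s => l^i * (bF l β i s)^2) := fun i =>
    continuous_const.mul ((continuous_bF hl hβ0 i).pow 2)
  have hd : Continuous (dprev (fun i s => l^i * (aF l β i s)^2) j) := by
    cases j with
    | zero => exact continuous_const
    | succ n => exact hc n
  have hd' : Continuous (dprev (fun i s => l^i * (bF l β i s)^2) j) := by
    cases j with
    | zero => exact continuous_const
    | succ n => exact hc' n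
  unfold fF
  exact (((((continuous_daF hl hβ0 j).add
    (continuous_const.mul (continuous_aF hl hβ0 j))).add
    ((continuous_const.mul (continuous_aF hl hβ0 j)).mul (continuous_aF hl hβ0 (j+1)))).add
    ((continuous_const.mul (continuous_bF hl hβ0 j)).mul (continuous_bF hl hβ0 (j+1)))).sub hd).sub hd'

-- ====== the b-equation ======
lemma hexp (j : ℕ) (t : ℝ) :
    Real.exp (((w l β)^(j+1) - (w l β)^j)*t) * Real.exp (-((w l β)^(j+1)) * t)
      = Real.exp (-((w l β)^j) * t) := by
  rw [← Real.exp_add]; congr 1; ring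

lemma hCoef (j : ℕ) : 30 * Bj l j * (Δj l β j)⁻¹ + l^j * Aj l β j * Bj l (j+1) = 0 := by
  have h1 := (hr0 hl).ne'
  have h2 := (hΔ0 hl hβ0 j).ne'
  have h3 := (pow_pos (hl0 hl) j).ne'
  rw [Bj, Bj, Aj]
  field_simp
  ring

lemma beq (j : ℕ) (t : ℝ) :
    dbF l β j t + (w l β)^j * bF l β j t
      - l^j * aF l β j t * bF l β (j+1) t + l^j * bF l β j t * aF l β (j+1) t = 0 := by
  have hE := hexp hl hβ0 j t
  have hC := hCoef hl hβ0 j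
  have hP1 := Pab hl hβ0 j t
  have hP2 := PSb hl hβ0 j t
  rw [dbF, bF, bF, aF, aF]
  set X := pb (zj l β j t)
  set Y := Sf (zj l β j t)
  set X' := pb (zj l β (j+1) t)
  set Y' := Sf (zj l β (j+1) t)
  set E1 := Real.exp (((w l β)^(j+1) - (w l β)^j)*t)
  set E2 := Real.exp (-((w l β)^(j+1)) * t)
  set E0 := Real.exp (-((w l β)^j) * t)
  set E1' := Real.exp (((w l β)^(j+2) - (w l β)^(j+1))*t)
  linear_combination (E0 * X) * hC
    + (30 * l^j * Aj l β j * Bj l (j+1) * Y' * X) * hE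
    + (l^j * Aj l β j * Bj l (j+1) * E0) * hP2
    - (30 * l^j * Bj l j * Aj l β (j+1) * E1' * E0) * hP1

end deriv
-- ====== vanishing products at the level of aF/bF ======
section vanish
variable (hl : 1 < l) (hβ0 : 0 < β)
include hl hβ0

lemma Vaa (j : ℕ) (t : ℝ) : aF l β j t * aF l β (j+1) t = 0 := by
  have h := Paa hl hβ0 j t
  rw [aF, aF]
  linear_combination (Aj l β j * Real.exp (((w l β)^(j+1) - (w l β)^j)*t) *
    Aj l β (j+1) * Real.exp (((w l β)^(j+2) - (w l β)^(j+1))*t)) * h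

lemma Vba (j : ℕ) (t : ℝ) : bF l β j t * aF l β (j+1) t = 0 := by
  have h := Pab hl hβ0 j t
  rw [aF, bF]
  linear_combination (-(30:ℝ) * Bj l j * Real.exp (-((w l β)^j) * t) *
    Aj l β (j+1) * Real.exp (((w l β)^(j+2) - (w l β)^(j+1))*t)) * h

lemma energy_deriv (j : ℕ) (t : ℝ) :
    HasDerivAt (fun s => (aF l β j s)^2 + (bF l β j s)^2)
      (2*(fF l α β j t)*(aF l β j t)
        - 2*((vv l α)^j*(aF l β j t)^2 + (w l β)^j*(bF l β j t)^2)) t := by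
  have h := ((hasDerivAt_aF hl hβ0 j t).pow 2).add ((hasDerivAt_bF hl hβ0 j t).pow 2)
  refine h.congr_deriv ?_
  symm
  have hb := beq hl hβ0 j t
  push_cast
  cases j with
  | zero =>
    simp only [fF, dprev]
    linear_combination (-2*bF l β 0 t) * hb
      + (2*l^0*aF l β 0 t) * (Vaa hl hβ0 0 t)
      + (2*l^0*bF l β 0 t) * (Vba hl hβ0 0 t)
  | succ n =>
    simp only [fF, dprev]
    linear_combination (-2*bF l β (n+1) t) * hb
      + (2*l^(n+1)*aF l β (n+1) t) * (Vaa hl hβ0 (n+1) t)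
      + (2*l^(n+1)*bF l β (n+1) t) * (Vba hl hβ0 (n+1) t)
      + (-2*l^n*aF l β n t) * (Vaa hl hβ0 n t)
      + (-2*l^n*bF l β n t) * (Vba hl hβ0 n t)

-- initial values
lemma aF_zero (j : ℕ) : aF l β j 0 = 0 := by
  have h : (0:ℝ) ≤ sj l β j := (pow_pos (hq0 hl hβ0) (j+1)).le
  rw [aF, pb_of_nonpos (zj_nonpos hl hβ0 h), mul_zero]

lemma bF_zero (j : ℕ) : bF l β j 0 = 0 := by
  have h : (0:ℝ) ≤ sj l β j := (pow_pos (hq0 hl hβ0) (j+1)).le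
  rw [bF, Sf_of_nonpos (zj_nonpos hl hβ0 h)]
  ring

-- support of aF and daF
lemma aF_zero_right {j : ℕ} {t : ℝ} (h : (qq l β)^j ≤ t) : aF l β j t = 0 := by
  rw [aF, pb_of_one_le (zj_one_le hl hβ0 h), mul_zero]

lemma aF_zero_left {j : ℕ} {t : ℝ} (h : t ≤ sj l β j) : aF l β j t = 0 := by
  rw [aF, pb_of_nonpos (zj_nonpos hl hβ0 h), mul_zero]

lemma daF_zero_right {j : ℕ} {t : ℝ} (h : (qq l β)^j ≤ t) : daF l β j t = 0 := by
  rw [daF, pb_of_one_le (zj_one_le hl hβ0 h), pd_of_one_le (zj_one_le hl hβ0 h)]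
  ring

lemma daF_zero_left {j : ℕ} {t : ℝ} (h : t ≤ sj l β j) : daF l β j t = 0 := by
  rw [daF, pb_of_nonpos (zj_nonpos hl hβ0 h), pd_of_nonpos (zj_nonpos hl hβ0 h)]
  ring

-- per-shell energy balance
lemma shell_identity (j : ℕ) (t : ℝ) :
    (aF l β j t)^2 + (bF l β j t)^2
      + 2*∫ s in (0:ℝ)..t, ((vv l α)^j*(aF l β j s)^2 + (w l β)^j*(bF l β j s)^2)
      = 2*∫ s in (0:ℝ)..t, fF l α β j s * aF l β j s := by
  have hca := continuous_aF hl hβ0 (l := l) (β := β) j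
  have hcb := continuous_bF hl hβ0 (l := l) (β := β) j
  have hcf := continuous_fF hl hβ0 (l := l) (α := α) (β := β) j
  have hcg : Continuous (fun s => (vv l α)^j*(aF l β j s)^2 + (w l β)^j*(bF l β j s)^2) :=
    (continuous_const.mul (hca.pow 2)).add (continuous_const.mul (hcb.pow 2))
  have hder : ∀ s ∈ uIcc (0:ℝ) t,
      HasDerivAt (fun u => (aF l β j u)^2 + (bF l β j u)^2)
        (2*(fF l α β j s)*(aF l β j s)
          - 2*((vv l α)^j*(aF l β j s)^2 + (w l β)^j*(bF l β j s)^2)) s :=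
    fun s _ => energy_deriv hl hβ0 j s
  have hint : IntervalIntegrable (fun s =>
      2*(fF l α β j s)*(aF l β j s)
        - 2*((vv l α)^j*(aF l β j s)^2 + (w l β)^j*(bF l β j s)^2)) MeasureTheory.volume 0 t :=
    (((continuous_const.mul hcf).mul hca).sub (continuous_const.mul hcg)).intervalIntegrable 0 t
  have heq := intervalIntegral.integral_eq_sub_of_hasDerivAt hder hint
  rw [aF_zero hl hβ0 j, bF_zero hl hβ0 j] at heq
  have hsplit : (∫ s in (0:ℝ)..t,
      (2*(fF l α β j s)*(aF l β j s)
        - 2*((vv l α)^j*(aF l β j s)^2 + (w l β)^j*(bF l β j s)^2)))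
      = 2*(∫ s in (0:ℝ)..t, fF l α β j s * aF l β j s)
        - 2*(∫ s in (0:ℝ)..t, ((vv l α)^j*(aF l β j s)^2 + (w l β)^j*(bF l β j s)^2)) := by
    rw [intervalIntegral.integral_sub (f := fun s => 2*(fF l α β j s)*(aF l β j s))
      (g := fun s => 2*((vv l α)^j*(aF l β j s)^2 + (w l β)^j*(bF l β j s)^2))
      (((continuous_const.mul hcf).mul hca).intervalIntegrable 0 t)
      ((continuous_const.mul hcg).intervalIntegrable 0 t)]
    simp only [mul_assoc]
    rw [intervalIntegral.integral_const_mul, intervalIntegral.integral_const_mul]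
  rw [hsplit] at heq
  linarith [heq]

end vanish
-- ====== sup bound constants ======
def cA (l β : ℝ) : ℝ := 30 / (rr l * (1 - qq l β))
def Ma (l β : ℝ) (j : ℕ) : ℝ := cA l β * Real.exp (w l β) * ((w l β)/l)^j
def Md (l β : ℝ) (j : ℕ) : ℝ :=
  cA l β * Real.exp (w l β) * (w l β + 2*(1 - qq l β)⁻¹) * ((w l β)^2/l)^j
def Mb (l : ℝ) (j : ℕ) : ℝ := (rr l)^(j+2)

section numeric
variable (hl : 1 < l) (hβ0 : 0 < β)
include hl hβ0

lemma hq1' : 0 < 1 - qq l β := by linarith [hq1 hl hβ0]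
lemma hcA0 : 0 < cA l β := by
  have := hr0 hl; have := hq1' hl hβ0
  rw [cA]; positivity
lemma hwq1 (j : ℕ) : (w l β)^j * (qq l β)^j = 1 := by
  rw [← mul_pow, mul_comm (w l β), hqw hl hβ0, one_pow]
lemma Aj_eq (j : ℕ) : Aj l β j = cA l β * ((w l β)/l)^j := by
  have h1 := (hr0 hl).ne'
  have h2 := (hl0 hl).ne'
  have h3 := (hw0 hl hβ0).ne'
  have h4 := (hq1' hl hβ0).ne'
  have h5 := pow_ne_zero j h2
  have h6 := pow_ne_zero j h3
  rw [Aj, cA, Δj, qpow hl hβ0, div_pow]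
  field_simp
lemma Δ_inv (j : ℕ) : (Δj l β j)⁻¹ = (w l β)^j * (1 - qq l β)⁻¹ := by
  rw [Δj, qpow hl hβ0, mul_inv, inv_inv]
lemma Δ_le (j : ℕ) : Δj l β j ≤ (qq l β)^j := by
  have h1 := hq0 hl hβ0; have h2 := hq1 hl hβ0
  rw [Δj]
  nlinarith [pow_pos h1 j]
lemma Δ_eq (j : ℕ) : (qq l β)^j - sj l β j = Δj l β j := by
  rw [Δj, sj, pow_succ]; ring
lemma hMa0 (j : ℕ) : 0 < Ma l β j := by
  have h1 := hcA0 hl hβ0; have h2 := hw0 hl hβ0; have h3 := hl0 hl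
  rw [Ma]; positivity
lemma hMd0 (j : ℕ) : 0 < Md l β j := by
  have h1 := hcA0 hl hβ0; have h2 := hw0 hl hβ0; have h3 := hl0 hl
  have h4 := hq1' hl hβ0
  rw [Md]; positivity
lemma hMb0 (j : ℕ) : 0 < Mb l j := pow_pos (hr0 hl) _

-- exponential factor bound on the support
lemma expf_le {j : ℕ} {t : ℝ} (ht : t ≤ (qq l β)^j) :
    Real.exp (((w l β)^(j+1) - (w l β)^j)*t) ≤ Real.exp (w l β) := by
  apply Real.exp_le_exp.mpr
  have hw := hw1 hl hβ0
  have hd : 0 ≤ (w l β)^(j+1) - (w l β)^j := by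
    have h := pow_le_pow_right₀ hw.le (Nat.le_succ j)
    simp only [Nat.succ_eq_add_one] at h
    linarith
  have h1 := hwq1 hl hβ0 j
  calc ((w l β)^(j+1) - (w l β)^j)*t ≤ ((w l β)^(j+1) - (w l β)^j)*(qq l β)^j :=
        mul_le_mul_of_nonneg_left ht hd
    _ = w l β - 1 := by rw [pow_succ]; linear_combination (w l β - 1) * h1
    _ ≤ w l β := by linarith

lemma aF_abs_le (j : ℕ) (t : ℝ) : |aF l β j t| ≤ Ma l β j := by
  have hA := hA0 hl hβ0 j
  rcases le_or_gt t ((qq l β)^j) with h | h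
  · rw [aF, abs_mul, abs_mul, abs_neg, abs_of_pos (hA0 hl hβ0 j),
      abs_of_pos (Real.exp_pos _), abs_of_nonneg (pb_nonneg _)]
    calc Aj l β j * Real.exp (((w l β)^(j+1) - (w l β)^j)*t) * pb (zj l β j t)
        ≤ Aj l β j * Real.exp (w l β) * 1 := by
          apply mul_le_mul (mul_le_mul_of_nonneg_left (expf_le hl hβ0 h) (hA0 hl hβ0 j).le)
            (pb_le_one _) (pb_nonneg _)
          exact mul_nonneg hA.le (Real.exp_pos _).le
      _ = Ma l β j := by rw [Aj_eq hl hβ0, Ma]; ring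
  · rw [aF_zero_right hl hβ0 h.le, abs_zero]
    exact (hMa0 hl hβ0 j).le

lemma daF_abs_le (j : ℕ) (t : ℝ) : |daF l β j t| ≤ Md l β j := by
  have hw := hw1 hl hβ0
  have hA := hA0 hl hβ0 j
  have hq' := hq1' hl hβ0
  rcases le_or_gt t ((qq l β)^j) with h | h
  · rw [daF]
    have hd : 0 ≤ (w l β)^(j+1) - (w l β)^j := by
      have h' := pow_le_pow_right₀ hw.le (Nat.le_succ j)
      simp only [Nat.succ_eq_add_one] at h'
      linarith
    have hE := expf_le hl hβ0 h
    have hE0 := (Real.exp_pos (((w l β)^(j+1) - (w l β)^j)*t)).le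
    have step1 : |((w l β)^(j+1) - (w l β)^j) * Real.exp (((w l β)^(j+1) - (w l β)^j)*t) * pb (zj l β j t)
        + Real.exp (((w l β)^(j+1) - (w l β)^j)*t) * (pd (zj l β j t) * (Δj l β j)⁻¹)|
        ≤ (w l β)^(j+1) * Real.exp (w l β) + Real.exp (w l β) * (2 * (Δj l β j)⁻¹) := by
      have hΔi : 0 ≤ (Δj l β j)⁻¹ := (inv_pos.mpr (hΔ0 hl hβ0 j)).le
      apply (abs_add_le _ _).trans
      apply add_le_add
      · rw [abs_mul, abs_mul, abs_of_nonneg hd, abs_of_nonneg hE0,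
          abs_of_nonneg (pb_nonneg _)]
        have h1 : ((w l β)^(j+1) - (w l β)^j) ≤ (w l β)^(j+1) := by
          have : 0 ≤ (w l β)^j := (pow_pos (hw0 hl hβ0) j).le
          linarith
        calc ((w l β)^(j+1) - (w l β)^j) * Real.exp (((w l β)^(j+1) - (w l β)^j)*t) * pb (zj l β j t)
            ≤ ((w l β)^(j+1) - (w l β)^j) * Real.exp (((w l β)^(j+1) - (w l β)^j)*t) * 1 := by
              apply mul_le_mul_of_nonneg_left (pb_le_one _)
              positivity
          _ = ((w l β)^(j+1) - (w l β)^j) * Real.exp (((w l β)^(j+1) - (w l β)^j)*t) := mul_one _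
          _ ≤ (w l β)^(j+1) * Real.exp (w l β) := by
              apply mul_le_mul h1 hE (Real.exp_pos _).le
              positivity
      · rw [abs_mul, abs_mul, abs_of_nonneg hE0, abs_of_nonneg hΔi]
        apply mul_le_mul hE (mul_le_mul_of_nonneg_right (pd_abs_le _) hΔi)
          (by positivity) (Real.exp_pos _).le
    rw [abs_mul, abs_neg, abs_of_pos hA]
    refine le_trans (mul_le_mul_of_nonneg_left step1 hA.le) (le_of_eq ?_)
    rw [Aj_eq hl hβ0, Δ_inv hl hβ0, Md]
    ring
  · rw [daF_zero_right hl hβ0 h.le, abs_zero]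
    exact (hMd0 hl hβ0 j).le

lemma bF_abs_le (j : ℕ) {t : ℝ} (ht : 0 ≤ t) : |bF l β j t| ≤ Mb l j := by
  have hr := hr0 hl
  rw [bF, abs_mul, abs_mul]
  have h1 : |Bj l j| = Mb l j := by
    rw [Bj, Mb, abs_mul, abs_pow, abs_pow, abs_neg, abs_one, one_pow, one_mul,
      abs_of_pos hr]
  have h2 : |30 * Sf (zj l β j t)| ≤ 1 := by
    rw [abs_mul, abs_of_nonneg (Sf_nonneg _)]
    have := Sf_le (zj l β j t)
    rw [show |(30:ℝ)| = 30 by norm_num]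
    linarith
  have h3 : |Real.exp (-((w l β)^j) * t)| ≤ 1 := by
    rw [abs_of_pos (Real.exp_pos _)]
    apply Real.exp_le_one_iff.mpr
    have := pow_pos (hw0 hl hβ0) j
    nlinarith
  calc |Bj l j| * |30 * Sf (zj l β j t)| * |Real.exp (-((w l β)^j) * t)|
      ≤ Mb l j * 1 * 1 := by
        apply mul_le_mul (mul_le_mul h1.le h2 (abs_nonneg _) (by rw [← h1]; positivity)) h3
          (abs_nonneg _)
        exact mul_nonneg (hMb0 hl hβ0 j).le zero_le_one
    _ = Mb l j := by ring

end numeric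
-- ====== integral helpers ======
open MeasureTheory in
lemma int_supp {g : ℝ → ℝ} {u e M : ℝ} (hg : Continuous g)
    (h0u : 0 ≤ u) (hue : u ≤ e) (he1 : e ≤ 1)
    (hL : ∀ s, s ≤ u → g s = 0) (hR : ∀ s, e ≤ s → g s = 0)
    (hM : ∀ s, |g s| ≤ M) :
    ∫ s in (0:ℝ)..1, g s ≤ M * (e - u) := by
  have i1 : IntervalIntegrable g volume 0 u := hg.intervalIntegrable _ _
  have i2 : IntervalIntegrable g volume u e := hg.intervalIntegrable _ _
  have i3 : IntervalIntegrable g volume 0 e := hg.intervalIntegrable _ _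
  have i4 : IntervalIntegrable g volume e 1 := hg.intervalIntegrable _ _
  have e1 : (∫ s in (0:ℝ)..u, g s) = 0 := by
    rw [show (∫ s in (0:ℝ)..u, g s) = ∫ s in (0:ℝ)..u, (0:ℝ) from
      intervalIntegral.integral_congr (fun s hs => by
        rw [uIcc_of_le h0u] at hs; exact hL s hs.2)]
    simp
  have e2 : (∫ s in e..(1:ℝ), g s) = 0 := by
    rw [show (∫ s in e..(1:ℝ), g s) = ∫ s in e..(1:ℝ), (0:ℝ) from
      intervalIntegral.integral_congr (fun s hs => by
        rw [uIcc_of_le he1] at hs; exact hR s hs.1)]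
    simp
  have e3 : |∫ s in u..e, g s| ≤ M * (e - u) := by
    have hb := intervalIntegral.norm_integral_le_of_norm_le_const
      (C := M) (f := g) (a := u) (b := e) (fun x _ => hM x)
    rw [Real.norm_eq_abs, abs_of_nonneg (by linarith : (0:ℝ) ≤ e - u)] at hb
    exact hb
  have s1 := intervalIntegral.integral_add_adjacent_intervals i1 i2
  have s2 := intervalIntegral.integral_add_adjacent_intervals i3 i4
  have := le_abs_self (∫ s in u..e, g s)
  linarith

open MeasureTheory in
lemma int_sup01 {g : ℝ → ℝ} {M : ℝ} (hg : Continuous g)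
    (hM : ∀ s ∈ Set.uIoc (0:ℝ) 1, |g s| ≤ M) : ∫ s in (0:ℝ)..1, g s ≤ M := by
  have hb := intervalIntegral.norm_integral_le_of_norm_le_const
    (C := M) (f := g) (a := 0) (b := 1) hM
  rw [Real.norm_eq_abs] at hb
  have := le_abs_self (∫ s in (0:ℝ)..1, g s)
  simp at hb
  linarith

open MeasureTheory in
lemma int_mono01 {g : ℝ → ℝ} (hg : Continuous g) (hpos : ∀ s, 0 ≤ g s)
    {t : ℝ} (ht1 : t ≤ 1) :
    ∫ s in (0:ℝ)..t, g s ≤ ∫ s in (0:ℝ)..1, g s := by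
  have i1 : IntervalIntegrable g volume 0 t := hg.intervalIntegrable _ _
  have i2 : IntervalIntegrable g volume t 1 := hg.intervalIntegrable _ _
  have s1 := intervalIntegral.integral_add_adjacent_intervals i1 i2
  have h2 : 0 ≤ ∫ s in t..(1:ℝ), g s :=
    intervalIntegral.integral_nonneg ht1 (fun u _ => hpos u)
  linarith

-- ====== summability helpers ======
lemma summable_geom_bound {x : ℕ → ℝ} {C ρ : ℝ} (h0 : 0 ≤ ρ) (h1 : ρ < 1)
    (hb : ∀ j, |x j| ≤ C * ρ^j) : Summable x := by
  have hg : Summable (fun j : ℕ => C * ρ^j) :=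
    (summable_geometric_of_lt_one h0 h1).mul_left C
  exact (Summable.of_nonneg_of_le (fun j => abs_nonneg _) hb hg).of_abs

lemma tsum_le_geom {x : ℕ → ℝ} {C ρ : ℝ} (h0 : 0 ≤ ρ) (h1 : ρ < 1)
    (hb : ∀ j, x j ≤ C * ρ^j) (hx : Summable x) : ∑' j, x j ≤ C * (1-ρ)⁻¹ := by
  have hg : Summable (fun j : ℕ => C * ρ^j) :=
    (summable_geometric_of_lt_one h0 h1).mul_left C
  have := Summable.tsum_le_tsum hb hx hg
  rwa [tsum_mul_left, tsum_geometric_of_lt_one h0 h1] at this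

lemma sq6 (x1 x2 x3 x4 x5 x6 : ℝ) :
    (x1+x2+x3+x4-x5-x6)^2 ≤ 6*(x1^2+x2^2+x3^2+x4^2+x5^2+x6^2) := by
  nlinarith [sq_nonneg (x1-x2), sq_nonneg (x1-x3), sq_nonneg (x1-x4), sq_nonneg (x1+x5),
    sq_nonneg (x1+x6), sq_nonneg (x2-x3), sq_nonneg (x2-x4), sq_nonneg (x2+x5),
    sq_nonneg (x2+x6), sq_nonneg (x3-x4), sq_nonneg (x3+x5), sq_nonneg (x3+x6),
    sq_nonneg (x4+x5), sq_nonneg (x4+x6), sq_nonneg (x5-x6)]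

-- ====== ratio lemmas ======
section ratios
variable (hl : 1 < l) (hα0 : 0 < α) (hαβ : α ≤ β) (hβ : β < 1/2)
include hl hα0 hαβ hβ

lemma hβ0' : 0 < β := lt_of_lt_of_le hα0 hαβ

lemma sq_rpow : l^2 = l^((2:ℝ)) := by
  rw [← Real.rpow_natCast l 2]; norm_num

lemma hv1 : 1 ≤ vv l α := by
  have := Real.rpow_le_rpow_of_exponent_le hl.le (by linarith : (0:ℝ) ≤ 2*α)
  rwa [Real.rpow_zero] at this

lemma hv0 : 0 < vv l α := lt_of_lt_of_le zero_lt_one (hv1 hl hα0 hαβ hβ)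

lemma hwl : w l β < l := by
  rw [w]
  calc l^(2*β) < l^(1:ℝ) := Real.rpow_lt_rpow_of_exponent_lt hl (by linarith)
    _ = l := Real.rpow_one l

lemma hvw : vv l α ≤ w l β :=
  Real.rpow_le_rpow_of_exponent_le hl.le (by linarith)

lemma ratioR1 : vv l α * w l β < l^2 := by
  rw [vv, w, ← Real.rpow_add (hl0 hl), sq_rpow hl hα0 hαβ hβ]
  exact Real.rpow_lt_rpow_of_exponent_lt hl (by linarith)

lemma cube_rpow : (w l β)^3 = l^(2*β*3) := by
  rw [w, ← Real.rpow_natCast (l^(2*β)) 3, ← Real.rpow_mul (hl0 hl).le]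
  norm_num

lemma ratioR2 (hβα : 3*β - α < 1) : (w l β)^3 < l^2 * vv l α := by
  rw [cube_rpow hl hα0 hαβ hβ, vv, sq_rpow hl hα0 hαβ hβ, ← Real.rpow_add (hl0 hl)]
  exact Real.rpow_lt_rpow_of_exponent_lt hl (by linarith)

omit hα0 hαβ hβ in
lemma rr_sq : (rr l)^2 = 1/(4*l^2) := by
  rw [rr]; field_simp; ring

lemma ratioR3 : w l β * (rr l)^2 < 1 := by
  rw [rr_sq hl]
  have h1 := hwl hl hα0 hαβ hβ
  have h2 := hl0 hl
  rw [mul_one_div, div_lt_one (by positivity)]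
  nlinarith [mul_pos h2 (by linarith : (0:ℝ) < 4*l - 1)]

omit hα0 hαβ hβ in
lemma ratioR4 : l^2 * (rr l)^4 < 1 := by
  have h2 := hl0 hl
  have : (rr l)^4 = 1/(16*l^4) := by rw [rr]; field_simp; ring
  rw [this]
  rw [mul_one_div, div_lt_one (by positivity)]
  have hx : 1 < l^2 := by nlinarith
  nlinarith [mul_pos (by linarith : (0:ℝ) < l^2) (by linarith : (0:ℝ) < 16*l^2 - 1)]

end ratios
-- ====== weighted integral bounds and summability ======
section sums
open MeasureTheory
variable (hl : 1 < l) (hα0 : 0 < α) (hαβ : α ≤ β) (hβ : β < 1/2)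
include hl hα0 hαβ hβ

section withb0
variable (hβ0 : 0 < β)
include hβ0
omit hα0 hαβ hβ

-- interval endpoints facts
lemma hu0 (j : ℕ) : (0:ℝ) ≤ sj l β j := (pow_pos (hq0 hl hβ0) (j+1)).le
lemma hue (j : ℕ) : sj l β j ≤ (qq l β)^j :=
  pow_le_pow_of_le_one (hq0 hl hβ0).le (hq1 hl hβ0).le (Nat.le_succ j)
lemma he1 (j : ℕ) : (qq l β)^j ≤ 1 :=
  pow_le_one₀ (hq0 hl hβ0).le (hq1 hl hβ0).le

lemma IB0 (j : ℕ) : ∫ s in (0:ℝ)..1, (aF l β j s)^2 ≤ (Ma l β j)^2 * Δj l β j := by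
  have h := int_supp (g := fun s => (aF l β j s)^2) (M := (Ma l β j)^2)
    ((continuous_aF hl hβ0 j).pow 2) (hu0 hl hβ0 j) (hue hl hβ0 j) (he1 hl hβ0 j)
    (fun s hs => by show (aF l β j s)^2 = 0; rw [aF_zero_left hl hβ0 hs]; norm_num)
    (fun s hs => by show (aF l β j s)^2 = 0; rw [aF_zero_right hl hβ0 hs]; norm_num)
    (fun s => by
      show |(aF l β j s)^2| ≤ (Ma l β j)^2
      rw [abs_of_nonneg (sq_nonneg _), ← sq_abs]
      exact pow_le_pow_left₀ (abs_nonneg _) (aF_abs_le hl hβ0 j s) 2)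
  rwa [Δ_eq hl hβ0 j] at h

lemma IB1 (j : ℕ) : ∫ s in (0:ℝ)..1, (daF l β j s)^2 ≤ (Md l β j)^2 * Δj l β j := by
  have h := int_supp (g := fun s => (daF l β j s)^2) (M := (Md l β j)^2)
    ((continuous_daF hl hβ0 j).pow 2) (hu0 hl hβ0 j) (hue hl hβ0 j) (he1 hl hβ0 j)
    (fun s hs => by show (daF l β j s)^2 = 0; rw [daF_zero_left hl hβ0 hs]; norm_num)
    (fun s hs => by show (daF l β j s)^2 = 0; rw [daF_zero_right hl hβ0 hs]; norm_num)
    (fun s => by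
      show |(daF l β j s)^2| ≤ (Md l β j)^2
      rw [abs_of_nonneg (sq_nonneg _), ← sq_abs]
      exact pow_le_pow_left₀ (abs_nonneg _) (daF_abs_le hl hβ0 j s) 2)
  rwa [Δ_eq hl hβ0 j] at h

lemma IB5 (j : ℕ) :
    ∫ s in (0:ℝ)..1, (l^j * (aF l β j s)^2)^2 ≤ (l^j * (Ma l β j)^2)^2 * Δj l β j := by
  have hlj : (0:ℝ) ≤ l^j := (pow_pos (hl0 hl) j).le
  have h := int_supp (g := fun s => (l^j * (aF l β j s)^2)^2) (M := (l^j * (Ma l β j)^2)^2)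
    ((continuous_const.mul ((continuous_aF hl hβ0 j).pow 2)).pow 2)
    (hu0 hl hβ0 j) (hue hl hβ0 j) (he1 hl hβ0 j)
    (fun s hs => by show (l^j * (aF l β j s)^2)^2 = 0; rw [aF_zero_left hl hβ0 hs]; norm_num)
    (fun s hs => by show (l^j * (aF l β j s)^2)^2 = 0; rw [aF_zero_right hl hβ0 hs]; norm_num)
    (fun s => by
      show |(l^j * (aF l β j s)^2)^2| ≤ (l^j * (Ma l β j)^2)^2
      rw [abs_of_nonneg (sq_nonneg _), ← sq_abs]
      apply pow_le_pow_left₀ (abs_nonneg _) _ 2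
      rw [abs_mul, abs_of_nonneg hlj]
      apply mul_le_mul_of_nonneg_left _ hlj
      rw [abs_of_nonneg (sq_nonneg _), ← sq_abs]
      exact pow_le_pow_left₀ (abs_nonneg _) (aF_abs_le hl hβ0 j s) 2)
  rwa [Δ_eq hl hβ0 j] at h

lemma IB4 (j : ℕ) :
    ∫ s in (0:ℝ)..1, (l^j * bF l β j s * bF l β (j+1) s)^2
      ≤ (l^j * Mb l j * Mb l (j+1))^2 := by
  have hlj : (0:ℝ) ≤ l^j := (pow_pos (hl0 hl) j).le
  apply int_sup01 ((continuous_const.mul (continuous_bF hl hβ0 j)).mul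
    (continuous_bF hl hβ0 (j+1)) |>.pow 2)
  intro s hs
  rw [Set.uIoc_of_le (by norm_num : (0:ℝ) ≤ 1)] at hs
  have hs0 : 0 ≤ s := hs.1.le
  show |(l^j * bF l β j s * bF l β (j+1) s)^2| ≤ (l^j * Mb l j * Mb l (j+1))^2
  rw [abs_of_nonneg (sq_nonneg _), ← sq_abs]
  apply pow_le_pow_left₀ (abs_nonneg _) _ 2
  rw [abs_mul, abs_mul, abs_of_nonneg hlj]
  have h1 := bF_abs_le hl hβ0 j hs0
  have h2 := bF_abs_le hl hβ0 (j+1) hs0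
  have hm1 := hMb0 hl hβ0 j
  have hm2 := hMb0 hl hβ0 (j+1)
  calc l^j * |bF l β j s| * |bF l β (j+1) s|
      ≤ l^j * Mb l j * |bF l β (j+1) s| := by
        apply mul_le_mul_of_nonneg_right (mul_le_mul_of_nonneg_left h1 hlj) (abs_nonneg _)
    _ ≤ l^j * Mb l j * Mb l (j+1) := by
        apply mul_le_mul_of_nonneg_left h2 (mul_nonneg hlj hm1.le)

lemma IB6 (j : ℕ) :
    ∫ s in (0:ℝ)..1, (l^j * (bF l β j s)^2)^2 ≤ (l^j * (Mb l j)^2)^2 := by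
  have hlj : (0:ℝ) ≤ l^j := (pow_pos (hl0 hl) j).le
  apply int_sup01 ((continuous_const.mul ((continuous_bF hl hβ0 j).pow 2)).pow 2)
  intro s hs
  rw [Set.uIoc_of_le (by norm_num : (0:ℝ) ≤ 1)] at hs
  have hs0 : 0 ≤ s := hs.1.le
  show |(l^j * (bF l β j s)^2)^2| ≤ (l^j * (Mb l j)^2)^2
  rw [abs_of_nonneg (sq_nonneg _), ← sq_abs]
  apply pow_le_pow_left₀ (abs_nonneg _) _ 2
  rw [abs_mul, abs_of_nonneg hlj]
  apply mul_le_mul_of_nonneg_left _ hlj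
  rw [abs_of_nonneg (sq_nonneg _), ← sq_abs]
  exact pow_le_pow_left₀ (abs_nonneg _) (bF_abs_le hl hβ0 j hs0) 2

lemma IB2 (j : ℕ) :
    ∫ s in (0:ℝ)..1, ((vv l α)^j * aF l β j s)^2 ≤ ((vv l α)^j * Ma l β j)^2 * Δj l β j := by
  have h := int_supp (g := fun s => ((vv l α)^j * aF l β j s)^2) (M := ((vv l α)^j * Ma l β j)^2)
    ((continuous_const.mul (continuous_aF hl hβ0 j)).pow 2)
    (hu0 hl hβ0 j) (hue hl hβ0 j) (he1 hl hβ0 j)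
    (fun s hs => by show ((vv l α)^j * aF l β j s)^2 = 0; rw [aF_zero_left hl hβ0 hs]; norm_num)
    (fun s hs => by show ((vv l α)^j * aF l β j s)^2 = 0; rw [aF_zero_right hl hβ0 hs]; norm_num)
    (fun s => by
      show |((vv l α)^j * aF l β j s)^2| ≤ ((vv l α)^j * Ma l β j)^2
      rw [abs_of_nonneg (sq_nonneg _), ← sq_abs]
      apply pow_le_pow_left₀ (abs_nonneg _) _ 2
      rw [abs_mul, abs_of_nonneg (pow_pos (hvpos hl) j).le]
      exact mul_le_mul_of_nonneg_left (aF_abs_le hl hβ0 j s) (pow_pos (hvpos hl) j).le)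
  rwa [Δ_eq hl hβ0 j] at h

lemma IB3 (j : ℕ) :
    ∫ s in (0:ℝ)..1, (l^j * aF l β j s * aF l β (j+1) s)^2 = 0 := by
  rw [show (fun s => (l^j * aF l β j s * aF l β (j+1) s)^2) = fun _ => (0:ℝ) from
    funext (fun s => by rw [mul_assoc, Vaa hl hβ0 j s, mul_zero]; norm_num)]
  simp

end withb0
end sums
-- bound for the b integral, inside the hβ0-only context
section intb
variable (hl : 1 < l) (hβ0 : 0 < β)
include hl hβ0
open MeasureTheory

lemma IBb (j : ℕ) : ∫ s in (0:ℝ)..1, (bF l β j s)^2 ≤ (Mb l j)^2 := by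
  apply int_sup01 ((continuous_bF hl hβ0 j).pow 2)
  intro s hs
  rw [Set.uIoc_of_le (by norm_num : (0:ℝ) ≤ 1)] at hs
  show |(bF l β j s)^2| ≤ (Mb l j)^2
  rw [abs_of_nonneg (sq_nonneg _), ← sq_abs]
  exact pow_le_pow_left₀ (abs_nonneg _) (bF_abs_le hl hβ0 j hs.1.le) 2

end intb

-- ====== the power-algebra identities ======
section Ealg
variable (hl : 1 < l) (hα0 : 0 < α) (hαβ : α ≤ β) (hβ : β < 1/2)
include hl hα0 hαβ hβ

lemma E1 (j : ℕ) : (vv l α)^j * ((Ma l β j)^2 * Δj l β j)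
    = (cA l β * Real.exp (w l β))^2 * (1 - qq l β) * (vv l α * w l β / l^2)^j := by
  have hb0 := hβ0' hl hα0 hαβ hβ
  have h2 := (hl0 hl).ne'
  have h3 := (hw0 hl hb0).ne'
  have h4 := (hvpos hl (α := α)).ne'
  rw [Ma, Δj, qpow hl hb0]
  field_simp
  ring

lemma E2 (j : ℕ) : ((vv l α)^j)⁻¹ * ((Md l β j)^2 * Δj l β j)
    = (cA l β * Real.exp (w l β) * (w l β + 2*(1 - qq l β)⁻¹))^2 * (1 - qq l β)
      * ((w l β)^3 / (l^2 * vv l α))^j := by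
  have hb0 := hβ0' hl hα0 hαβ hβ
  have h2 := (hl0 hl).ne'
  have h3 := (hw0 hl hb0).ne'
  have h4 := (hvpos hl (α := α)).ne'
  rw [Md, Δj, qpow hl hb0]
  simp only [div_pow, mul_pow, inv_pow]
  field_simp
  ring

lemma E5 (j : ℕ) : (l^j * (Ma l β j)^2)^2 * Δj l β j
    = (cA l β * Real.exp (w l β))^4 * (1 - qq l β) * ((w l β)^3 / l^2)^j := by
  have hb0 := hβ0' hl hα0 hαβ hβ
  have h2 := (hl0 hl).ne'
  have h3 := (hw0 hl hb0).ne'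
  rw [Ma, Δj, qpow hl hb0]
  simp only [div_pow, mul_pow, inv_pow]
  field_simp
  ring

omit hα0 hαβ hβ in
lemma E3 (j : ℕ) : (w l β)^j * (Mb l j)^2 = (rr l)^4 * (w l β * (rr l)^2)^j := by
  rw [Mb, mul_pow]; ring

omit hα0 hαβ hβ in
lemma E4 (j : ℕ) : (l^j * Mb l j * Mb l (j+1))^2 = (rr l)^10 * (l^2 * (rr l)^4)^j := by
  rw [Mb, Mb, mul_pow]; ring

omit hα0 hαβ hβ in
lemma E6 (j : ℕ) : (l^j * (Mb l j)^2)^2 = (rr l)^8 * (l^2 * (rr l)^4)^j := by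
  rw [Mb, mul_pow]; ring

-- ratios as `< 1` statements
lemma ρ1lt : vv l α * w l β / l^2 < 1 := by
  have h0 := hl0 hl
  rw [div_lt_one (by positivity)]
  exact ratioR1 hl hα0 hαβ hβ

lemma ρ2lt (hβα : 3*β - α < 1) : (w l β)^3 / (l^2 * vv l α) < 1 := by
  have h0 := hl0 hl
  have h4 := hvpos hl (α := α)
  rw [div_lt_one (by positivity)]
  exact ratioR2 hl hα0 hαβ hβ hβα

lemma ρ1nn : 0 ≤ vv l α * w l β / l^2 := by
  have h0 := hl0 hl
  have h3 := hw0 hl (hβ0' hl hα0 hαβ hβ)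
  have h4 := hvpos hl (α := α)
  positivity

lemma ρ2nn : 0 ≤ (w l β)^3 / (l^2 * vv l α) := by
  have h0 := hl0 hl
  have h3 := hw0 hl (hβ0' hl hα0 hαβ hβ)
  have h4 := hvpos hl (α := α)
  positivity

lemma ρ2pos : 0 < (w l β)^3 / (l^2 * vv l α) := by
  have h0 := hl0 hl
  have h3 := hw0 hl (hβ0' hl hα0 hαβ hβ)
  have h4 := hvpos hl (α := α)
  positivity

lemma ρ3nn : 0 ≤ w l β * (rr l)^2 := by
  have h3 := hw0 hl (hβ0' hl hα0 hαβ hβ)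
  have h5 := hr0 hl
  positivity

omit hα0 hαβ hβ in
lemma ρ4nn : 0 ≤ l^2 * (rr l)^4 := by
  have h0 := hl0 hl
  have h5 := hr0 hl
  positivity

end Ealg
-- ====== the main summability lemmas ======
section mainsums
open MeasureTheory
variable (hl : 1 < l) (hα0 : 0 < α) (hαβ : α ≤ β) (hβ : β < 1/2)
include hl hα0 hαβ hβ

lemma SIa : Summable (fun j => (vv l α)^j * ∫ s in (0:ℝ)..1, (aF l β j s)^2) := by
  have hb0 := hβ0' hl hα0 hαβ hβ
  apply summable_geom_bound (C := (cA l β * Real.exp (w l β))^2 * (1 - qq l β))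
    (ρ := vv l α * w l β / l^2) (ρ1nn hl hα0 hαβ hβ) (ρ1lt hl hα0 hαβ hβ)
  intro j
  have hvj := (pow_pos (hvpos hl (α := α)) j).le
  have hint : 0 ≤ ∫ s in (0:ℝ)..1, (aF l β j s)^2 :=
    intervalIntegral.integral_nonneg (by norm_num) (fun u _ => sq_nonneg _)
  rw [abs_of_nonneg (mul_nonneg hvj hint)]
  calc (vv l α)^j * ∫ s in (0:ℝ)..1, (aF l β j s)^2
      ≤ (vv l α)^j * ((Ma l β j)^2 * Δj l β j) :=
        mul_le_mul_of_nonneg_left (IB0 hl hb0 j) hvj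
    _ = _ := E1 hl hα0 hαβ hβ j

lemma SIb : Summable (fun j => (w l β)^j * ∫ s in (0:ℝ)..1, (bF l β j s)^2) := by
  have hb0 := hβ0' hl hα0 hαβ hβ
  apply summable_geom_bound (C := (rr l)^4) (ρ := w l β * (rr l)^2)
    (ρ3nn hl hα0 hαβ hβ) (ratioR3 hl hα0 hαβ hβ)
  intro j
  have hwj := (pow_pos (hw0 hl hb0) j).le
  have hint : 0 ≤ ∫ s in (0:ℝ)..1, (bF l β j s)^2 :=
    intervalIntegral.integral_nonneg (by norm_num) (fun u _ => sq_nonneg _)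
  rw [abs_of_nonneg (mul_nonneg hwj hint)]
  calc (w l β)^j * ∫ s in (0:ℝ)..1, (bF l β j s)^2
      ≤ (w l β)^j * (Mb l j)^2 := mul_le_mul_of_nonneg_left (IBb hl hb0 j) hwj
    _ = _ := E3 hl j

-- pointwise summability
lemma Ma_sq (j : ℕ) : (Ma l β j)^2 = (cA l β * Real.exp (w l β))^2 * ((w l β / l)^2)^j := by
  rw [Ma, mul_pow]; ring

lemma ρ5nn : (0:ℝ) ≤ (w l β / l)^2 := sq_nonneg _

lemma ρ5lt : (w l β / l)^2 < 1 := by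
  have hb0 := hβ0' hl hα0 hαβ hβ
  have h1 : w l β / l < 1 := (div_lt_one (hl0 hl)).mpr (hwl hl hα0 hαβ hβ)
  have h0 : 0 ≤ w l β / l := div_nonneg (hw0 hl hb0).le (hl0 hl).le
  exact pow_lt_one₀ h0 h1 (by norm_num)

lemma Spa (t : ℝ) : Summable (fun j => (aF l β j t)^2) := by
  have hb0 := hβ0' hl hα0 hαβ hβ
  apply summable_geom_bound (C := (cA l β * Real.exp (w l β))^2)
    (ρ := (w l β / l)^2) (ρ5nn hl hα0 hαβ hβ) (ρ5lt hl hα0 hαβ hβ)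
  intro j
  rw [abs_of_nonneg (sq_nonneg _), ← Ma_sq hl hα0 hαβ hβ, ← sq_abs]
  exact pow_le_pow_left₀ (abs_nonneg _) (aF_abs_le hl hb0 j t) 2

omit hl hα0 hαβ hβ in
lemma Mb_sq (j : ℕ) : (Mb l j)^2 = (rr l)^4 * ((rr l)^2)^j := by
  rw [Mb]; ring

omit hα0 hαβ hβ in
lemma ρ6lt : (rr l)^2 < 1 := by
  have := hr0 hl
  exact pow_lt_one₀ this.le (hr1 hl) (by norm_num)

lemma Spb {t : ℝ} (ht : 0 ≤ t) : Summable (fun j => (bF l β j t)^2) := by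
  have hb0 := hβ0' hl hα0 hαβ hβ
  apply summable_geom_bound (C := (rr l)^4) (ρ := (rr l)^2) (sq_nonneg _) (ρ6lt hl)
  intro j
  rw [abs_of_nonneg (sq_nonneg _), ← Mb_sq, ← sq_abs]
  exact pow_le_pow_left₀ (abs_nonneg _) (bF_abs_le hl hb0 j ht) 2

lemma Mtsab {t : ℝ} (ht : 0 ≤ t) :
    (∑' j, (aF l β j t)^2) + (∑' j, (bF l β j t)^2)
      ≤ (cA l β * Real.exp (w l β))^2 * (1-(w l β / l)^2)⁻¹ + (rr l)^4 * (1-(rr l)^2)⁻¹ := by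
  have hb0 := hβ0' hl hα0 hαβ hβ
  have h1 : (∑' j, (aF l β j t)^2) ≤ (cA l β * Real.exp (w l β))^2 * (1-(w l β / l)^2)⁻¹ := by
    apply tsum_le_geom (ρ5nn hl hα0 hαβ hβ) (ρ5lt hl hα0 hαβ hβ) _ (Spa hl hα0 hαβ hβ t)
    intro j
    rw [← Ma_sq hl hα0 hαβ hβ, ← sq_abs]
    exact pow_le_pow_left₀ (abs_nonneg _) (aF_abs_le hl hb0 j t) 2
  have h2 : (∑' j, (bF l β j t)^2) ≤ (rr l)^4 * (1-(rr l)^2)⁻¹ := by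
    apply tsum_le_geom (sq_nonneg _) (ρ6lt hl) _ (Spb hl hα0 hαβ hβ ht)
    intro j
    rw [← Mb_sq, ← sq_abs]
    exact pow_le_pow_left₀ (abs_nonneg _) (bF_abs_le hl hb0 j ht) 2
  linarith

-- dissipation over [0,t]
lemma SIt {t : ℝ} (ht : t ∈ Icc (0:ℝ) 1) :
    Summable (fun j => ∫ s in (0:ℝ)..t,
      ((vv l α)^j*(aF l β j s)^2 + (w l β)^j*(bF l β j s)^2)) := by
  have hb0 := hβ0' hl hα0 hαβ hβ
  have hS : Summable (fun j => (vv l α)^j * (∫ s in (0:ℝ)..1, (aF l β j s)^2)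
      + (w l β)^j * (∫ s in (0:ℝ)..1, (bF l β j s)^2)) :=
    (SIa hl hα0 hαβ hβ).add (SIb hl hα0 hαβ hβ)
  apply Summable.of_nonneg_of_le _ _ hS
  · intro j
    apply intervalIntegral.integral_nonneg ht.1
    intro u _
    have hvj := (pow_pos (hvpos hl (α := α)) j).le
    have hwj := (pow_pos (hw0 hl hb0) j).le
    positivity
  · intro j
    have hcg : Continuous (fun s => (vv l α)^j*(aF l β j s)^2 + (w l β)^j*(bF l β j s)^2) :=
      (continuous_const.mul ((continuous_aF hl hb0 j).pow 2)).add
        (continuous_const.mul ((continuous_bF hl hb0 j).pow 2))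
    have hpos : ∀ s, 0 ≤ (vv l α)^j*(aF l β j s)^2 + (w l β)^j*(bF l β j s)^2 := by
      intro s
      have hvj := (pow_pos (hvpos hl (α := α)) j).le
      have hwj := (pow_pos (hw0 hl hb0) j).le
      positivity
    calc (∫ s in (0:ℝ)..t, ((vv l α)^j*(aF l β j s)^2 + (w l β)^j*(bF l β j s)^2))
        ≤ ∫ s in (0:ℝ)..1, ((vv l α)^j*(aF l β j s)^2 + (w l β)^j*(bF l β j s)^2) :=
          int_mono01 hcg hpos ht.2
      _ = (vv l α)^j * (∫ s in (0:ℝ)..1, (aF l β j s)^2)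
          + (w l β)^j * (∫ s in (0:ℝ)..1, (bF l β j s)^2) := by
          rw [intervalIntegral.integral_add (f := fun s => (vv l α)^j*(aF l β j s)^2)
            (g := fun s => (w l β)^j*(bF l β j s)^2)
            ((continuous_const.mul ((continuous_aF hl hb0 j).pow 2)).intervalIntegrable 0 1)
            ((continuous_const.mul ((continuous_bF hl hb0 j).pow 2)).intervalIntegrable 0 1),
            intervalIntegral.integral_const_mul, intervalIntegral.integral_const_mul]

end mainsums
-- ====== summability of the forcing budget ======
section fbudget
open MeasureTheory
variable (hl : 1 < l) (hα0 : 0 < α) (hαβ : α ≤ β) (hβ : β < 1/2) (hβα : 3*β - α < 1)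
include hl hα0 hαβ hβ hβα

lemma SIf : Summable (fun j => ((vv l α)^j)⁻¹ * ∫ s in (0:ℝ)..1, (fF l α β j s)^2) := by
  have hb0 := hβ0' hl hα0 hαβ hβ
  have hvj : ∀ j : ℕ, (0:ℝ) ≤ ((vv l α)^j)⁻¹ :=
    fun j => (inv_pos.mpr (pow_pos (hvpos hl (α := α)) j)).le
  have hvj1 : ∀ j : ℕ, ((vv l α)^j)⁻¹ ≤ 1 := by
    intro j
    apply inv_le_one_of_one_le₀
    exact one_le_pow₀ (hv1 hl hα0 hαβ hβ)
  have hρ2nn := ρ2nn hl hα0 hαβ hβ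
  have hρ2lt := ρ2lt hl hα0 hαβ hβ hβα
  have hρ2pos := ρ2pos hl hα0 hαβ hβ
  -- continuity of the six components
  have c1 : ∀ j : ℕ, Continuous (fun s => (daF l β j s)^2) :=
    fun j => (continuous_daF hl hb0 j).pow 2
  have c2 : ∀ j : ℕ, Continuous (fun s => ((vv l α)^j * aF l β j s)^2) :=
    fun j => (continuous_const.mul (continuous_aF hl hb0 j)).pow 2
  have c3 : ∀ j : ℕ, Continuous (fun s => (l^j * aF l β j s * aF l β (j+1) s)^2) :=
    fun j => ((continuous_const.mul (continuous_aF hl hb0 j)).mul (continuous_aF hl hb0 (j+1))).pow 2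
  have c4 : ∀ j : ℕ, Continuous (fun s => (l^j * bF l β j s * bF l β (j+1) s)^2) :=
    fun j => ((continuous_const.mul (continuous_bF hl hb0 j)).mul (continuous_bF hl hb0 (j+1))).pow 2
  have c5 : ∀ j : ℕ, Continuous (fun s => (dprev (fun i u => l^i * (aF l β i u)^2) j s)^2) := by
    intro j
    cases j with
    | zero => simp only [dprev]; exact continuous_const
    | succ n => exact (continuous_const.mul ((continuous_aF hl hb0 n).pow 2)).pow 2
  have c6 : ∀ j : ℕ, Continuous (fun s => (dprev (fun i u => l^i * (bF l β i u)^2) j s)^2) := by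
    intro j
    cases j with
    | zero => simp only [dprev]; exact continuous_const
    | succ n => exact (continuous_const.mul ((continuous_bF hl hb0 n).pow 2)).pow 2
  have intnn : ∀ (g : ℝ → ℝ), (0:ℝ) ≤ ∫ s in (0:ℝ)..1, (g s)^2 :=
    fun g => intervalIntegral.integral_nonneg (by norm_num) (fun u _ => sq_nonneg _)
  -- the six tail sequences
  have hT1 : Summable (fun j => ((vv l α)^j)⁻¹ * ∫ s in (0:ℝ)..1, (daF l β j s)^2) := by
    apply summable_geom_bound
      (C := (cA l β * Real.exp (w l β) * (w l β + 2*(1 - qq l β)⁻¹))^2 * (1 - qq l β))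
      (ρ := (w l β)^3 / (l^2 * vv l α)) hρ2nn hρ2lt
    intro j
    rw [abs_of_nonneg (mul_nonneg (hvj j) (intnn _))]
    calc ((vv l α)^j)⁻¹ * ∫ s in (0:ℝ)..1, (daF l β j s)^2
        ≤ ((vv l α)^j)⁻¹ * ((Md l β j)^2 * Δj l β j) :=
          mul_le_mul_of_nonneg_left (IB1 hl hb0 j) (hvj j)
      _ = _ := E2 hl hα0 hαβ hβ j
  have hT2 : Summable (fun j => ((vv l α)^j)⁻¹ * ∫ s in (0:ℝ)..1, ((vv l α)^j * aF l β j s)^2) := by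
    apply summable_geom_bound (C := (cA l β * Real.exp (w l β))^2 * (1 - qq l β))
      (ρ := vv l α * w l β / l^2) (ρ1nn hl hα0 hαβ hβ) (ρ1lt hl hα0 hαβ hβ)
    intro j
    have hv0j := pow_pos (hvpos hl (α := α)) j
    rw [abs_of_nonneg (mul_nonneg (hvj j) (intnn _))]
    calc ((vv l α)^j)⁻¹ * ∫ s in (0:ℝ)..1, ((vv l α)^j * aF l β j s)^2
        ≤ ((vv l α)^j)⁻¹ * (((vv l α)^j * Ma l β j)^2 * Δj l β j) :=
          mul_le_mul_of_nonneg_left (IB2 hl hb0 j) (hvj j)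
      _ = (vv l α)^j * ((Ma l β j)^2 * Δj l β j) := by
          field_simp
      _ = _ := E1 hl hα0 hαβ hβ j
  have hT3 : Summable (fun j => ((vv l α)^j)⁻¹ *
      ∫ s in (0:ℝ)..1, (l^j * aF l β j s * aF l β (j+1) s)^2) := by
    apply Summable.congr summable_zero
    intro j
    rw [IB3 hl hb0 j, mul_zero]
  have hT4 : Summable (fun j => ((vv l α)^j)⁻¹ *
      ∫ s in (0:ℝ)..1, (l^j * bF l β j s * bF l β (j+1) s)^2) := by
    apply summable_geom_bound (C := (rr l)^10) (ρ := l^2 * (rr l)^4)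
      (ρ4nn hl) (ratioR4 hl)
    intro j
    rw [abs_of_nonneg (mul_nonneg (hvj j) (intnn _))]
    calc ((vv l α)^j)⁻¹ * ∫ s in (0:ℝ)..1, (l^j * bF l β j s * bF l β (j+1) s)^2
        ≤ 1 * ∫ s in (0:ℝ)..1, (l^j * bF l β j s * bF l β (j+1) s)^2 :=
          mul_le_mul_of_nonneg_right (hvj1 j) (intnn _)
      _ = ∫ s in (0:ℝ)..1, (l^j * bF l β j s * bF l β (j+1) s)^2 := one_mul _
      _ ≤ (l^j * Mb l j * Mb l (j+1))^2 := IB4 hl hb0 j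
      _ = _ := E4 hl j
  have hT5 : Summable (fun j => ((vv l α)^j)⁻¹ *
      ∫ s in (0:ℝ)..1, (dprev (fun i u => l^i * (aF l β i u)^2) j s)^2) := by
    apply summable_geom_bound
      (C := (cA l β * Real.exp (w l β))^4 * (1 - qq l β) * ((w l β)^3 / (l^2 * vv l α))⁻¹)
      (ρ := (w l β)^3 / (l^2 * vv l α)) hρ2nn hρ2lt
    intro j
    rw [abs_of_nonneg (mul_nonneg (hvj j) (intnn _))]
    cases j with
    | zero =>
      have h0 : (∫ s in (0:ℝ)..1, (dprev (fun i u => l^i * (aF l β i u)^2) 0 s)^2) = 0 := by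
        simp [dprev]
      rw [h0, mul_zero, pow_zero, mul_one]
      have h1 := hcA0 hl hb0
      have h2 := hq1' hl hb0
      have h3 := hρ2pos
      positivity
    | succ n =>
      have hv0n := pow_pos (hvpos hl (α := α)) n
      have step1 : ((vv l α)^(n+1))⁻¹ ≤ ((vv l α)^n)⁻¹ := by
        apply inv_anti₀ hv0n
        exact pow_le_pow_right₀ (hv1 hl hα0 hαβ hβ) (Nat.le_succ n)
      calc ((vv l α)^(n+1))⁻¹ * ∫ s in (0:ℝ)..1, (dprev (fun i u => l^i * (aF l β i u)^2) (n+1) s)^2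
          ≤ ((vv l α)^n)⁻¹ * ∫ s in (0:ℝ)..1, (l^n * (aF l β n s)^2)^2 := by
            apply mul_le_mul step1 (le_refl _) (intnn _) (hvj n)
        _ ≤ ((vv l α)^n)⁻¹ * ((l^n * (Ma l β n)^2)^2 * Δj l β n) :=
            mul_le_mul_of_nonneg_left (IB5 hl hb0 n) (hvj n)
        _ = ((cA l β * Real.exp (w l β))^4 * (1 - qq l β)) * (((w l β)^3/l^2)^n * ((vv l α)^n)⁻¹) := by
            rw [E5 hl hα0 hαβ hβ n]; ring
        _ = ((cA l β * Real.exp (w l β))^4 * (1 - qq l β)) * ((w l β)^3 / (l^2 * vv l α))^n := by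
            congr 1
            have h2 : ((l:ℝ)^2)^n ≠ 0 := pow_ne_zero _ (pow_ne_zero _ (hl0 hl).ne')
            have h4 : (vv l α)^n ≠ 0 := (pow_pos (hvpos hl (α := α)) n).ne'
            rw [div_pow, div_pow, mul_pow]
            field_simp
        _ = (cA l β * Real.exp (w l β))^4 * (1 - qq l β) * ((w l β)^3 / (l^2 * vv l α))⁻¹
            * ((w l β)^3 / (l^2 * vv l α))^(n+1) := by
            have hinv : ((w l β)^3 / (l^2 * vv l α))⁻¹ * ((w l β)^3 / (l^2 * vv l α)) = 1 :=
              inv_mul_cancel₀ hρ2pos.ne'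
            rw [pow_succ]
            linear_combination (-((cA l β * Real.exp (w l β))^4 * (1 - qq l β)
              * ((w l β)^3 / (l^2 * vv l α))^n)) * hinv
  have hT6 : Summable (fun j => ((vv l α)^j)⁻¹ *
      ∫ s in (0:ℝ)..1, (dprev (fun i u => l^i * (bF l β i u)^2) j s)^2) := by
    apply summable_geom_bound
      (C := (rr l)^8 * (l^2 * (rr l)^4)⁻¹)
      (ρ := l^2 * (rr l)^4) (ρ4nn hl) (ratioR4 hl)
    intro j
    have hρ4pos : (0:ℝ) < l^2 * (rr l)^4 := by
      have h0 := hl0 hl; have h5 := hr0 hl; positivity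
    rw [abs_of_nonneg (mul_nonneg (hvj j) (intnn _))]
    cases j with
    | zero =>
      have h0 : (∫ s in (0:ℝ)..1, (dprev (fun i u => l^i * (bF l β i u)^2) 0 s)^2) = 0 := by
        simp [dprev]
      rw [h0, mul_zero, pow_zero, mul_one]
      have h5 := hr0 hl
      positivity
    | succ n =>
      calc ((vv l α)^(n+1))⁻¹ * ∫ s in (0:ℝ)..1, (dprev (fun i u => l^i * (bF l β i u)^2) (n+1) s)^2
          ≤ 1 * ∫ s in (0:ℝ)..1, (l^n * (bF l β n s)^2)^2 :=
            mul_le_mul (hvj1 (n+1)) (le_refl _) (intnn _) zero_le_one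
        _ = ∫ s in (0:ℝ)..1, (l^n * (bF l β n s)^2)^2 := one_mul _
        _ ≤ (l^n * (Mb l n)^2)^2 := IB6 hl hb0 n
        _ = (rr l)^8 * (l^2 * (rr l)^4)^n := E6 hl n
        _ = (rr l)^8 * (l^2 * (rr l)^4)⁻¹ * (l^2 * (rr l)^4)^(n+1) := by
            have hinv : (l^2 * (rr l)^4)⁻¹ * (l^2 * (rr l)^4) = 1 :=
              inv_mul_cancel₀ hρ4pos.ne'
            rw [pow_succ]
            linear_combination (-((rr l)^8 * (l^2 * (rr l)^4)^n)) * hinv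
  -- combine
  have hmaj : Summable (fun j => 6*(
      (((vv l α)^j)⁻¹ * ∫ s in (0:ℝ)..1, (daF l β j s)^2)
      + (((vv l α)^j)⁻¹ * ∫ s in (0:ℝ)..1, ((vv l α)^j * aF l β j s)^2)
      + (((vv l α)^j)⁻¹ * ∫ s in (0:ℝ)..1, (l^j * aF l β j s * aF l β (j+1) s)^2)
      + (((vv l α)^j)⁻¹ * ∫ s in (0:ℝ)..1, (l^j * bF l β j s * bF l β (j+1) s)^2)
      + (((vv l α)^j)⁻¹ * ∫ s in (0:ℝ)..1, (dprev (fun i u => l^i * (aF l β i u)^2) j s)^2)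
      + (((vv l α)^j)⁻¹ * ∫ s in (0:ℝ)..1, (dprev (fun i u => l^i * (bF l β i u)^2) j s)^2))) :=
    (((((hT1.add hT2).add hT3).add hT4).add hT5).add hT6).mul_left 6
  apply Summable.of_nonneg_of_le (fun j => mul_nonneg (hvj j) (intnn _)) _ hmaj
  intro j
  -- pointwise comparison of the integrals
  have hIsum : (∫ s in (0:ℝ)..1, (fF l α β j s)^2)
      ≤ 6*((∫ s in (0:ℝ)..1, (daF l β j s)^2)
        + (∫ s in (0:ℝ)..1, ((vv l α)^j * aF l β j s)^2)
        + (∫ s in (0:ℝ)..1, (l^j * aF l β j s * aF l β (j+1) s)^2)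
        + (∫ s in (0:ℝ)..1, (l^j * bF l β j s * bF l β (j+1) s)^2)
        + (∫ s in (0:ℝ)..1, (dprev (fun i u => l^i * (aF l β i u)^2) j s)^2)
        + (∫ s in (0:ℝ)..1, (dprev (fun i u => l^i * (bF l β i u)^2) j s)^2)) := by
    have hG : Continuous (fun s => 6*((daF l β j s)^2 + ((vv l α)^j * aF l β j s)^2
        + (l^j * aF l β j s * aF l β (j+1) s)^2 + (l^j * bF l β j s * bF l β (j+1) s)^2
        + (dprev (fun i u => l^i * (aF l β i u)^2) j s)^2
        + (dprev (fun i u => l^i * (bF l β i u)^2) j s)^2)) :=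
      continuous_const.mul ((((((c1 j).add (c2 j)).add (c3 j)).add (c4 j)).add (c5 j)).add (c6 j))
    have ii : ∀ {g : ℝ → ℝ}, Continuous g → IntervalIntegrable g volume 0 1 :=
      fun hg => hg.intervalIntegrable 0 1
    have hmono := intervalIntegral.integral_mono_on (by norm_num : (0:ℝ) ≤ 1)
      (ii ((continuous_fF hl hb0 j).pow 2))
      (ii hG)
      (fun s _ => by
        show (fF l α β j s)^2 ≤ _
        rw [fF]
        exact sq6 _ _ _ _ _ _)
    apply hmono.trans (le_of_eq _)
    rw [intervalIntegral.integral_const_mul]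
    congr 1
    rw [intervalIntegral.integral_add (f := fun s => (daF l β j s)^2 + ((vv l α)^j * aF l β j s)^2 + (l^j * aF l β j s * aF l β (j+1) s)^2 + (l^j * bF l β j s * bF l β (j+1) s)^2 + (dprev (fun i u => l^i * (aF l β i u)^2) j s)^2)
        (ii ((((((c1 j).add (c2 j)).add (c3 j)).add (c4 j)).add (c5 j)))) (ii (c6 j)),
      intervalIntegral.integral_add (f := fun s => (daF l β j s)^2 + ((vv l α)^j * aF l β j s)^2 + (l^j * aF l β j s * aF l β (j+1) s)^2 + (l^j * bF l β j s * bF l β (j+1) s)^2)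
        (ii (((((c1 j).add (c2 j)).add (c3 j)).add (c4 j)))) (ii (c5 j)),
      intervalIntegral.integral_add (f := fun s => (daF l β j s)^2 + ((vv l α)^j * aF l β j s)^2 + (l^j * aF l β j s * aF l β (j+1) s)^2)
        (ii ((((c1 j).add (c2 j)).add (c3 j)))) (ii (c4 j)),
      intervalIntegral.integral_add (f := fun s => (daF l β j s)^2 + ((vv l α)^j * aF l β j s)^2)
        (ii (((c1 j).add (c2 j)))) (ii (c3 j)),
      intervalIntegral.integral_add (ii (c1 j)) (ii (c2 j))]
  calc ((vv l α)^j)⁻¹ * ∫ s in (0:ℝ)..1, (fF l α β j s)^2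
      ≤ ((vv l α)^j)⁻¹ * (6*((∫ s in (0:ℝ)..1, (daF l β j s)^2)
        + (∫ s in (0:ℝ)..1, ((vv l α)^j * aF l β j s)^2)
        + (∫ s in (0:ℝ)..1, (l^j * aF l β j s * aF l β (j+1) s)^2)
        + (∫ s in (0:ℝ)..1, (l^j * bF l β j s * bF l β (j+1) s)^2)
        + (∫ s in (0:ℝ)..1, (dprev (fun i u => l^i * (aF l β i u)^2) j s)^2)
        + (∫ s in (0:ℝ)..1, (dprev (fun i u => l^i * (bF l β i u)^2) j s)^2))) :=
        mul_le_mul_of_nonneg_left hIsum (hvj j)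
    _ = _ := by ring

end fbudget
-- ====== lamPow conversions, smoothness, derivWithin ======
section assemble
open MeasureTheory
variable (hl : 1 < l)
include hl

lemma lamPow_eq (s' : ℝ) (j : ℕ) : lamPow l j s' = (l ^ s' : ℝ)^j := by
  have h0 := (hl0 hl).le
  rw [lamPow, ← Real.rpow_natCast l j, ← Real.rpow_mul h0, mul_comm,
    Real.rpow_mul h0, Real.rpow_natCast]

lemma lam2β (j : ℕ) : lamPow l j (2*β) = (w l β)^j := by rw [lamPow_eq hl, w]
lemma lam2α (j : ℕ) : lamPow l j (2*α) = (vv l α)^j := by rw [lamPow_eq hl, vv]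
lemma lam1 (j : ℕ) : lamPow l j 1 = l^j := by rw [lamPow_eq hl, Real.rpow_one]
lemma lamneg (j : ℕ) : lamPow l j (-(2*α)) = ((vv l α)^j)⁻¹ := by
  rw [lamPow_eq hl, Real.rpow_neg (hl0 hl).le, inv_pow, vv]

variable (hβ0 : 0 < β)
include hβ0

lemma cdaF (j : ℕ) : ContDiffOn ℝ 1 (aF l β j) (Icc 0 1) := by
  apply ContDiff.contDiffOn
  rw [contDiff_one_iff_deriv]
  refine ⟨fun x => (hasDerivAt_aF hl hβ0 j x).differentiableAt, ?_⟩
  rw [show deriv (aF l β j) = daF l β j from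
    funext fun x => (hasDerivAt_aF hl hβ0 j x).deriv]
  exact continuous_daF hl hβ0 j

lemma cdbF (j : ℕ) : ContDiff ℝ 1 (bF l β j) := by
  rw [contDiff_one_iff_deriv]
  refine ⟨fun x => (hasDerivAt_bF hl hβ0 j x).differentiableAt, ?_⟩
  rw [show deriv (bF l β j) = dbF l β j from
    funext fun x => (hasDerivAt_bF hl hβ0 j x).deriv]
  exact continuous_dbF hl hβ0 j

lemma dwa (j : ℕ) {t : ℝ} (ht : t ∈ Icc (0:ℝ) 1) :
    derivWithin (aF l β j) (Icc 0 1) t = daF l β j t :=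
  ((hasDerivAt_aF hl hβ0 j t).hasDerivWithinAt).derivWithin
    (uniqueDiffOn_Icc (by norm_num : (0:ℝ) < 1) t ht)

lemma dwb (σ : ℝ) (j : ℕ) {t : ℝ} (ht : t ∈ Icc (0:ℝ) 1) :
    derivWithin (fun s => σ * bF l β j s) (Icc 0 1) t = σ * dbF l β j t :=
  (((hasDerivAt_bF hl hβ0 j t).const_mul σ).hasDerivWithinAt).derivWithin
    (uniqueDiffOn_Icc (by norm_num : (0:ℝ) < 1) t ht)

lemma bF01 : 0 < bF l β 0 1 := by
  have hz : zj l β 0 1 = 1 := by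
    rw [zj, sj, Δj]
    rw [pow_zero, pow_one, one_mul]
    exact div_self (hq1' hl hβ0).ne'
  rw [bF, hz, Sf_of_one_le le_rfl, Bj]
  simp only [pow_zero, one_mul]
  have := hr0 hl
  have := Real.exp_pos (-((w l β)^0) * 1)
  positivity

end assemble

-- ====== the Leray-Hopf property for σ = ±1 ======
section LH
open MeasureTheory
variable (hl : 1 < l) (hα0 : 0 < α) (hαβ : α ≤ β) (hβ : β < 1/2) (hβα : 3*β - α < 1)
include hl hα0 hαβ hβ hβα

lemma mainLH (σ : ℝ) (hσ : σ^2 = 1) :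
    IsLerayHopfGMHD l α β 1 (fF l α β) (aF l β) (fun j s => σ * bF l β j s) := by
  have hb0 := hβ0' hl hα0 hαβ hβ
  refine ⟨⟨?_, ?_, ?_, ?_, ?_, ?_⟩, ?_, ?_, ?_, ?_⟩
  · -- C¹ of a
    intro j; exact cdaF hl hb0 j
  · -- C¹ of σ b
    intro j
    exact (ContDiff.contDiffOn (contDiff_const.mul (cdbF hl hb0 j)))
  · -- summable a
    intro t _; exact Spa hl hα0 hαβ hβ t
  · -- summable b
    intro t ht
    simp only [mul_pow, hσ, one_mul]
    exact Spb hl hα0 hαβ hβ ht.1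
  · -- the a equation
    intro j t ht
    rw [dwa hl hb0 j ht]
    simp only [lam2α hl, lam1 hl, mul_pow, hσ, one_mul]
    rw [show fF l α β j t = fF l α β j t from rfl]
    rw [fF]
    linear_combination (l^j * bF l β j t * bF l β (j+1) t) * hσ
  · -- the b equation
    intro j t ht
    rw [dwb hl hb0 σ j ht]
    simp only [lam2β hl, lam1 hl]
    linear_combination σ * (beq hl hb0 j t)
  · -- uniform l² bound
    refine ⟨(cA l β * Real.exp (w l β))^2 * (1-(w l β / l)^2)⁻¹ + (rr l)^4 * (1-(rr l)^2)⁻¹, ?_⟩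
    intro t ht
    simp only [mul_pow, hσ, one_mul]
    exact le_trans (Mtsab hl hα0 hαβ hβ ht.1) (le_of_eq (by ring))
  · -- dissipation summability for a
    simp only [lam2α hl, intervalIntegral.integral_const_mul]
    exact SIa hl hα0 hαβ hβ
  · -- dissipation summability for b
    simp only [lam2β hl, mul_pow, hσ, one_mul, intervalIntegral.integral_const_mul]
    exact SIb hl hα0 hαβ hβ
  · -- energy (in)equality
    intro t ht
    simp only [mul_pow, hσ, one_mul, lam2α hl, lam2β hl,
      show vv l β = w l β from rfl]
    have h0 : (∑' j, ((aF l β j 0)^2 + (bF l β j 0)^2)) = 0 := by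
      rw [show (fun j => (aF l β j 0)^2 + (bF l β j 0)^2) = fun _ => (0:ℝ) from
        funext fun j => by rw [aF_zero hl hb0 j, bF_zero hl hb0 j]; norm_num]
      exact tsum_zero
    rw [h0]
    have hX : Summable (fun j => (aF l β j t)^2 + (bF l β j t)^2) :=
      (Spa hl hα0 hαβ hβ t).add (Spb hl hα0 hαβ hβ ht.1)
    have hY := SIt hl hα0 hαβ hβ ht
    have key : (∑' j, ((aF l β j t)^2 + (bF l β j t)^2))
        + 2*(∑' j, ∫ s in (0:ℝ)..t, ((vv l α)^j*(aF l β j s)^2 + (w l β)^j*(bF l β j s)^2))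
        = 2*(∑' j, ∫ s in (0:ℝ)..t, fF l α β j s * aF l β j s) := by
      calc (∑' j, ((aF l β j t)^2 + (bF l β j t)^2))
          + 2*(∑' j, ∫ s in (0:ℝ)..t, ((vv l α)^j*(aF l β j s)^2 + (w l β)^j*(bF l β j s)^2))
          = (∑' j, ((aF l β j t)^2 + (bF l β j t)^2))
            + (∑' j, 2*∫ s in (0:ℝ)..t, ((vv l α)^j*(aF l β j s)^2 + (w l β)^j*(bF l β j s)^2)) := by
            rw [tsum_mul_left]
        _ = ∑' j, (((aF l β j t)^2 + (bF l β j t)^2)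
            + 2*∫ s in (0:ℝ)..t, ((vv l α)^j*(aF l β j s)^2 + (w l β)^j*(bF l β j s)^2)) :=
            (Summable.tsum_add hX (hY.mul_left 2)).symm
        _ = ∑' j, 2*(∫ s in (0:ℝ)..t, fF l α β j s * aF l β j s) := by
            apply tsum_congr
            intro j
            have := shell_identity hl hb0 (α := α) j t
            linarith
        _ = 2*(∑' j, ∫ s in (0:ℝ)..t, fF l α β j s * aF l β j s) := tsum_mul_left
    linarith [key]

end LH
end NUG

/-- non-uniqueness for the dyadic model of the generalized MHD
system with `0 < α ≤ β < 1/2` and `3β − α < 1`: with zero initial data there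
exist `T > 0` and a forcing `f ∈ L²(0,T; H^{-α})` such that the model has at
least two distinct Leray-Hopf solutions on `[0,T]`. -/
theorem nonuniqueness_LerayHopf_dyadic_gMHD
    (l α β : ℝ) (hl : 1 < l) (hα : 0 < α) (hαβ : α ≤ β) (hβ : β < 1 / 2)
    (hβα : 3 * β - α < 1) :
    ∃ (T : ℝ) (f : ℕ → ℝ → ℝ), 0 < T ∧
      (∀ j, IntervalIntegrable (fun t => (f j t) ^ 2) volume 0 T) ∧
      (Summable fun j => lamPow l j (-(2 * α)) * ∫ t in (0:ℝ)..T, (f j t) ^ 2) ∧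
      ∃ a b a' b' : ℕ → ℝ → ℝ,
        IsLerayHopfGMHD l α β T f a b ∧
        IsLerayHopfGMHD l α β T f a' b' ∧
        (∀ j, a j 0 = 0) ∧ (∀ j, b j 0 = 0) ∧
        (∀ j, a' j 0 = 0) ∧ (∀ j, b' j 0 = 0) ∧
        (¬ ∀ j, ∀ t ∈ Icc 0 T, a j t = a' j t ∧ b j t = b' j t) := by
  have hβ2 : β < 1/2 := hβ
  have hb0 : 0 < β := lt_of_lt_of_le hα hαβ
  refine ⟨1, NUG.fF l α β, by norm_num, ?_, ?_,
    NUG.aF l β, (fun j s => (1:ℝ) * NUG.bF l β j s),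
    NUG.aF l β, (fun j s => (-1:ℝ) * NUG.bF l β j s), ?_, ?_, ?_, ?_, ?_, ?_, ?_⟩
  · intro j
    exact ((NUG.continuous_fF hl hb0 j).pow 2).intervalIntegrable 0 1
  · simp only [NUG.lamneg hl]
    exact NUG.SIf hl hα hαβ hβ hβα
  · exact NUG.mainLH hl hα hαβ hβ hβα 1 (by norm_num)
  · exact NUG.mainLH hl hα hαβ hβ hβα (-1) (by norm_num)
  · intro j; exact NUG.aF_zero hl hb0 j
  · intro j; show (1:ℝ) * NUG.bF l β j 0 = 0; rw [NUG.bF_zero hl hb0 j, mul_zero]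
  · intro j; exact NUG.aF_zero hl hb0 j
  · intro j; show (-1:ℝ) * NUG.bF l β j 0 = 0; rw [NUG.bF_zero hl hb0 j, mul_zero]
  · intro hcontra
    have h1 := (hcontra 0 1 ⟨zero_le_one, le_rfl⟩).2
    have h2 := NUG.bF01 hl hb0
    simp only at h1
    nlinarith [h1, h2]
end
end

section
/- With λ > 1, θ > 2, ρ > λ^θ, p, q ∈ C₀^∞(0,1), and h₁, h₂, h₃ a solution on [0,1] of the gluing ODE system with h₁(1) = ρc₀ and h₂(1) = ρd₀, the piecewise-defined functions a_j and b_j satisfy the magnetic-field equation d/dt b_j(t) + λ_j² b_j(t) − λ_j^θ a_j(t) b_{j+1}(t) + λ_j^θ b_j(t) a_{j+1}(t) = 0 for all j ≥ 0 and all t in each of the open intervals (0, t_{j+1}), (t_{j+1}, t_j), (t_j, t_{j−1}), (t_{j−1}, t_{j−2}), (t_{j−2}, T) of its piecewise definition. -/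
open Real MeasureTheory Set

noncomputable section

/-- `lamZ l k s = λ_k^s` where `λ_k = l^k`, for an integer index `k`. -/
def lamZ (l : ℝ) (k : ℤ) (s : ℝ) : ℝ := (l ^ k : ℝ) ^ s

/-- The partition points `t_k = λ_k^s ⬝ T` of `(0,T)` (here `s` is the scaling
exponent, e.g. `s = -2`, so that `t_k = λ_k^{-2} T`). -/
def tgrid (l s T : ℝ) (k : ℤ) : ℝ := lamZ l k s * T

lemma lamZ_pos {l : ℝ} (hl : 0 < l) (k : ℤ) (s : ℝ) : 0 < lamZ l k s :=
  Real.rpow_pos_of_pos (zpow_pos hl k) s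

lemma lamZ_rpow {l : ℝ} (hl : 0 < l) (k : ℤ) (s : ℝ) :
    lamZ l k s = l ^ ((k : ℝ) * s) := by
  rw [lamZ, ← Real.rpow_intCast l k, ← Real.rpow_mul hl.le]

lemma lamZ_mul {l : ℝ} (hl : 0 < l) (k : ℤ) (s u : ℝ) :
    lamZ l k s * lamZ l k u = lamZ l k (s + u) :=
  (Real.rpow_add (zpow_pos hl k) s u).symm

lemma tgrid_step {l T : ℝ} (hl : 1 < l) (hT : T = 1/(l^2-1)) (k : ℤ) :
    tgrid l (-2) T (k-1) = tgrid l (-2) T k + lamZ l k (-2) := by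
  have hl0 : (0:ℝ) < l := lt_trans one_pos hl
  have h2 : (0:ℝ) < l^2 - 1 := by nlinarith
  have e : lamZ l (k-1) (-2) = lamZ l k (-2) * l^2 := by
    rw [lamZ_rpow hl0, lamZ_rpow hl0,
      show (l:ℝ)^2 = l ^ ((2:ℕ):ℝ) from (Real.rpow_natCast l 2).symm,
      ← Real.rpow_add hl0]
    congr 1; push_cast; ring
  rw [tgrid, tgrid, e, hT]
  have h2' : l^2 - 1 ≠ 0 := ne_of_gt h2
  field_simp
  ring

lemma mem01 {l T : ℝ} (hl : 1 < l) (hT : T = 1/(l^2-1)) (k : ℤ) {t : ℝ}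
    (ht : t ∈ Ioo (tgrid l (-2) T k) (tgrid l (-2) T (k-1))) :
    lamZ l k 2 * (t - tgrid l (-2) T k) ∈ Icc (0:ℝ) 1 := by
  have hl0 : (0:ℝ) < l := lt_trans one_pos hl
  have hpos := lamZ_pos hl0 k 2
  have hstep := tgrid_step hl hT k
  constructor
  · exact mul_nonneg hpos.le (by linarith [ht.1])
  · have h1 : t - tgrid l (-2) T k ≤ lamZ l k (-2) := by
      have := ht.2; linarith
    calc lamZ l k 2 * (t - tgrid l (-2) T k) ≤ lamZ l k 2 * lamZ l k (-2) :=
          mul_le_mul_of_nonneg_left h1 hpos.le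
      _ = 1 := by rw [lamZ_mul hl0]; norm_num [lamZ]

lemma deriv_of_eventually {b h : ℝ → ℝ} (hh : Differentiable ℝ h)
    {U : Set ℝ} (hU : IsOpen U) {t C m c : ℝ} (htU : t ∈ U)
    (heq : ∀ u ∈ U, b u = C * h (m * (u - c))) :
    deriv b t = C * (deriv h (m * (t - c)) * m) := by
  have hg : HasDerivAt (fun u : ℝ => m * (u - c)) m t := by
    simpa using ((hasDerivAt_id t).sub_const c).const_mul m
  have hf : HasDerivAt (fun u => C * h (m * (u - c)))
      (C * (deriv h (m * (t - c)) * m)) t := by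
    exact (((hh (m * (t - c))).hasDerivAt.comp t hg)).const_mul C
  have hev : b =ᶠ[nhds t] fun u => C * h (m * (u - c)) :=
    Filter.eventually_of_mem (hU.mem_nhds htU) heq
  rw [hev.deriv_eq, hf.deriv]

lemma deriv_zero_of_eventually {b : ℝ → ℝ} {U : Set ℝ} (hU : IsOpen U) {t : ℝ}
    (htU : t ∈ U) (heq : ∀ u ∈ U, b u = 0) : deriv b t = 0 := by
  have hev : b =ᶠ[nhds t] fun _ => (0:ℝ) :=
    Filter.eventually_of_mem (hU.mem_nhds htU) heq
  rw [hev.deriv_eq, deriv_const]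

/-- the piecewise-constructed functions `a_j`, `b_j` (built from
`p, q ∈ C₀^∞(0,1)`, `ρ > λ^θ`, and a solution `h₁, h₂, h₃` of the gluing ODE
system with `h₁(1) = ρc₀`, `h₂(1) = ρd₀`) satisfy the magnetic-field equation
`b_j' + λ_j² b_j − λ_j^θ a_j b_{j+1} + λ_j^θ b_j a_{j+1} = 0` on each of the
open intervals of the piecewise definition. -/
theorem magnetic_equation_piecewise_construction
    (l θ ρ c0 d0 : ℝ) (hl : 1 < l) (hθ : 2 < θ) (hρ : l ^ θ < ρ)
    (p q h1 h2 h3 : ℝ → ℝ)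
    (hp : ContDiff ℝ (⊤ : ℕ∞) p) (hpsupp : ∀ s, s ∉ Ioo (0:ℝ) 1 → p s = 0)
    (hq : ContDiff ℝ (⊤ : ℕ∞) q) (hqsupp : ∀ s, s ∉ Ioo (0:ℝ) 1 → q s = 0)
    (hh1 : ContDiff ℝ (⊤ : ℕ∞) h1) (hh2 : ContDiff ℝ (⊤ : ℕ∞) h2)
    (hh3 : ContDiff ℝ (⊤ : ℕ∞) h3)
    (hode1 : ∀ s ∈ Icc (0:ℝ) 1,
      deriv h1 s + (l ^ (-2 : ℝ) - l ^ (-θ) * q s) * h1 s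
        - l ^ (-θ) * p s * h2 s = 0)
    (hode2 : ∀ s ∈ Icc (0:ℝ) 1, deriv h2 s + h2 s + q s * h3 s = 0)
    (hode3 : ∀ s ∈ Icc (0:ℝ) 1, deriv h3 s + l ^ 2 * h3 s = 0)
    (hinit1 : h1 0 = 0) (hinit2 : h2 0 = c0) (hinit3 : h3 0 = d0)
    (hglue1 : h1 1 = ρ * c0) (hglue2 : h2 1 = ρ * d0)
    (T : ℝ) (hT : T = 1 / (l ^ 2 - 1))
    (a b : ℕ → ℝ → ℝ)
    (ha0 : ∀ (j : ℕ) (t : ℝ), t < tgrid l (-2) T ((j : ℤ) + 1) → a j t = 0)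
    (hap : ∀ (j : ℕ), ∀ t ∈ Ioo (tgrid l (-2) T ((j : ℤ) + 1)) (tgrid l (-2) T (j : ℤ)),
      a j t = lamZ l ((j : ℤ) + 1) (2 - θ)
        * p (lamZ l ((j : ℤ) + 1) 2 * (t - tgrid l (-2) T ((j : ℤ) + 1))))
    (haq : ∀ (j : ℕ), ∀ t ∈ Ioo (tgrid l (-2) T (j : ℤ)) (tgrid l (-2) T ((j : ℤ) - 1)),
      a j t = -(lamZ l (j : ℤ) (2 - θ))
        * q (lamZ l (j : ℤ) 2 * (t - tgrid l (-2) T (j : ℤ))))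
    (ha1 : ∀ (j : ℕ) (t : ℝ), tgrid l (-2) T ((j : ℤ) - 1) < t → a j t = 0)
    (hb0 : ∀ (j : ℕ) (t : ℝ), t < tgrid l (-2) T ((j : ℤ) + 1) → b j t = 0)
    (hb1 : ∀ (j : ℕ), ∀ t ∈ Ioo (tgrid l (-2) T ((j : ℤ) + 1)) (tgrid l (-2) T (j : ℤ)),
      b j t = ρ ^ (-(j : ℤ) - 1)
        * h1 (lamZ l ((j : ℤ) + 1) 2 * (t - tgrid l (-2) T ((j : ℤ) + 1))))
    (hb2 : ∀ (j : ℕ), ∀ t ∈ Ioo (tgrid l (-2) T (j : ℤ)) (tgrid l (-2) T ((j : ℤ) - 1)),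
      b j t = ρ ^ (-(j : ℤ))
        * h2 (lamZ l (j : ℤ) 2 * (t - tgrid l (-2) T (j : ℤ))))
    (hb3 : ∀ (j : ℕ), ∀ t ∈ Ioo (tgrid l (-2) T ((j : ℤ) - 1)) (tgrid l (-2) T ((j : ℤ) - 2)),
      b j t = ρ ^ (-(j : ℤ) + 1)
        * h3 (lamZ l ((j : ℤ) - 1) 2 * (t - tgrid l (-2) T ((j : ℤ) - 1))))
    (hb4 : ∀ (j : ℕ) (t : ℝ), tgrid l (-2) T ((j : ℤ) - 2) < t →
      b j t = ρ ^ (-(j : ℤ) + 1) * h3 1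
        * Real.exp (-(lamZ l (j : ℤ) 2) * (t - tgrid l (-2) T ((j : ℤ) - 2)))) :
    ∀ (j : ℕ) (t : ℝ),
      (t ∈ Ioo (0 : ℝ) (tgrid l (-2) T ((j : ℤ) + 1)) ∨
       t ∈ Ioo (tgrid l (-2) T ((j : ℤ) + 1)) (tgrid l (-2) T (j : ℤ)) ∨
       t ∈ Ioo (tgrid l (-2) T (j : ℤ)) (tgrid l (-2) T ((j : ℤ) - 1)) ∨
       t ∈ Ioo (tgrid l (-2) T ((j : ℤ) - 1)) (tgrid l (-2) T ((j : ℤ) - 2)) ∨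
       t ∈ Ioo (tgrid l (-2) T ((j : ℤ) - 2)) T) →
      deriv (b j) t + lamZ l (j : ℤ) 2 * b j t
        - lamZ l (j : ℤ) θ * a j t * b (j + 1) t
        + lamZ l (j : ℤ) θ * b j t * a (j + 1) t = 0 := by
  intro j t hcase
  have hl0 : (0:ℝ) < l := lt_trans one_pos hl
  have e1 : ((j+1:ℕ):ℤ) = (j:ℤ)+1 := by push_cast; ring
  rcases hcase with h|h|h|h|h
  · -- t < t_{j+1}: everything vanishes
    have hd : deriv (b j) t = 0 :=
      deriv_zero_of_eventually isOpen_Iio h.2 (fun u hu => hb0 j u hu)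
    rw [hd, hb0 j t h.2, ha0 j t h.2]
    ring
  · -- t ∈ (t_{j+1}, t_j)
    have hsI : lamZ l ((j:ℤ)+1) 2 * (t - tgrid l (-2) T ((j:ℤ)+1)) ∈ Icc (0:ℝ) 1 :=
      mem01 hl hT ((j:ℤ)+1) (by simpa using h)
    have hd : deriv (b j) t = ρ ^ (-(j:ℤ) - 1) *
        (deriv h1 (lamZ l ((j:ℤ)+1) 2 * (t - tgrid l (-2) T ((j:ℤ)+1))) * lamZ l ((j:ℤ)+1) 2) :=
      deriv_of_eventually (hh1.differentiable (by simp)) isOpen_Ioo h (fun u hu => hb1 j u hu)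
    have hmem' : t ∈ Ioo (tgrid l (-2) T ((j+1:ℕ):ℤ)) (tgrid l (-2) T (((j+1:ℕ):ℤ)-1)) := by
      rw [e1]; simpa using h
    have vb2 := hb2 (j+1) t hmem'
    have va2 := haq (j+1) t hmem'
    rw [e1] at vb2 va2
    have ode := hode1 _ hsI
    have R1 : lamZ l (j:ℤ) 2 = lamZ l ((j:ℤ)+1) 2 * l ^ (-2:ℝ) := by
      rw [lamZ_rpow hl0, lamZ_rpow hl0, ← Real.rpow_add hl0]
      congr 1; push_cast; ring
    have R2 : lamZ l (j:ℤ) θ * lamZ l ((j:ℤ)+1) (2-θ) = lamZ l ((j:ℤ)+1) 2 * l ^ (-θ) := by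
      rw [lamZ_rpow hl0, lamZ_rpow hl0, lamZ_rpow hl0, ← Real.rpow_add hl0, ← Real.rpow_add hl0]
      congr 1; push_cast; ring
    have eρ : ρ ^ (-((j:ℤ)+1)) = ρ ^ (-(j:ℤ) - 1) := by
      congr 1; ring
    rw [hd, hb1 j t h, hap j t h, vb2, va2, eρ]
    linear_combination (ρ ^ (-(j:ℤ) - 1) * lamZ l ((j:ℤ)+1) 2) * ode
      + (ρ ^ (-(j:ℤ) - 1) * h1 (lamZ l ((j:ℤ)+1) 2 * (t - tgrid l (-2) T ((j:ℤ)+1)))) * R1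
      - (ρ ^ (-(j:ℤ) - 1) *
          (q (lamZ l ((j:ℤ)+1) 2 * (t - tgrid l (-2) T ((j:ℤ)+1))) *
            h1 (lamZ l ((j:ℤ)+1) 2 * (t - tgrid l (-2) T ((j:ℤ)+1)))
          + p (lamZ l ((j:ℤ)+1) 2 * (t - tgrid l (-2) T ((j:ℤ)+1))) *
            h2 (lamZ l ((j:ℤ)+1) 2 * (t - tgrid l (-2) T ((j:ℤ)+1))))) * R2
  · -- t ∈ (t_j, t_{j-1})
    have hsI : lamZ l (j:ℤ) 2 * (t - tgrid l (-2) T (j:ℤ)) ∈ Icc (0:ℝ) 1 :=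
      mem01 hl hT (j:ℤ) h
    have hd : deriv (b j) t = ρ ^ (-(j:ℤ)) *
        (deriv h2 (lamZ l (j:ℤ) 2 * (t - tgrid l (-2) T (j:ℤ))) * lamZ l (j:ℤ) 2) :=
      deriv_of_eventually (hh2.differentiable (by simp)) isOpen_Ioo h (fun u hu => hb2 j u hu)
    have hmem' : t ∈ Ioo (tgrid l (-2) T (((j+1:ℕ):ℤ)-1)) (tgrid l (-2) T (((j+1:ℕ):ℤ)-2)) := by
      rw [e1]
      constructor
      · simpa using h.1
      · have : ((j:ℤ)+1-2) = (j:ℤ)-1 := by ring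
        rw [this]; exact h.2
    have vb3 := hb3 (j+1) t hmem'
    rw [e1] at vb3
    have va2 : a (j+1) t = 0 := by
      apply ha1 (j+1) t
      rw [e1]; simpa using h.1
    have ode := hode2 _ hsI
    have R3 : lamZ l (j:ℤ) θ * lamZ l (j:ℤ) (2-θ) = lamZ l (j:ℤ) 2 := by
      rw [lamZ_mul hl0]; norm_num
    have eρ : ρ ^ (-((j:ℤ)+1)+1) = ρ ^ (-(j:ℤ)) := by congr 1; ring
    have es : ((j:ℤ)+1-1) = (j:ℤ) := by ring
    rw [es] at vb3
    rw [hd, hb2 j t h, haq j t h, vb3, va2, eρ]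
    linear_combination (ρ ^ (-(j:ℤ)) * lamZ l (j:ℤ) 2) * ode
      + (ρ ^ (-(j:ℤ)) * q (lamZ l (j:ℤ) 2 * (t - tgrid l (-2) T (j:ℤ))) *
          h3 (lamZ l (j:ℤ) 2 * (t - tgrid l (-2) T (j:ℤ)))) * R3
  · -- t ∈ (t_{j-1}, t_{j-2})
    have hmem : t ∈ Ioo (tgrid l (-2) T ((j:ℤ)-1)) (tgrid l (-2) T (((j:ℤ)-1)-1)) := by
      have : ((j:ℤ)-1-1) = (j:ℤ)-2 := by ring
      rw [this]; exact h
    have hsI : lamZ l ((j:ℤ)-1) 2 * (t - tgrid l (-2) T ((j:ℤ)-1)) ∈ Icc (0:ℝ) 1 :=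
      mem01 hl hT ((j:ℤ)-1) hmem
    have hd : deriv (b j) t = ρ ^ (-(j:ℤ)+1) *
        (deriv h3 (lamZ l ((j:ℤ)-1) 2 * (t - tgrid l (-2) T ((j:ℤ)-1))) * lamZ l ((j:ℤ)-1) 2) :=
      deriv_of_eventually (hh3.differentiable (by simp)) isOpen_Ioo h (fun u hu => hb3 j u hu)
    have va : a j t = 0 := ha1 j t h.1
    have va2 : a (j+1) t = 0 := by
      apply ha1 (j+1) t
      rw [e1]
      have hstep := tgrid_step hl hT (j:ℤ)
      have hpos := lamZ_pos hl0 (j:ℤ) (-2)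
      have : ((j:ℤ)+1-1) = (j:ℤ) := by ring
      rw [this]
      have := h.1
      linarith
    have ode := hode3 _ hsI
    have R4 : lamZ l (j:ℤ) 2 = lamZ l ((j:ℤ)-1) 2 * l ^ 2 := by
      rw [lamZ_rpow hl0, lamZ_rpow hl0,
        show (l:ℝ)^2 = l ^ ((2:ℕ):ℝ) from (Real.rpow_natCast l 2).symm,
        ← Real.rpow_add hl0]
      congr 1; push_cast; ring
    rw [hd, hb3 j t h, va, va2]
    linear_combination (ρ ^ (-(j:ℤ)+1) * lamZ l ((j:ℤ)-1) 2) * ode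
      + (ρ ^ (-(j:ℤ)+1) * h3 (lamZ l ((j:ℤ)-1) 2 * (t - tgrid l (-2) T ((j:ℤ)-1)))) * R4
  · -- t > t_{j-2}
    have hd : deriv (b j) t = (ρ ^ (-(j:ℤ)+1) * h3 1) *
        (deriv Real.exp (-(lamZ l (j:ℤ) 2) * (t - tgrid l (-2) T ((j:ℤ)-2))) *
          (-(lamZ l (j:ℤ) 2))) := by
      apply deriv_of_eventually Real.differentiable_exp isOpen_Ioi h.1
      intro u hu
      exact hb4 j u hu
    rw [Real.deriv_exp] at hd
    -- grid inequalities: t_j < t_{j-1} < t_{j-2} < t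
    have hstep1 := tgrid_step hl hT (j:ℤ)
    have hstep2 : tgrid l (-2) T ((j:ℤ)-2) = tgrid l (-2) T ((j:ℤ)-1) + lamZ l ((j:ℤ)-1) (-2) := by
      have := tgrid_step hl hT ((j:ℤ)-1)
      have e : ((j:ℤ)-1-1) = (j:ℤ)-2 := by ring
      rw [e] at this; exact this
    have hp1 := lamZ_pos hl0 (j:ℤ) (-2)
    have hp2 := lamZ_pos hl0 ((j:ℤ)-1) (-2)
    have va : a j t = 0 := by
      apply ha1 j t
      have := h.1; linarith
    have va2 : a (j+1) t = 0 := by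
      apply ha1 (j+1) t
      rw [e1]
      have e : ((j:ℤ)+1-1) = (j:ℤ) := by ring
      rw [e]
      have := h.1; linarith
    rw [hd, hb4 j t h.1, va, va2]
    ring
end
end

section
/- With λ > 1, θ > 2, ρ > λ^θ, p, q ∈ C₀^∞(0,1), and a_j, b_j the piecewise-constructed functions, define the forcing f_j = d/dt a_j + λ_j² a_j + λ_j^θ a_j a_{j+1} + λ_j^θ b_j b_{j+1} − λ_{j−1}^θ a_{j−1}² − λ_{j−1}^θ b_{j−1}² for all j ≥ 0. Then ∑_{j≥0} λ_j^{−2} ∫₀ᵀ f_j²(t) dt < ∞. -/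
set_option maxHeartbeats 1000000


open Real MeasureTheory Set

noncomputable section

private lemma hasDerivAt_piece {v : ℝ → ℝ} (hv : ContDiff ℝ (⊤:ℕ∞) v) (c d e t : ℝ) :
    HasDerivAt (fun x : ℝ => c * v (d * (x - e))) (c * (deriv v (d * (t - e)) * d)) t := by
  have h1 : HasDerivAt (fun x : ℝ => d * (x - e)) d t := by
    simpa using ((hasDerivAt_id t).sub_const e).const_mul d
  have h2 : HasDerivAt (fun x : ℝ => v (d * (x - e))) (deriv v (d * (t - e)) * d) t :=
    ((hv.differentiable (by simp) (d * (t - e))).hasDerivAt).comp t h1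
  exact h2.const_mul c

private lemma six_term_bound {X1 X2 X3 X4 X5 X6 B1 B2 B3 B4 B5 B6 : ℝ}
    (h1 : |X1| ≤ B1) (h2 : |X2| ≤ B2) (h3 : |X3| ≤ B3) (h4 : |X4| ≤ B4)
    (h5 : |X5| ≤ B5) (h6 : |X6| ≤ B6) :
    |X1 + X2 + X3 + X4 - X5 - X6| ≤ B1 + B2 + B3 + B4 + B5 + B6 := by
  have a1 : |X1 + X2 + X3 + X4 - X5 - X6| ≤ |X1 + X2 + X3 + X4 - X5| + |X6| := abs_sub _ _
  have a2 : |X1 + X2 + X3 + X4 - X5| ≤ |X1 + X2 + X3 + X4| + |X5| := abs_sub _ _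
  have a3 : |X1 + X2 + X3 + X4| ≤ |X1 + X2 + X3| + |X4| := abs_add_le _ _
  have a4 : |X1 + X2 + X3| ≤ |X1 + X2| + |X3| := abs_add_le _ _
  have a5 : |X1 + X2| ≤ |X1| + |X2| := abs_add_le _ _
  linarith

private lemma deriv_eq_on_open {u g : ℝ → ℝ} {s : Set ℝ} (hs : IsOpen s) {t : ℝ} (ht : t ∈ s)
    (h : ∀ x ∈ s, u x = g x) : deriv u t = deriv g t := by
  apply Filter.EventuallyEq.deriv_eq
  filter_upwards [hs.mem_nhds ht] using h


/-- for the piecewise-constructed functions `a_j`, `b_j` (with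
`λ > 1`, `θ > 2`, `ρ > λ^θ`, `p, q ∈ C₀^∞(0,1)`), the forcing
`f_j = a_j' + λ_j² a_j + λ_j^θ a_j a_{j+1} + λ_j^θ b_j b_{j+1} − λ_{j−1}^θ a_{j−1}² − λ_{j−1}^θ b_{j−1}²`
satisfies `∑_j λ_j^{−2} ∫₀ᵀ f_j² dt < ∞`. -/
theorem forcing_summability_piecewise_construction_MHD
    (l θ ρ c0 d0 : ℝ) (hl : 1 < l) (hθ : 2 < θ) (hρ : l ^ θ < ρ)
    (p q h1 h2 h3 : ℝ → ℝ)
    (hp : ContDiff ℝ (⊤ : ℕ∞) p) (hpsupp : ∀ s, s ∉ Ioo (0:ℝ) 1 → p s = 0)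
    (hq : ContDiff ℝ (⊤ : ℕ∞) q) (hqsupp : ∀ s, s ∉ Ioo (0:ℝ) 1 → q s = 0)
    (hh1 : ContDiff ℝ (⊤ : ℕ∞) h1) (hh2 : ContDiff ℝ (⊤ : ℕ∞) h2)
    (hh3 : ContDiff ℝ (⊤ : ℕ∞) h3)
    (hode1 : ∀ s ∈ Icc (0:ℝ) 1,
      deriv h1 s + (l ^ (-2 : ℝ) - l ^ (-θ) * q s) * h1 s
        - l ^ (-θ) * p s * h2 s = 0)
    (hode2 : ∀ s ∈ Icc (0:ℝ) 1, deriv h2 s + h2 s + q s * h3 s = 0)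
    (hode3 : ∀ s ∈ Icc (0:ℝ) 1, deriv h3 s + l ^ 2 * h3 s = 0)
    (hinit1 : h1 0 = 0) (hinit2 : h2 0 = c0) (hinit3 : h3 0 = d0)
    (hglue1 : h1 1 = ρ * c0) (hglue2 : h2 1 = ρ * d0)
    (T : ℝ) (hT : T = 1 / (l ^ 2 - 1))
    (a b : ℕ → ℝ → ℝ)
    (hacont : ∀ j, Continuous (a j)) (hbcont : ∀ j, Continuous (b j))
    (ha0 : ∀ (j : ℕ) (t : ℝ), t < tgrid l (-2) T ((j : ℤ) + 1) → a j t = 0)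
    (hap : ∀ (j : ℕ), ∀ t ∈ Ioo (tgrid l (-2) T ((j : ℤ) + 1)) (tgrid l (-2) T (j : ℤ)),
      a j t = lamZ l ((j : ℤ) + 1) (2 - θ)
        * p (lamZ l ((j : ℤ) + 1) 2 * (t - tgrid l (-2) T ((j : ℤ) + 1))))
    (haq : ∀ (j : ℕ), ∀ t ∈ Ioo (tgrid l (-2) T (j : ℤ)) (tgrid l (-2) T ((j : ℤ) - 1)),
      a j t = -(lamZ l (j : ℤ) (2 - θ))
        * q (lamZ l (j : ℤ) 2 * (t - tgrid l (-2) T (j : ℤ))))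
    (ha1 : ∀ (j : ℕ) (t : ℝ), tgrid l (-2) T ((j : ℤ) - 1) < t → a j t = 0)
    (hb0 : ∀ (j : ℕ) (t : ℝ), t < tgrid l (-2) T ((j : ℤ) + 1) → b j t = 0)
    (hb1 : ∀ (j : ℕ), ∀ t ∈ Ioo (tgrid l (-2) T ((j : ℤ) + 1)) (tgrid l (-2) T (j : ℤ)),
      b j t = ρ ^ (-(j : ℤ) - 1)
        * h1 (lamZ l ((j : ℤ) + 1) 2 * (t - tgrid l (-2) T ((j : ℤ) + 1))))
    (hb2 : ∀ (j : ℕ), ∀ t ∈ Ioo (tgrid l (-2) T (j : ℤ)) (tgrid l (-2) T ((j : ℤ) - 1)),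
      b j t = ρ ^ (-(j : ℤ))
        * h2 (lamZ l (j : ℤ) 2 * (t - tgrid l (-2) T (j : ℤ))))
    (hb3 : ∀ (j : ℕ), ∀ t ∈ Ioo (tgrid l (-2) T ((j : ℤ) - 1)) (tgrid l (-2) T ((j : ℤ) - 2)),
      b j t = ρ ^ (-(j : ℤ) + 1)
        * h3 (lamZ l ((j : ℤ) - 1) 2 * (t - tgrid l (-2) T ((j : ℤ) - 1))))
    (hb4 : ∀ (j : ℕ) (t : ℝ), tgrid l (-2) T ((j : ℤ) - 2) < t →
      b j t = ρ ^ (-(j : ℤ) + 1) * h3 1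
        * Real.exp (-(lamZ l (j : ℤ) 2) * (t - tgrid l (-2) T ((j : ℤ) - 2)))) :
    ∀ f : ℕ → ℝ → ℝ,
      (∀ (j : ℕ) (t : ℝ),
        f j t = deriv (a j) t + lamZ l (j : ℤ) 2 * a j t
          + lamZ l (j : ℤ) θ * a j t * a (j + 1) t
          + lamZ l (j : ℤ) θ * b j t * b (j + 1) t
          - dprev (fun i t => lamZ l (i : ℤ) θ * (a i t) ^ 2) j t
          - dprev (fun i t => lamZ l (i : ℤ) θ * (b i t) ^ 2) j t) →
      (∀ j, IntervalIntegrable (fun t => (f j t) ^ 2) volume 0 T) ∧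
      Summable (fun j : ℕ => lamZ l (j : ℤ) (-2) * ∫ t in (0:ℝ)..T, (f j t) ^ 2) := by
  intro f hf
  have hl0 : (0:ℝ) < l := by linarith
  have hρ1 : (1:ℝ) < ρ := by
    have h1 : (1:ℝ) < l ^ θ := (Real.one_lt_rpow_iff_of_pos hl0).mpr (Or.inl ⟨hl, by linarith⟩)
    linarith
  have hρ0 : (0:ℝ) < ρ := by linarith
  have hT0 : 0 < T := by
    rw [hT]; apply div_pos one_pos; nlinarith
  set L : ℝ → ℝ := fun e => l ^ e with hLdef
  have hLpos : ∀ e, 0 < L e := fun e => Real.rpow_pos_of_pos hl0 e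
  have hLmul : ∀ e e', L e * L e' = L (e + e') := fun e e' => (Real.rpow_add hl0 e e').symm
  have hL0 : L 0 = 1 := Real.rpow_zero l
  have hLle : ∀ {e e' : ℝ}, e ≤ e' → L e ≤ L e' := fun h => (Real.rpow_le_rpow_left_iff hl).mpr h
  have hLlt : ∀ {e e' : ℝ}, e < e' → L e < L e' := fun h => (Real.rpow_lt_rpow_left_iff hl).mpr h
  have hLpow : ∀ (c : ℝ) (n : ℕ), (L c) ^ n = L (c * n) := by
    intro c n
    rw [hLdef]
    rw [← Real.rpow_natCast (l ^ c) n, ← Real.rpow_mul hl0.le]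
  have hlamZ : ∀ (k : ℤ) (s : ℝ), lamZ l k s = L ((k:ℝ) * s) := by
    intro k s
    simp only [lamZ, hLdef]
    rw [← Real.rpow_intCast l k, ← Real.rpow_mul hl0.le]
  have hlamZpos : ∀ (k : ℤ) (s : ℝ), 0 < lamZ l k s := by
    intro k s; rw [hlamZ]; exact hLpos _
  have hlamabs : ∀ (k : ℤ) (s : ℝ), |lamZ l k s| = L ((k:ℝ)*s) := by
    intro k s; rw [hlamZ, abs_of_pos (hLpos _)]
  set gp : ℤ → ℝ := tgrid l (-2) T with hgpdef
  have hgp : ∀ k : ℤ, gp k = L ((-2) * (k:ℝ)) * T := by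
    intro k
    show tgrid l (-2) T k = _
    unfold tgrid
    rw [hlamZ, mul_comm (k:ℝ) (-2)]
  have hgp_lt : ∀ k k' : ℤ, k < k' → gp k' < gp k := by
    intro k k' h
    rw [hgp, hgp]
    have hkk : (k:ℝ) < (k':ℝ) := by exact_mod_cast h
    exact mul_lt_mul_of_pos_right (hLlt (by nlinarith)) hT0
  have hgp_pos : ∀ k : ℤ, 0 < gp k := fun k => by rw [hgp]; exact mul_pos (hLpos _) hT0
  have hL2 : L 2 = l ^ (2:ℕ) := by
    have := Real.rpow_natCast l 2
    simpa [hLdef] using this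
  have hTfact : (L 2 - 1) * T = 1 := by
    rw [hL2, hT]
    have : l ^ (2:ℕ) - 1 ≠ 0 := by nlinarith
    field_simp
  have hlen : ∀ k : ℤ, gp k - gp (k+1) = L ((-2) * ((k:ℝ)+1)) := by
    intro k
    rw [hgp, hgp]
    push_cast
    have hsplit : L ((-2) * ((k:ℝ))) = L ((-2) * ((k:ℝ)+1)) * L 2 := by rw [hLmul]; ring_nf
    rw [hsplit]
    linear_combination (L ((-2) * ((k:ℝ)+1))) * hTfact
  have harg : ∀ (k : ℤ) (t : ℝ), t ∈ Ioo (gp (k+1)) (gp k) →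
      lamZ l (k+1) 2 * (t - gp (k+1)) ∈ Ioo (0:ℝ) 1 := by
    intro k t ht
    have hl2 : lamZ l (k+1) 2 = L (2*((k:ℝ)+1)) := by rw [hlamZ]; push_cast; ring_nf
    constructor
    · rw [hl2]; exact mul_pos (hLpos _) (by linarith [ht.1])
    · have hlt : t - gp (k+1) < L ((-2)*((k:ℝ)+1)) := by
        rw [← hlen k]; linarith [ht.2]
      calc lamZ l (k+1) 2 * (t - gp (k+1)) < L (2*((k:ℝ)+1)) * L ((-2)*((k:ℝ)+1)) := by
            rw [hl2]; exact mul_lt_mul_of_pos_left hlt (hLpos _)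
        _ = 1 := by rw [hLmul, show (2*((k:ℝ)+1) + (-2)*((k:ℝ)+1)) = 0 by ring, hL0]

  -- sup-norm bounds
  have hbdd : ∀ (v : ℝ → ℝ), ContDiff ℝ (⊤:ℕ∞) v →
      ∃ M : ℝ, 0 ≤ M ∧ (∀ s ∈ Icc (0:ℝ) 1, |v s| ≤ M) ∧ (∀ s ∈ Icc (0:ℝ) 1, |deriv v s| ≤ M) := by
    intro v hv
    obtain ⟨C1, hC1⟩ := isCompact_Icc.exists_bound_of_continuousOn
      (hv.continuous.continuousOn : ContinuousOn v (Icc (0:ℝ) 1))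
    obtain ⟨C2, hC2⟩ := isCompact_Icc.exists_bound_of_continuousOn
      ((hv.continuous_deriv (mod_cast le_top)).continuousOn : ContinuousOn (deriv v) (Icc (0:ℝ) 1))
    refine ⟨max (max C1 C2) 0, le_max_right _ _, fun s hs => ?_, fun s hs => ?_⟩
    · have := hC1 s hs
      rw [Real.norm_eq_abs] at this
      exact this.trans (le_trans (le_max_left _ _) (le_max_left _ _))
    · have := hC2 s hs
      rw [Real.norm_eq_abs] at this
      exact this.trans (le_trans (le_max_right _ _) (le_max_left _ _))
  obtain ⟨Mp, hMp0, hMpb, hMpd⟩ := hbdd p hp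
  obtain ⟨Mq, hMq0, hMqb, hMqd⟩ := hbdd q hq
  obtain ⟨M1, hM10, hM1b, -⟩ := hbdd h1 hh1
  obtain ⟨M2, hM20, hM2b, -⟩ := hbdd h2 hh2
  obtain ⟨M3, hM30, hM3b, -⟩ := hbdd h3 hh3
  set Mh := max M1 (max M2 M3) with hMhdef
  have hMh0 : 0 ≤ Mh := le_trans hM10 (le_max_left _ _)
  have hMh1 : ∀ s ∈ Icc (0:ℝ) 1, |h1 s| ≤ Mh := fun s hs => (hM1b s hs).trans (le_max_left _ _)
  have hMh2 : ∀ s ∈ Icc (0:ℝ) 1, |h2 s| ≤ Mh :=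
    fun s hs => (hM2b s hs).trans (le_trans (le_max_left _ _) (le_max_right _ _))
  have hMh3 : ∀ s ∈ Icc (0:ℝ) 1, |h3 s| ≤ Mh :=
    fun s hs => (hM3b s hs).trans (le_trans (le_max_right _ _) (le_max_right _ _))
  set Ma := max Mp Mq with hMadef
  have hMa0 : 0 ≤ Ma := le_trans hMp0 (le_max_left _ _)
  -- global bound on a
  have habd : ∀ (i : ℕ) (t : ℝ), t ≠ gp ((i:ℤ)+1) → t ≠ gp (i:ℤ) → t ≠ gp ((i:ℤ)-1) →
      |a i t| ≤ Ma * L ((i:ℝ) * (2-θ)) := by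
    intro i t hne1 hne2 hne3
    have hLp := hLpos ((i:ℝ)*(2-θ))
    rcases lt_trichotomy t (gp ((i:ℤ)+1)) with hc | hc | hc
    · rw [ha0 i t hc, abs_zero]; positivity
    · exact absurd hc hne1
    rcases lt_trichotomy t (gp (i:ℤ)) with hc2 | hc2 | hc2
    · have hmem : t ∈ Ioo (gp ((i:ℤ)+1)) (gp (i:ℤ)) := ⟨hc, hc2⟩
      rw [hap i t hmem, abs_mul]
      have hargmem := harg (i:ℤ) t hmem
      have hpb := hMpb _ (Ioo_subset_Icc_self hargmem)
      have hcoef : |lamZ l ((i:ℤ)+1) (2-θ)| = L (((i:ℝ)+1) * (2-θ)) := by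
        simp only [hlamabs]; push_cast; try ring
      rw [hcoef]
      have hle : L (((i:ℝ)+1)*(2-θ)) ≤ L ((i:ℝ)*(2-θ)) := hLle (by nlinarith)
      calc L (((i:ℝ)+1)*(2-θ)) * |p _| ≤ L ((i:ℝ)*(2-θ)) * Mp :=
            mul_le_mul hle hpb (abs_nonneg _) hLp.le
        _ ≤ Ma * L ((i:ℝ)*(2-θ)) := by
            rw [mul_comm]
            exact mul_le_mul_of_nonneg_right (le_max_left _ _) hLp.le
    · exact absurd hc2 hne2
    rcases lt_trichotomy t (gp ((i:ℤ)-1)) with hc3 | hc3 | hc3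
    · have hmem : t ∈ Ioo (gp (i:ℤ)) (gp ((i:ℤ)-1)) := ⟨hc2, hc3⟩
      rw [haq i t hmem, abs_mul, abs_neg]
      have hmem' : t ∈ Ioo (gp (((i:ℤ)-1)+1)) (gp ((i:ℤ)-1)) := by
        rw [show ((i:ℤ)-1)+1 = (i:ℤ) by ring]; exact hmem
      have hargmem := harg ((i:ℤ)-1) t hmem'
      rw [show ((i:ℤ)-1)+1 = (i:ℤ) by ring] at hargmem
      have hqb := hMqb _ (Ioo_subset_Icc_self hargmem)
      have hcoef : |lamZ l (i:ℤ) (2-θ)| = L ((i:ℝ) * (2-θ)) := by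
        simp only [hlamabs]; push_cast; try ring
      rw [hcoef]
      calc L ((i:ℝ)*(2-θ)) * |q _| ≤ L ((i:ℝ)*(2-θ)) * Mq :=
            mul_le_mul_of_nonneg_left hqb hLp.le
        _ ≤ Ma * L ((i:ℝ)*(2-θ)) := by
            rw [mul_comm]
            exact mul_le_mul_of_nonneg_right (le_max_right _ _) hLp.le
    · exact absurd hc3 hne3
    · rw [ha1 i t hc3, abs_zero]; positivity
  -- derivative of a: zero off the support
  have hda0lo : ∀ (i : ℕ) (t : ℝ), t < gp ((i:ℤ)+1) → deriv (a i) t = 0 := by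
    intro i t ht
    have := deriv_eq_on_open (u := a i) (g := fun _ => (0:ℝ)) isOpen_Iio (ht : t ∈ Iio _)
      (fun x hx => ha0 i x hx)
    simpa using this
  have hda0hi : ∀ (i : ℕ) (t : ℝ), gp ((i:ℤ)-1) < t → deriv (a i) t = 0 := by
    intro i t ht
    have := deriv_eq_on_open (u := a i) (g := fun _ => (0:ℝ)) isOpen_Ioi (ht : t ∈ Ioi _)
      (fun x hx => ha1 i x hx)
    simpa using this
  -- bound on deriv of a
  set Da := Mp * L (4-θ) + Mq with hDadef
  have hDa0 : 0 ≤ Da := by positivity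
  have hdabd : ∀ (i : ℕ) (t : ℝ), t ≠ gp ((i:ℤ)+1) → t ≠ gp (i:ℤ) → t ≠ gp ((i:ℤ)-1) →
      |deriv (a i) t| ≤ Da * L ((i:ℝ) * (4-θ)) := by
    intro i t hne1 hne2 hne3
    have hLp := hLpos ((i:ℝ)*(4-θ))
    rcases lt_trichotomy t (gp ((i:ℤ)+1)) with hc | hc | hc
    · rw [hda0lo i t hc, abs_zero]; positivity
    · exact absurd hc hne1
    rcases lt_trichotomy t (gp (i:ℤ)) with hc2 | hc2 | hc2
    · have hmem : t ∈ Ioo (gp ((i:ℤ)+1)) (gp (i:ℤ)) := ⟨hc, hc2⟩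
      have hderiv : deriv (a i) t = lamZ l ((i:ℤ)+1) (2-θ)
          * (deriv p (lamZ l ((i:ℤ)+1) 2 * (t - gp ((i:ℤ)+1))) * lamZ l ((i:ℤ)+1) 2) := by
        rw [deriv_eq_on_open isOpen_Ioo hmem (fun x hx => hap i x hx),
          (hasDerivAt_piece hp (lamZ l ((i:ℤ)+1) (2-θ)) (lamZ l ((i:ℤ)+1) 2) (gp ((i:ℤ)+1)) t).deriv]
      have hargmem := harg (i:ℤ) t hmem
      have hpd := hMpd _ (Ioo_subset_Icc_self hargmem)
      have hc1 : |lamZ l ((i:ℤ)+1) (2-θ)| = L (((i:ℝ)+1) * (2-θ)) := by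
        simp only [hlamabs]; push_cast; try ring
      have hc2 : |lamZ l ((i:ℤ)+1) 2| = L (((i:ℝ)+1) * 2) := by
        simp only [hlamabs]; push_cast; try ring
      rw [hderiv, abs_mul, abs_mul, hc1, hc2]
      calc L (((i:ℝ)+1)*(2-θ)) * (|deriv p _| * L (((i:ℝ)+1)*2))
          ≤ L (((i:ℝ)+1)*(2-θ)) * (Mp * L (((i:ℝ)+1)*2)) := by
            apply mul_le_mul_of_nonneg_left _ (hLpos _).le
            exact mul_le_mul_of_nonneg_right hpd (hLpos _).le
        _ = Mp * (L (((i:ℝ)+1)*(2-θ)) * L (((i:ℝ)+1)*2)) := by ring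
        _ = Mp * (L (4-θ) * L ((i:ℝ)*(4-θ))) := by
            rw [hLmul, hLmul]; ring_nf
        _ ≤ Da * L ((i:ℝ)*(4-θ)) := by
            rw [hDadef]
            nlinarith [mul_nonneg hMq0 (hLpos ((i:ℝ)*(4-θ))).le]
    · exact absurd hc2 hne2
    rcases lt_trichotomy t (gp ((i:ℤ)-1)) with hc3 | hc3 | hc3
    · have hmem : t ∈ Ioo (gp (i:ℤ)) (gp ((i:ℤ)-1)) := ⟨hc2, hc3⟩
      have hderiv : deriv (a i) t = -(lamZ l (i:ℤ) (2-θ))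
          * (deriv q (lamZ l (i:ℤ) 2 * (t - gp (i:ℤ))) * lamZ l (i:ℤ) 2) := by
        rw [deriv_eq_on_open isOpen_Ioo hmem (fun x hx => haq i x hx),
          (hasDerivAt_piece hq (-(lamZ l (i:ℤ) (2-θ))) (lamZ l (i:ℤ) 2) (gp (i:ℤ)) t).deriv]
      have hmem' : t ∈ Ioo (gp (((i:ℤ)-1)+1)) (gp ((i:ℤ)-1)) := by
        rw [show ((i:ℤ)-1)+1 = (i:ℤ) by ring]; exact hmem
      have hargmem := harg ((i:ℤ)-1) t hmem'
      rw [show ((i:ℤ)-1)+1 = (i:ℤ) by ring] at hargmem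
      have hqd := hMqd _ (Ioo_subset_Icc_self hargmem)
      have hc1 : |lamZ l (i:ℤ) (2-θ)| = L ((i:ℝ) * (2-θ)) := by
        simp only [hlamabs]; push_cast; try ring
      have hc2 : |lamZ l (i:ℤ) 2| = L ((i:ℝ) * 2) := by
        simp only [hlamabs]; push_cast; try ring
      rw [hderiv, abs_mul, abs_mul, abs_neg, hc1, hc2]
      calc L ((i:ℝ)*(2-θ)) * (|deriv q _| * L ((i:ℝ)*2))
          ≤ L ((i:ℝ)*(2-θ)) * (Mq * L ((i:ℝ)*2)) := by
            apply mul_le_mul_of_nonneg_left _ (hLpos _).le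
            exact mul_le_mul_of_nonneg_right hqd (hLpos _).le
        _ = Mq * (L ((i:ℝ)*(2-θ)) * L ((i:ℝ)*2)) := by ring
        _ = Mq * L ((i:ℝ)*(4-θ)) := by rw [hLmul]; ring_nf
        _ ≤ Da * L ((i:ℝ)*(4-θ)) := by
            rw [hDadef]
            nlinarith [mul_nonneg (mul_nonneg hMp0 (hLpos (4-θ)).le) (hLpos ((i:ℝ)*(4-θ))).le]
    · exact absurd hc3 hne3
    · rw [hda0hi i t hc3, abs_zero]; positivity

  -- global bound on b
  have hzpos : ∀ m : ℤ, (0:ℝ) < ρ ^ m := fun m => zpow_pos hρ0 m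
  have hbbd : ∀ (i : ℕ) (t : ℝ), t ≠ gp ((i:ℤ)+1) → t ≠ gp (i:ℤ) → t ≠ gp ((i:ℤ)-1) →
      t ≠ gp ((i:ℤ)-2) → |b i t| ≤ Mh * ρ ^ (1 - (i:ℤ)) := by
    intro i t hne1 hne2 hne3 hne4
    have hzp := hzpos (1 - (i:ℤ))
    rcases lt_trichotomy t (gp ((i:ℤ)+1)) with hc | hc | hc
    · rw [hb0 i t hc, abs_zero]; positivity
    · exact absurd hc hne1
    rcases lt_trichotomy t (gp (i:ℤ)) with hc2 | hc2 | hc2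
    · have hmem : t ∈ Ioo (gp ((i:ℤ)+1)) (gp (i:ℤ)) := ⟨hc, hc2⟩
      rw [hb1 i t hmem, abs_mul]
      have hargmem := harg (i:ℤ) t hmem
      have hhb := hMh1 _ (Ioo_subset_Icc_self hargmem)
      have hz : |ρ ^ (-(i:ℤ) - 1)| = ρ ^ (-(i:ℤ) - 1) := abs_of_pos (hzpos _)
      rw [hz]
      calc ρ ^ (-(i:ℤ)-1) * |h1 _| ≤ ρ ^ (1-(i:ℤ)) * Mh := by
            apply mul_le_mul _ hhb (abs_nonneg _) hzp.le
            exact zpow_le_zpow_right₀ hρ1.le (by omega)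
        _ = Mh * ρ ^ (1-(i:ℤ)) := by ring
    · exact absurd hc2 hne2
    rcases lt_trichotomy t (gp ((i:ℤ)-1)) with hc3 | hc3 | hc3
    · have hmem : t ∈ Ioo (gp (i:ℤ)) (gp ((i:ℤ)-1)) := ⟨hc2, hc3⟩
      rw [hb2 i t hmem, abs_mul]
      have hmem' : t ∈ Ioo (gp (((i:ℤ)-1)+1)) (gp ((i:ℤ)-1)) := by
        rw [show ((i:ℤ)-1)+1 = (i:ℤ) by ring]; exact hmem
      have hargmem := harg ((i:ℤ)-1) t hmem'
      rw [show ((i:ℤ)-1)+1 = (i:ℤ) by ring] at hargmem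
      have hhb := hMh2 _ (Ioo_subset_Icc_self hargmem)
      rw [abs_of_pos (hzpos _)]
      calc ρ ^ (-(i:ℤ)) * |h2 _| ≤ ρ ^ (1-(i:ℤ)) * Mh := by
            apply mul_le_mul _ hhb (abs_nonneg _) hzp.le
            exact zpow_le_zpow_right₀ hρ1.le (by omega)
        _ = Mh * ρ ^ (1-(i:ℤ)) := by ring
    · exact absurd hc3 hne3
    rcases lt_trichotomy t (gp ((i:ℤ)-2)) with hc4 | hc4 | hc4
    · have hmem : t ∈ Ioo (gp ((i:ℤ)-1)) (gp ((i:ℤ)-2)) := ⟨hc3, hc4⟩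
      rw [hb3 i t hmem, abs_mul]
      have hmem' : t ∈ Ioo (gp (((i:ℤ)-2)+1)) (gp ((i:ℤ)-2)) := by
        rw [show ((i:ℤ)-2)+1 = (i:ℤ)-1 by ring]; exact hmem
      have hargmem := harg ((i:ℤ)-2) t hmem'
      rw [show ((i:ℤ)-2)+1 = (i:ℤ)-1 by ring] at hargmem
      have hhb := hMh3 _ (Ioo_subset_Icc_self hargmem)
      rw [abs_of_pos (hzpos _)]
      calc ρ ^ (-(i:ℤ)+1) * |h3 _| ≤ ρ ^ (1-(i:ℤ)) * Mh := by
            apply mul_le_mul _ hhb (abs_nonneg _) hzp.le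
            exact zpow_le_zpow_right₀ hρ1.le (by omega)
        _ = Mh * ρ ^ (1-(i:ℤ)) := by ring
    · exact absurd hc4 hne4
    · rw [hb4 i t hc4, abs_mul, abs_mul]
      have hexp : |Real.exp (-(lamZ l (i:ℤ) 2) * (t - gp ((i:ℤ)-2)))| ≤ 1 := by
        rw [abs_of_pos (Real.exp_pos _)]
        rw [Real.exp_le_one_iff]
        have := hlamZpos (i:ℤ) 2
        nlinarith
      have hh3b := hMh3 1 ⟨zero_le_one, le_refl 1⟩
      rw [abs_of_pos (hzpos _)]
      calc ρ ^ (-(i:ℤ)+1) * |h3 1| * |Real.exp _|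
          ≤ ρ ^ (-(i:ℤ)+1) * Mh * 1 := by
            apply mul_le_mul _ hexp (abs_nonneg _) (by positivity)
            exact mul_le_mul_of_nonneg_left hh3b (hzpos _).le
        _ = Mh * ρ ^ (-(i:ℤ)+1) := by ring
        _ = Mh * ρ ^ (1-(i:ℤ)) := by rw [show -(i:ℤ)+1 = 1-(i:ℤ) by ring]
  -- geometric ratio
  set r : ℝ := L θ / ρ^2 with hrdef
  have hr0 : 0 < r := div_pos (hLpos θ) (by positivity)
  have hr1 : r < 1 := by
    rw [hrdef, div_lt_one (by positivity)]
    have hLθ : L θ = l ^ θ := rfl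
    nlinarith [hρ]
  have hkey : ∀ (i : ℕ) (m : ℤ), L ((i:ℝ) * θ) * ρ ^ (m - 2*(i:ℤ)) = ρ ^ m * r ^ i := by
    intro i m
    have e1 : L ((i:ℝ) * θ) = (L θ) ^ i := by
      rw [hLdef]
      show l ^ ((i:ℝ) * θ) = (l ^ θ) ^ i
      rw [mul_comm, Real.rpow_mul hl0.le, Real.rpow_natCast]
    have e2 : ρ ^ (m - 2*(i:ℤ)) = ρ ^ m / (ρ^2) ^ i := by
      rw [zpow_sub₀ (ne_of_gt hρ0)]
      congr 1
      rw [show (2*(i:ℤ)) = ((2*i : ℕ) : ℤ) by push_cast; ring, zpow_natCast, pow_mul]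
    rw [e1, e2, hrdef, div_pow]
    field_simp

  have hLmul3 : ∀ e1 e2 e3, L e1 * L e2 * L e3 = L (e1+e2+e3) := by
    intro e1 e2 e3; rw [hLmul, hLmul]
  -- constants
  set Ca : ℝ := Da + Ma + Ma^2 * L (2-θ) + Ma^2 * L (θ-4) with hCadef
  set Cb : ℝ := Mh^2 * ρ + Mh^2 * ρ^2 / r with hCbdef
  have hCa0 : 0 ≤ Ca := by rw [hCadef]; positivity
  have hCb0 : 0 ≤ Cb := by rw [hCbdef]; positivity
  -- bound for the magnetic interaction term
  have hX4bd : ∀ (j : ℕ) (t : ℝ), t ≠ gp ((j:ℤ)+2) → t ≠ gp ((j:ℤ)+1) → t ≠ gp (j:ℤ) →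
      t ≠ gp ((j:ℤ)-1) → t ≠ gp ((j:ℤ)-2) →
      |lamZ l (j:ℤ) θ * b j t * b (j+1) t| ≤ Mh^2 * ρ * r^j := by
    intro j t d1 d2 d3 d4 d5
    have hb_j := hbbd j t d2 d3 d4 d5
    have hb_j1 := hbbd (j+1) t
      (by rw [show ((j+1:ℕ):ℤ)+1 = (j:ℤ)+2 by push_cast; ring]; exact d1)
      (by rw [show ((j+1:ℕ):ℤ) = (j:ℤ)+1 by push_cast; ring]; exact d2)
      (by rw [show ((j+1:ℕ):ℤ)-1 = (j:ℤ) by push_cast; ring]; exact d3)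
      (by rw [show ((j+1:ℕ):ℤ)-2 = (j:ℤ)-1 by push_cast; ring]; exact d4)
    rw [show (1:ℤ) - ((j+1:ℕ):ℤ) = -(j:ℤ) by push_cast; ring] at hb_j1
    have step1 : |lamZ l (j:ℤ) θ * b j t * b (j+1) t|
        ≤ L ((j:ℝ)*θ) * (Mh * ρ^(1-(j:ℤ))) * (Mh * ρ^(-(j:ℤ))) := by
      rw [abs_mul, abs_mul, hlamabs]
      push_cast
      exact mul_le_mul (mul_le_mul_of_nonneg_left hb_j (hLpos _).le) hb_j1
        (abs_nonneg _) (by positivity)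
    refine step1.trans (le_of_eq ?_)
    have e1 : ρ^(1-(j:ℤ)) * ρ^(-(j:ℤ)) = ρ^(1-2*(j:ℤ)) := by
      rw [← zpow_add₀ (ne_of_gt hρ0)]; congr 1; ring
    calc L ((j:ℝ)*θ) * (Mh * ρ^(1-(j:ℤ))) * (Mh * ρ^(-(j:ℤ)))
        = Mh^2 * (L ((j:ℝ)*θ) * (ρ^(1-(j:ℤ)) * ρ^(-(j:ℤ)))) := by ring
      _ = Mh^2 * (L ((j:ℝ)*θ) * ρ^(1-2*(j:ℤ))) := by rw [e1]
      _ = Mh^2 * (ρ^(1:ℤ) * r^j) := by rw [hkey j 1]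
      _ = Mh^2 * ρ * r^j := by rw [zpow_one]; ring
  -- bound for the previous-shell magnetic term
  have hX6bd : ∀ (j : ℕ) (t : ℝ), t ≠ gp (j:ℤ) → t ≠ gp ((j:ℤ)-1) → t ≠ gp ((j:ℤ)-2) →
      t ≠ gp ((j:ℤ)-3) →
      |dprev (fun i t => lamZ l (i:ℤ) θ * (b i t)^2) j t| ≤ (Mh^2 * ρ^2 / r) * r^j := by
    intro j t d3 d4 d5 d6
    cases j with
    | zero => simp only [dprev, abs_zero]; positivity
    | succ i =>
      show |lamZ l (i:ℤ) θ * (b i t)^2| ≤ _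
      have hb_i := hbbd i t
        (by rw [show ((i:ℕ):ℤ)+1 = ((i+1:ℕ):ℤ) by push_cast; ring]; exact d3)
        (by rw [show ((i:ℕ):ℤ) = ((i+1:ℕ):ℤ)-1 by push_cast; ring]; exact d4)
        (by rw [show ((i:ℕ):ℤ)-1 = ((i+1:ℕ):ℤ)-2 by push_cast; ring]; exact d5)
        (by rw [show ((i:ℕ):ℤ)-2 = ((i+1:ℕ):ℤ)-3 by push_cast; ring]; exact d6)
      have hsq : (b i t)^2 ≤ (Mh * ρ^(1-(i:ℤ)))^2 := by
        rw [← sq_abs]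
        exact pow_le_pow_left₀ (abs_nonneg _) hb_i 2
      have step1 : |lamZ l (i:ℤ) θ * (b i t)^2| ≤ L ((i:ℝ)*θ) * (Mh * ρ^(1-(i:ℤ)))^2 := by
        rw [abs_mul, hlamabs, abs_of_nonneg (sq_nonneg _)]
        exact mul_le_mul_of_nonneg_left hsq (hLpos _).le
      refine step1.trans (le_of_eq ?_)
      have e1 : (ρ^((1:ℤ)-(i:ℤ)))^(2:ℕ) = ρ^(2-2*(i:ℤ)) := by
        rw [← zpow_natCast (ρ^((1:ℤ)-(i:ℤ))) 2, ← zpow_mul]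
        congr 1; ring
      have e2 : ρ^((2:ℕ):ℤ) = ρ^(2:ℕ) := zpow_natCast ρ 2
      calc L ((i:ℝ)*θ) * (Mh * ρ^(1-(i:ℤ)))^2
          = Mh^2 * (L ((i:ℝ)*θ) * (ρ^((1:ℤ)-(i:ℤ)))^(2:ℕ)) := by ring
        _ = Mh^2 * (L ((i:ℝ)*θ) * ρ^(2-2*(i:ℤ))) := by rw [e1]
        _ = Mh^2 * (ρ^(2:ℤ) * r^i) := by rw [hkey i 2]
        _ = Mh^2 * ρ^2 * r^i := by rw [show (2:ℤ) = ((2:ℕ):ℤ) by norm_num, e2]; ring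
        _ = (Mh^2 * ρ^2 / r) * r^(i+1) := by
            field_simp
            rw [pow_succ]
            ring

  -- pointwise bound, everywhere off grid points
  have claim1 : ∀ (j : ℕ) (t : ℝ), t ≠ gp ((j:ℤ)+2) → t ≠ gp ((j:ℤ)+1) → t ≠ gp (j:ℤ) →
      t ≠ gp ((j:ℤ)-1) → t ≠ gp ((j:ℤ)-2) → t ≠ gp ((j:ℤ)-3) →
      |f j t| ≤ Ca * L ((j:ℝ)*(4-θ)) + Cb * r^j := by
    intro j t d1 d2 d3 d4 d5 d6
    have ha_j := habd j t d2 d3 d4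
    have hda_j := hdabd j t d2 d3 d4
    have ha_j1 := habd (j+1) t
      (by rw [show ((j+1:ℕ):ℤ)+1 = (j:ℤ)+2 by push_cast; ring]; exact d1)
      (by rw [show ((j+1:ℕ):ℤ) = (j:ℤ)+1 by push_cast; ring]; exact d2)
      (by rw [show ((j+1:ℕ):ℤ)-1 = (j:ℤ) by push_cast; ring]; exact d3)
    push_cast at ha_j1
    -- term 2
    have hX2 : |lamZ l (j:ℤ) 2 * a j t| ≤ Ma * L ((j:ℝ)*(4-θ)) := by
      rw [abs_mul, hlamabs]
      push_cast
      calc L ((j:ℝ)*2) * |a j t| ≤ L ((j:ℝ)*2) * (Ma * L ((j:ℝ)*(2-θ))) :=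
            mul_le_mul_of_nonneg_left ha_j (hLpos _).le
        _ = Ma * (L ((j:ℝ)*2) * L ((j:ℝ)*(2-θ))) := by ring
        _ = Ma * L ((j:ℝ)*(4-θ)) := by rw [hLmul]; ring_nf
    -- term 3
    have hX3 : |lamZ l (j:ℤ) θ * a j t * a (j+1) t| ≤ Ma^2 * L (2-θ) * L ((j:ℝ)*(4-θ)) := by
      rw [abs_mul, abs_mul, hlamabs]
      push_cast
      have step1 : L ((j:ℝ)*θ) * |a j t| * |a (j+1) t|
          ≤ L ((j:ℝ)*θ) * (Ma * L ((j:ℝ)*(2-θ))) * (Ma * L (((j:ℝ)+1)*(2-θ))) :=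
        mul_le_mul (mul_le_mul_of_nonneg_left ha_j (hLpos _).le) ha_j1
          (abs_nonneg _) (by positivity)
      refine step1.trans (le_of_eq ?_)
      calc L ((j:ℝ)*θ) * (Ma * L ((j:ℝ)*(2-θ))) * (Ma * L (((j:ℝ)+1)*(2-θ)))
          = Ma^2 * (L ((j:ℝ)*θ) * L ((j:ℝ)*(2-θ)) * L (((j:ℝ)+1)*(2-θ))) := by ring
        _ = Ma^2 * (L (2-θ) * L ((j:ℝ)*(4-θ))) := by rw [hLmul3, hLmul]; ring_nf
        _ = Ma^2 * L (2-θ) * L ((j:ℝ)*(4-θ)) := by ring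
    -- term 4
    have hX4 := hX4bd j t d1 d2 d3 d4 d5
    -- term 5
    have hX5 : |dprev (fun i t => lamZ l (i:ℤ) θ * (a i t)^2) j t|
        ≤ Ma^2 * L (θ-4) * L ((j:ℝ)*(4-θ)) := by
      cases j with
      | zero => simp only [dprev, abs_zero]; positivity
      | succ i =>
        show |lamZ l (i:ℤ) θ * (a i t)^2| ≤ _
        have ha_i := habd i t
          (by rw [show ((i:ℕ):ℤ)+1 = ((i+1:ℕ):ℤ) by push_cast; ring]; exact d3)
          (by rw [show ((i:ℕ):ℤ) = ((i+1:ℕ):ℤ)-1 by push_cast; ring]; exact d4)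
          (by rw [show ((i:ℕ):ℤ)-1 = ((i+1:ℕ):ℤ)-2 by push_cast; ring]; exact d5)
        have hsq : (a i t)^2 ≤ (Ma * L ((i:ℝ)*(2-θ)))^2 := by
          rw [← sq_abs]
          exact pow_le_pow_left₀ (abs_nonneg _) ha_i 2
        have step1 : |lamZ l (i:ℤ) θ * (a i t)^2| ≤ L ((i:ℝ)*θ) * (Ma * L ((i:ℝ)*(2-θ)))^2 := by
          rw [abs_mul, hlamabs, abs_of_nonneg (sq_nonneg _)]
          exact mul_le_mul_of_nonneg_left hsq (hLpos _).le
        refine step1.trans (le_of_eq ?_)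
        push_cast
        calc L ((i:ℝ)*θ) * (Ma * L ((i:ℝ)*(2-θ)))^2
            = Ma^2 * (L ((i:ℝ)*θ) * L ((i:ℝ)*(2-θ)) * L ((i:ℝ)*(2-θ))) := by ring
          _ = Ma^2 * (L (θ-4) * L (((i:ℝ)+1)*(4-θ))) := by rw [hLmul3, hLmul]; ring_nf
          _ = Ma^2 * L (θ-4) * L (((i:ℝ)+1)*(4-θ)) := by ring
    -- term 6
    have hX6 := hX6bd j t d3 d4 d5 d6
    -- assemble
    rw [hf j t]
    refine (six_term_bound hda_j hX2 hX3 hX4 hX5 hX6).trans (le_of_eq ?_)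
    rw [hCadef, hCbdef]
    ring
  -- pointwise bound off the support of the a-terms
  have claim2 : ∀ (j : ℕ) (t : ℝ), t ≠ gp ((j:ℤ)+2) → t ≠ gp ((j:ℤ)+1) → t ≠ gp (j:ℤ) →
      t ≠ gp ((j:ℤ)-1) → t ≠ gp ((j:ℤ)-2) → t ≠ gp ((j:ℤ)-3) →
      (t < gp ((j:ℤ)+1) ∨ gp ((j:ℤ)-2) < t) →
      |f j t| ≤ Cb * r^j := by
    intro j t d1 d2 d3 d4 d5 d6 hreg
    have haj0 : a j t = 0 := by
      rcases hreg with h | h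
      · exact ha0 j t h
      · exact ha1 j t (lt_trans (hgp_lt _ _ (by omega)) h)
    have hdaj0 : deriv (a j) t = 0 := by
      rcases hreg with h | h
      · exact hda0lo j t h
      · exact hda0hi j t (lt_trans (hgp_lt _ _ (by omega)) h)
    have hX5 : dprev (fun i t => lamZ l (i:ℤ) θ * (a i t)^2) j t = 0 := by
      cases j with
      | zero => rfl
      | succ i =>
        show lamZ l (i:ℤ) θ * (a i t)^2 = 0
        have hai0 : a i t = 0 := by
          rcases hreg with h | h
          · refine ha0 i t ?_
            rw [show ((i:ℕ):ℤ)+1 = ((i+1:ℕ):ℤ) by push_cast; ring]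
            exact lt_trans h (hgp_lt _ _ (by omega))
          · refine ha1 i t ?_
            rw [show ((i:ℕ):ℤ)-1 = ((i+1:ℕ):ℤ)-2 by push_cast; ring]
            exact h
        rw [hai0]; ring
    have hX4 := hX4bd j t d1 d2 d3 d4 d5
    have hX6 := hX6bd j t d3 d4 d5 d6
    have hz1' : |deriv (a j) t| ≤ 0 := by rw [hdaj0]; simp
    have hz2' : |lamZ l (j:ℤ) 2 * a j t| ≤ 0 := by rw [haj0]; simp
    have hz3' : |lamZ l (j:ℤ) θ * a j t * a (j+1) t| ≤ 0 := by rw [haj0]; simp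
    have hz5' : |dprev (fun i t => lamZ l (i:ℤ) θ * (a i t)^2) j t| ≤ 0 := by rw [hX5]; simp
    rw [hf j t]
    refine (six_term_bound hz1' hz2' hz3' hX4 hz5' hX6).trans (le_of_eq ?_)
    rw [hCbdef]
    ring

  -- measurability
  have hfm : ∀ j, Measurable (f j) := by
    intro j
    have hfe : f j = fun t => deriv (a j) t + lamZ l (j:ℤ) 2 * a j t
        + lamZ l (j:ℤ) θ * a j t * a (j+1) t + lamZ l (j:ℤ) θ * b j t * b (j+1) t
        - dprev (fun i t => lamZ l (i:ℤ) θ * (a i t)^2) j t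
        - dprev (fun i t => lamZ l (i:ℤ) θ * (b i t)^2) j t := funext (hf j)
    rw [hfe]
    have m1 : Measurable (deriv (a j)) := measurable_deriv (a j)
    have m2 : Measurable fun t => lamZ l (j:ℤ) 2 * a j t := (continuous_const.mul (hacont j)).measurable
    have m3 : Measurable fun t => lamZ l (j:ℤ) θ * a j t * a (j+1) t :=
      ((continuous_const.mul (hacont j)).mul (hacont (j+1))).measurable
    have m4 : Measurable fun t => lamZ l (j:ℤ) θ * b j t * b (j+1) t :=
      ((continuous_const.mul (hbcont j)).mul (hbcont (j+1))).measurable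
    have m5 : Measurable (dprev (fun i t => lamZ l (i:ℤ) θ * (a i t)^2) j) := by
      cases j with
      | zero => exact measurable_const
      | succ i => exact (continuous_const.mul ((hacont i).pow 2)).measurable
    have m6 : Measurable (dprev (fun i t => lamZ l (i:ℤ) θ * (b i t)^2) j) := by
      cases j with
      | zero => exact measurable_const
      | succ i => exact (continuous_const.mul ((hbcont i).pow 2)).measurable
    exact ((((m1.add m2).add m3).add m4).sub m5).sub m6
  have hfm2 : ∀ j, Measurable (fun t => f j t ^ 2) := fun j => (hfm j).pow_const 2
  -- a.e. avoidance of grid points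
  have hgrid_ae : ∀ j : ℕ, ∀ᵐ t : ℝ ∂volume, (t ≠ gp ((j:ℤ)+2) ∧ t ≠ gp ((j:ℤ)+1) ∧ t ≠ gp (j:ℤ)
      ∧ t ≠ gp ((j:ℤ)-1) ∧ t ≠ gp ((j:ℤ)-2) ∧ t ≠ gp ((j:ℤ)-3)) := by
    intro j
    have hne : ∀ c : ℝ, ∀ᵐ t : ℝ ∂volume, t ≠ c := fun c => by
      simpa using measure_eq_zero_iff_ae_notMem.mp (measure_singleton c)
    exact ((hne _).and ((hne _).and ((hne _).and ((hne _).and ((hne _).and (hne _))))))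
  -- integrability
  have hint : ∀ j, IntegrableOn (fun t => f j t ^ 2) (Ioc 0 T) volume := by
    intro j
    apply Measure.integrableOn_of_bounded (M := (Ca * L ((j:ℝ)*(4-θ)) + Cb * r^j)^2)
      measure_Ioc_lt_top.ne (hfm2 j).aestronglyMeasurable
    refine ae_restrict_of_ae ?_
    filter_upwards [hgrid_ae j] with t ht
    obtain ⟨d1, d2, d3, d4, d5, d6⟩ := ht
    have hb := claim1 j t d1 d2 d3 d4 d5 d6
    rw [Real.norm_eq_abs, abs_pow]
    exact pow_le_pow_left₀ (abs_nonneg _) hb 2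
  -- integral bound
  have hIbd : ∀ j : ℕ, ∫ t in (0:ℝ)..T, (f j t)^2
      ≤ (Ca * L ((j:ℝ)*(4-θ)) + Cb * r^j)^2 * (L ((j:ℝ)*(-2)) * (L 4 * T)) + (Cb * r^j)^2 * T := by
    intro j
    rw [intervalIntegral.integral_of_le hT0.le]
    set S : Set ℝ := Icc (gp ((j:ℤ)+1)) (gp ((j:ℤ)-2)) with hSdef
    have hsplit : (∫ t in Ioc 0 T ∩ S, (f j t)^2) + (∫ t in Ioc 0 T \ S, (f j t)^2)
        = ∫ t in Ioc 0 T, (f j t)^2 := integral_inter_add_diff measurableSet_Icc (hint j)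
    rw [← hsplit]
    have hIocS : volume (Ioc 0 T ∩ S) < ⊤ :=
      lt_of_le_of_lt (measure_mono inter_subset_left) measure_Ioc_lt_top
    have hlen0 : 0 ≤ gp ((j:ℤ)-2) - gp ((j:ℤ)+1) := by
      have := hgp_lt ((j:ℤ)-2) ((j:ℤ)+1) (by omega)
      linarith
    have h1 : ∫ t in Ioc 0 T ∩ S, (f j t)^2
        ≤ (Ca * L ((j:ℝ)*(4-θ)) + Cb * r^j)^2 * (L ((j:ℝ)*(-2)) * (L 4 * T)) := by
      have hae : ∀ᵐ t ∂(volume.restrict (Ioc 0 T ∩ S)), ‖f j t ^ 2‖ ≤ (Ca * L ((j:ℝ)*(4-θ)) + Cb * r^j)^2 := by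
        refine ae_restrict_of_ae ?_
        filter_upwards [hgrid_ae j] with t ht
        obtain ⟨d1, d2, d3, d4, d5, d6⟩ := ht
        have hb := claim1 j t d1 d2 d3 d4 d5 d6
        rw [Real.norm_eq_abs, abs_pow]
        exact pow_le_pow_left₀ (abs_nonneg _) hb 2
      have hnorm := norm_setIntegral_le_of_norm_le_const_ae (μ := volume)
        (s := Ioc 0 T ∩ S) hIocS hae
      rw [Real.norm_eq_abs] at hnorm
      have htr : (volume (Ioc 0 T ∩ S)).toReal ≤ L ((j:ℝ)*(-2)) * (L 4 * T) := by
        have hv : volume (Ioc 0 T ∩ S) ≤ ENNReal.ofReal (gp ((j:ℤ)-2) - gp ((j:ℤ)+1)) := by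
          calc volume (Ioc 0 T ∩ S) ≤ volume S := measure_mono inter_subset_right
            _ = ENNReal.ofReal (gp ((j:ℤ)-2) - gp ((j:ℤ)+1)) := Real.volume_Icc
        have hv2 := ENNReal.toReal_le_of_le_ofReal hlen0 hv
        refine hv2.trans ?_
        rw [hgp, hgp]
        push_cast
        have hgp2 : L (-2*((j:ℝ)-2)) = L ((j:ℝ)*(-2)) * L 4 := by rw [hLmul]; ring_nf
        nlinarith [mul_pos (hLpos (-2*((j:ℝ)+1))) hT0, hgp2]
      calc ∫ t in Ioc 0 T ∩ S, (f j t)^2 ≤ |∫ t in Ioc 0 T ∩ S, (f j t)^2| := le_abs_self _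
        _ ≤ (Ca * L ((j:ℝ)*(4-θ)) + Cb * r^j)^2 * (volume (Ioc 0 T ∩ S)).toReal := hnorm
        _ ≤ (Ca * L ((j:ℝ)*(4-θ)) + Cb * r^j)^2 * (L ((j:ℝ)*(-2)) * (L 4 * T)) := by
            apply mul_le_mul_of_nonneg_left htr (by positivity)
    have h2 : ∫ t in Ioc 0 T \ S, (f j t)^2 ≤ (Cb * r^j)^2 * T := by
      have hmeas : MeasurableSet (Ioc 0 T \ S) := measurableSet_Ioc.diff measurableSet_Icc
      have hae : ∀ᵐ t ∂(volume.restrict (Ioc 0 T \ S)), ‖f j t ^ 2‖ ≤ (Cb * r^j)^2 := by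
        filter_upwards [ae_restrict_mem hmeas, ae_restrict_of_ae (hgrid_ae j)] with t htmem ht
        obtain ⟨d1, d2, d3, d4, d5, d6⟩ := ht
        have hreg : t < gp ((j:ℤ)+1) ∨ gp ((j:ℤ)-2) < t := by
          have hns := htmem.2
          rw [hSdef, mem_Icc] at hns
          push_neg at hns
          rcases lt_or_ge t (gp ((j:ℤ)+1)) with h | h
          · exact Or.inl h
          · exact Or.inr (hns h)
        have hb := claim2 j t d1 d2 d3 d4 d5 d6 hreg
        rw [Real.norm_eq_abs, abs_pow]
        exact pow_le_pow_left₀ (abs_nonneg _) hb 2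
      have hfin : volume (Ioc 0 T \ S) < ⊤ :=
        lt_of_le_of_lt (measure_mono diff_subset) measure_Ioc_lt_top
      have hnorm := norm_setIntegral_le_of_norm_le_const_ae (μ := volume)
        (s := Ioc 0 T \ S) hfin hae
      rw [Real.norm_eq_abs] at hnorm
      have htr : (volume (Ioc 0 T \ S)).toReal ≤ T := by
        have hv : volume (Ioc 0 T \ S) ≤ ENNReal.ofReal T := by
          calc volume (Ioc 0 T \ S) ≤ volume (Ioc 0 T) := measure_mono diff_subset
            _ = ENNReal.ofReal T := by rw [Real.volume_Ioc, sub_zero]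
        exact ENNReal.toReal_le_of_le_ofReal hT0.le hv
      calc ∫ t in Ioc 0 T \ S, (f j t)^2 ≤ |∫ t in Ioc 0 T \ S, (f j t)^2| := le_abs_self _
        _ ≤ (Cb * r^j)^2 * (volume (Ioc 0 T \ S)).toReal := hnorm
        _ ≤ (Cb * r^j)^2 * T := mul_le_mul_of_nonneg_left htr (by positivity)
    exact add_le_add h1 h2

  refine ⟨fun j => (intervalIntegrable_iff_integrableOn_Ioc_of_le hT0.le).mpr (hint j), ?_⟩
  set x : ℝ := L (4-2*θ) with hxdef
  set y : ℝ := L (-4) * r^2 with hydef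
  set z : ℝ := L (-2) * r^2 with hzdef
  have hx0 : 0 ≤ x := (hLpos _).le
  have hx1 : x < 1 := by
    have := hLlt (show (4-2*θ:ℝ) < 0 by linarith)
    rwa [hL0] at this
  have hLm4 : L (-4) < 1 := by
    have := hLlt (show (-4:ℝ) < 0 by norm_num); rwa [hL0] at this
  have hLm2 : L (-2) < 1 := by
    have := hLlt (show (-2:ℝ) < 0 by norm_num); rwa [hL0] at this
  have hy0 : 0 ≤ y := by positivity
  have hy1 : y < 1 := by
    have h1 : L (-4) * r^2 ≤ r^2 := by nlinarith only [hLm4, sq_nonneg r]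
    have h2 : r^2 < 1 := by nlinarith only [hr0, hr1]
    rw [hydef]; linarith only [h1, h2]
  have hz0 : 0 ≤ z := by positivity
  have hz1 : z < 1 := by
    have h1 : L (-2) * r^2 ≤ r^2 := by nlinarith only [hLm2, sq_nonneg r]
    have h2 : r^2 < 1 := by nlinarith only [hr0, hr1]
    rw [hzdef]; linarith only [h1, h2]
  have hsum : Summable (fun j : ℕ => (2*Ca^2*(L 4 * T)) * x^j
      + (2*Cb^2*(L 4 * T)) * y^j + (Cb^2*T) * z^j) := by
    apply Summable.add
    apply Summable.add
    · exact (summable_geometric_of_lt_one hx0 hx1).mul_left _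
    · exact (summable_geometric_of_lt_one hy0 hy1).mul_left _
    · exact (summable_geometric_of_lt_one hz0 hz1).mul_left _
  apply Summable.of_nonneg_of_le _ _ hsum
  · intro j
    apply mul_nonneg (hlamZpos _ _).le
    exact intervalIntegral.integral_nonneg hT0.le (fun t _ => sq_nonneg _)
  · intro j
    have hplam : lamZ l ((j:ℕ):ℤ) (-2) = L ((j:ℝ)*(-2)) := by
      simp only [hlamZ]; push_cast; try ring
    have hCfsq : (Ca * L ((j:ℝ)*(4-θ)) + Cb * r^j)^2
        ≤ 2*Ca^2*(L ((j:ℝ)*(4-θ)))^2 + 2*Cb^2*(r^j)^2 := by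
      nlinarith only [sq_nonneg (Ca * L ((j:ℝ)*(4-θ)) - Cb * r^j)]
    have e1 : L ((j:ℝ)*(-2)) * ((L ((j:ℝ)*(4-θ)))^2 * L ((j:ℝ)*(-2))) = x^j := by
      rw [pow_two, hxdef, hLpow]
      simp only [hLmul]
      congr 1; ring
    have e2 : L ((j:ℝ)*(-2)) * ((r^j)^2 * L ((j:ℝ)*(-2))) = y^j := by
      rw [hydef, mul_pow, hLpow]
      rw [show (r^j)^2 = (r^2)^j by rw [← pow_mul, ← pow_mul]; ring_nf]
      rw [show L ((j:ℝ)*(-2)) * ((r^2)^j * L ((j:ℝ)*(-2)))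
          = (L ((j:ℝ)*(-2)) * L ((j:ℝ)*(-2))) * (r^2)^j by ring, hLmul]
      congr 2
      ring
    have e3 : L ((j:ℝ)*(-2)) * (r^j)^2 = z^j := by
      rw [hzdef, mul_pow, hLpow]
      rw [show (r^j)^2 = (r^2)^j by rw [← pow_mul, ← pow_mul]; ring_nf]
      congr 2
      ring
    calc lamZ l ((j:ℕ):ℤ) (-2) * ∫ t in (0:ℝ)..T, (f j t)^2
        = L ((j:ℝ)*(-2)) * ∫ t in (0:ℝ)..T, (f j t)^2 := by rw [hplam]
      _ ≤ L ((j:ℝ)*(-2)) * ((Ca * L ((j:ℝ)*(4-θ)) + Cb * r^j)^2 * (L ((j:ℝ)*(-2)) * (L 4 * T))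
            + (Cb * r^j)^2 * T) := mul_le_mul_of_nonneg_left (hIbd j) (hLpos _).le
      _ ≤ L ((j:ℝ)*(-2)) * ((2*Ca^2*(L ((j:ℝ)*(4-θ)))^2 + 2*Cb^2*(r^j)^2)
            * (L ((j:ℝ)*(-2)) * (L 4 * T)) + (Cb * r^j)^2 * T) := by
          apply mul_le_mul_of_nonneg_left _ (hLpos _).le
          refine add_le_add ?_ le_rfl
          exact mul_le_mul_of_nonneg_right hCfsq (by positivity)
      _ = (2*Ca^2*(L 4 * T)) * (L ((j:ℝ)*(-2)) * ((L ((j:ℝ)*(4-θ)))^2 * L ((j:ℝ)*(-2))))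
            + (2*Cb^2*(L 4 * T)) * (L ((j:ℝ)*(-2)) * ((r^j)^2 * L ((j:ℝ)*(-2))))
            + (Cb^2*T) * (L ((j:ℝ)*(-2)) * (r^j)^2) := by ring
      _ = (2*Ca^2*(L 4 * T)) * x^j + (2*Cb^2*(L 4 * T)) * y^j + (Cb^2*T) * z^j := by
          rw [e1, e2, e3]
end
end

section
/- Let λ > 1, 0 < α < 1/2, and R > 0. There exist functions p, q ∈ C₀^∞(0,1) and constants c₀, d₀ with c₀² + d₀² ≠ 0 such that the unique solution h = (h₁, h₂, h₃) ∈ C^∞([0,1]; ℝ³) of the linear ODE system h₁' + (λ^{−2α} − λ^{−1} q) h₁ + λ^{−1} p h₂ = 0, h₂' + h₂ − q h₃ − 2λ^{−1} p h₁ = 0, h₃' + λ^{2α} h₃ + 2 q h₂ = 0 on [0,1], with initial data h₁(0) = 0, h₂(0) = c₀, h₃(0) = d₀, satisfies h₁(1) = ρ c₀ and h₂(1) = ρ d₀ for some real number ρ with |ρ| > R. -/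
open Real Set

noncomputable section

namespace GluingGNSE

lemma deriv_eq_zero_of_const_on {f : ℝ → ℝ} {U : Set ℝ} (hU : IsOpen U) {s c : ℝ}
    (hs : s ∈ U) (h : ∀ t ∈ U, f t = c) : deriv f s = 0 := by
  have hev : f =ᶠ[nhds s] fun _ => c :=
    Filter.eventuallyEq_of_mem (hU.mem_nhds hs) h
  rw [hev.deriv_eq, deriv_const]

def θf (s : ℝ) : ℝ := (π / 2) * Real.smoothTransition ((s - 8⁻¹) * 4)

lemma contDiff_θf : ContDiff ℝ (⊤ : ℕ∞) θf :=
  contDiff_const.mul (Real.smoothTransition.contDiff.comp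
    ((contDiff_id.sub contDiff_const).mul contDiff_const))

lemma θf_of_le {s : ℝ} (hs : s ≤ 8⁻¹) : θf s = 0 := by
  unfold θf
  rw [Real.smoothTransition.zero_of_nonpos (by nlinarith), mul_zero]

lemma θf_of_ge {s : ℝ} (hs : 3/8 ≤ s) : θf s = π / 2 := by
  unfold θf
  rw [Real.smoothTransition.one_of_one_le (by nlinarith), mul_one]

lemma deriv_θf_of_lt {s : ℝ} (hs : s < 8⁻¹) : deriv θf s = 0 :=
  deriv_eq_zero_of_const_on isOpen_Iio hs (fun _ ht => θf_of_le (le_of_lt ht))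

lemma deriv_θf_of_gt {s : ℝ} (hs : 3/8 < s) : deriv θf s = 0 :=
  deriv_eq_zero_of_const_on isOpen_Ioi hs (fun _ ht => θf_of_ge (le_of_lt ht))

lemma contDiff_deriv_θf : ContDiff ℝ (⊤ : ℕ∞) (deriv θf) :=
  (contDiff_infty_iff_deriv.mp contDiff_θf).2

lemma hasDerivAt_θf (s : ℝ) : HasDerivAt θf (deriv θf s) s :=
  ((contDiff_θf.differentiable (by simp)) s).hasDerivAt

def Qf (K s : ℝ) : ℝ := K * Real.smoothTransition ((s - 2⁻¹) * 4)

lemma contDiff_Qf (K : ℝ) : ContDiff ℝ (⊤ : ℕ∞) (Qf K) :=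
  contDiff_const.mul (Real.smoothTransition.contDiff.comp
    ((contDiff_id.sub contDiff_const).mul contDiff_const))

lemma Qf_of_le {K s : ℝ} (hs : s ≤ 2⁻¹) : Qf K s = 0 := by
  unfold Qf
  rw [Real.smoothTransition.zero_of_nonpos (by nlinarith), mul_zero]

lemma Qf_of_ge {K s : ℝ} (hs : 3/4 ≤ s) : Qf K s = K := by
  unfold Qf
  rw [Real.smoothTransition.one_of_one_le (by nlinarith), mul_one]

lemma deriv_Qf_of_lt {K : ℝ} {s : ℝ} (hs : s < 2⁻¹) : deriv (Qf K) s = 0 :=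
  deriv_eq_zero_of_const_on isOpen_Iio hs (fun _ ht => Qf_of_le (le_of_lt ht))

lemma deriv_Qf_of_gt {K : ℝ} {s : ℝ} (hs : 3/4 < s) : deriv (Qf K) s = 0 :=
  deriv_eq_zero_of_const_on isOpen_Ioi hs (fun _ ht => Qf_of_ge (le_of_lt ht))

lemma contDiff_deriv_Qf (K : ℝ) : ContDiff ℝ (⊤ : ℕ∞) (deriv (Qf K)) :=
  (contDiff_infty_iff_deriv.mp (contDiff_Qf K)).2

lemma hasDerivAt_Qf (K s : ℝ) : HasDerivAt (Qf K) (deriv (Qf K) s) s :=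
  (((contDiff_Qf K).differentiable (by simp)) s).hasDerivAt

def wf (μ s : ℝ) : ℝ := μ + (1 - μ) * Real.cos (θf s) ^ 2

lemma contDiff_wf (μ : ℝ) : ContDiff ℝ (⊤ : ℕ∞) (wf μ) :=
  contDiff_const.add (contDiff_const.mul
    ((Real.contDiff_cos.comp contDiff_θf).pow 2))

def Wf (μ s : ℝ) : ℝ := ∫ t in (0:ℝ)..s, wf μ t

lemma hasDerivAt_Wf (μ s : ℝ) : HasDerivAt (Wf μ) (wf μ s) s := by
  have hc : Continuous (wf μ) := (contDiff_wf μ).continuous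
  exact intervalIntegral.integral_hasDerivAt_right (hc.intervalIntegrable _ _)
    (hc.stronglyMeasurableAtFilter _ _) hc.continuousAt

lemma Wf_zero (μ : ℝ) : Wf μ 0 = 0 := intervalIntegral.integral_same

lemma contDiff_Wf (μ : ℝ) : ContDiff ℝ (⊤ : ℕ∞) (Wf μ) := by
  refine contDiff_infty_iff_deriv.mpr ⟨fun s => ((hasDerivAt_Wf μ s).differentiableAt), ?_⟩
  have : deriv (Wf μ) = wf μ := funext fun s => (hasDerivAt_Wf μ s).deriv
  rw [this]
  exact contDiff_wf μ

end GluingGNSE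

open GluingGNSE

/-- for `λ > 1`, `0 < α < 1/2` and `R > 0`, there exist
`p, q ∈ C₀^∞(0,1)` and constants `c₀, d₀` with `c₀² + d₀² ≠ 0` such that the
(unique, smooth) solution `(h₁, h₂, h₃)` of the gluing ODE system for the
dyadic generalized Navier-Stokes model on `[0,1]` with `h₁(0) = 0`,
`h₂(0) = c₀`, `h₃(0) = d₀` satisfies `h₁(1) = ρc₀` and `h₂(1) = ρd₀` for some
real `ρ` with `|ρ| > R`. -/
theorem exists_gluing_ODE_solution_gNSE
    (l α R : ℝ) (hl : 1 < l) (hα1 : 0 < α) (hα2 : α < 1 / 2) (hR : 0 < R) :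
    ∃ (p q : ℝ → ℝ) (c0 d0 ρ : ℝ),
      ContDiff ℝ (⊤ : ℕ∞) p ∧ (∀ s, s ∉ Ioo (0:ℝ) 1 → p s = 0) ∧
      ContDiff ℝ (⊤ : ℕ∞) q ∧ (∀ s, s ∉ Ioo (0:ℝ) 1 → q s = 0) ∧
      c0 ^ 2 + d0 ^ 2 ≠ 0 ∧ R < |ρ| ∧
      ∃ h1 h2 h3 : ℝ → ℝ,
        ContDiff ℝ (⊤ : ℕ∞) h1 ∧ ContDiff ℝ (⊤ : ℕ∞) h2 ∧
        ContDiff ℝ (⊤ : ℕ∞) h3 ∧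
        (∀ s ∈ Icc (0:ℝ) 1,
          deriv h1 s + (l ^ (-(2 * α)) - l ^ (-1 : ℝ) * q s) * h1 s
            + l ^ (-1 : ℝ) * p s * h2 s = 0) ∧
        (∀ s ∈ Icc (0:ℝ) 1,
          deriv h2 s + h2 s - q s * h3 s - 2 * l ^ (-1 : ℝ) * p s * h1 s = 0) ∧
        (∀ s ∈ Icc (0:ℝ) 1, deriv h3 s + l ^ (2 * α) * h3 s + 2 * q s * h2 s = 0) ∧
        h1 0 = 0 ∧ h2 0 = c0 ∧ h3 0 = d0 ∧
        h1 1 = ρ * c0 ∧ h2 1 = ρ * d0 := by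
  have hl0 : l ≠ 0 := by positivity
  set μ : ℝ := l ^ (-(2 * α)) with hμ
  set K : ℝ := Wf μ 1 + Real.log (2 * (R + 1)) with hK
  set A : ℝ := (Real.sqrt 2)⁻¹ with hA
  have hs2 : (0:ℝ) < Real.sqrt 2 := Real.sqrt_pos.mpr two_pos
  have hs2sq : Real.sqrt 2 * Real.sqrt 2 = 2 := Real.mul_self_sqrt (by norm_num)
  have hs2le : Real.sqrt 2 ≤ 2 := by nlinarith
  have hA2 : A * A = 2⁻¹ := by
    rw [hA, ← mul_inv]
    rw [hs2sq]
  have hApos : 0 < A := by positivity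
  refine ⟨fun s => -(l * A) * (deriv θf s - (1 - μ) * Real.cos (θf s) * Real.sin (θf s)) *
      Real.exp (Qf K s),
    fun s => l * deriv (Qf K) s, 1, 0, A * (2 * (R + 1)), ?_, ?_, ?_, ?_, ?_, ?_, ?_⟩
  · -- ContDiff p
    exact (contDiff_const.mul (contDiff_deriv_θf.sub
      ((contDiff_const.mul (Real.contDiff_cos.comp contDiff_θf)).mul
        (Real.contDiff_sin.comp contDiff_θf)))).mul
      (Real.contDiff_exp.comp (contDiff_Qf K))
  · -- support p
    intro s hs
    simp only [mem_Ioo, not_and, not_lt] at hs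
    beta_reduce
    rcases le_or_gt s 0 with h | h
    · rw [deriv_θf_of_lt (by linarith : s < 8⁻¹), θf_of_le (by linarith : s ≤ 8⁻¹),
        Real.sin_zero]
      ring
    · have h1 : 1 ≤ s := hs h
      rw [deriv_θf_of_gt (by linarith : (3:ℝ)/8 < s), θf_of_ge (by linarith : (3:ℝ)/8 ≤ s),
        Real.cos_pi_div_two]
      ring
  · -- ContDiff q
    exact contDiff_const.mul (contDiff_deriv_Qf K)
  · -- support q
    intro s hs
    simp only [mem_Ioo, not_and, not_lt] at hs
    beta_reduce
    rcases le_or_gt s 0 with h | h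
    · rw [deriv_Qf_of_lt (by linarith : s < 2⁻¹)]; ring
    · have h1 : 1 ≤ s := hs h
      rw [deriv_Qf_of_gt (by linarith : (3:ℝ)/4 < s)]; ring
  · norm_num
  · -- R < |ρ|
    have hρpos : 0 < A * (2 * (R + 1)) := by positivity
    rw [abs_of_pos hρpos]
    have hinv : A * Real.sqrt 2 = 1 := inv_mul_cancel₀ (ne_of_gt hs2)
    nlinarith [hApos, hR, hs2le, hs2]
  · -- the solution
    refine ⟨fun s => A * Real.sin (θf s) * Real.exp (-(Wf μ s) + Qf K s),
      fun s => Real.cos (θf s) * Real.exp (-(Wf μ s)),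
      fun _ => (0:ℝ), ?_, ?_, contDiff_const, ?_, ?_, ?_, ?_, ?_, ?_, ?_, ?_⟩
    · exact (contDiff_const.mul (Real.contDiff_sin.comp contDiff_θf)).mul
        (Real.contDiff_exp.comp ((contDiff_Wf μ).neg.add (contDiff_Qf K)))
    · exact (Real.contDiff_cos.comp contDiff_θf).mul
        (Real.contDiff_exp.comp (contDiff_Wf μ).neg)
    · -- equation 1
      intro s _
      have hθ := hasDerivAt_θf s
      have hE : HasDerivAt (fun s => -(Wf μ s) + Qf K s)
          (-(wf μ s) + deriv (Qf K) s) s := (hasDerivAt_Wf μ s).neg.add (hasDerivAt_Qf K s)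
      have hd1 : deriv (fun s => A * Real.sin (θf s) * Real.exp (-(Wf μ s) + Qf K s)) s =
          A * (Real.cos (θf s) * deriv θf s) * Real.exp (-(Wf μ s) + Qf K s) +
          A * Real.sin (θf s) *
            (Real.exp (-(Wf μ s) + Qf K s) * (-(wf μ s) + deriv (Qf K) s)) :=
        ((hθ.sin.const_mul A).mul hE.exp).deriv
      beta_reduce
      rw [hd1, Real.rpow_neg_one, Real.exp_add]
      unfold wf
      field_simp
      ring
    · -- equation 2
      intro s _
      have hθ := hasDerivAt_θf s
      have hd2 : deriv (fun s => Real.cos (θf s) * Real.exp (-(Wf μ s))) s =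
          -Real.sin (θf s) * deriv θf s * Real.exp (-(Wf μ s)) +
          Real.cos (θf s) * (Real.exp (-(Wf μ s)) * -(wf μ s)) :=
        (hθ.cos.mul (hasDerivAt_Wf μ s).neg.exp).deriv
      beta_reduce
      rw [hd2, Real.rpow_neg_one]
      rcases le_or_gt s 2⁻¹ with hc | hc
      · rw [Qf_of_le hc, add_zero, Real.exp_zero]
        have pyth := Real.sin_sq_add_cos_sq (θf s)
        have hli : l⁻¹ * l = 1 := inv_mul_cancel₀ hl0
        unfold wf
        linear_combination
          (2 * A * A * (deriv θf s - (1 - μ) * Real.cos (θf s) * Real.sin (θf s)) *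
            Real.sin (θf s) * Real.exp (-(Wf μ s))) * hli +
          (2 * (deriv θf s - (1 - μ) * Real.cos (θf s) * Real.sin (θf s)) *
            Real.sin (θf s) * Real.exp (-(Wf μ s))) * hA2 -
          (Real.exp (-(Wf μ s)) * (1 - μ) * Real.cos (θf s)) * pyth
      · rw [deriv_θf_of_gt (by linarith : (3:ℝ)/8 < s),
          θf_of_ge (by linarith : (3:ℝ)/8 ≤ s), Real.cos_pi_div_two]
        unfold wf
        rw [θf_of_ge (by linarith : (3:ℝ)/8 ≤ s), Real.cos_pi_div_two]
        ring
    · -- equation 3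
      intro s _
      beta_reduce
      rw [deriv_const]
      rcases lt_or_ge s 2⁻¹ with hc | hc
      · rw [deriv_Qf_of_lt hc]; ring
      · rw [θf_of_ge (by linarith : (3:ℝ)/8 ≤ s), Real.cos_pi_div_two]; ring
    · -- h1 0 = 0
      beta_reduce
      rw [θf_of_le (by norm_num : (0:ℝ) ≤ 8⁻¹), Real.sin_zero]; ring
    · -- h2 0 = 1
      beta_reduce
      rw [θf_of_le (by norm_num : (0:ℝ) ≤ 8⁻¹), Real.cos_zero, Wf_zero]
      norm_num
    · rfl
    · -- h1 1 = ρ * 1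
      beta_reduce
      rw [θf_of_ge (by norm_num : (3:ℝ)/8 ≤ 1), Real.sin_pi_div_two,
        Qf_of_ge (by norm_num : (3:ℝ)/4 ≤ 1), hK]
      rw [show -(Wf μ 1) + (Wf μ 1 + Real.log (2 * (R + 1))) = Real.log (2 * (R + 1)) by ring]
      rw [Real.exp_log (by positivity)]
      ring
    · -- h2 1 = ρ * 0
      beta_reduce
      rw [θf_of_ge (by norm_num : (3:ℝ)/8 ≤ 1), Real.cos_pi_div_two]
      ring
end
end
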